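/- arXiv:2008.06736 — 10 statements merged into one kernel-verified Lean document; each statement's English description precedes it below -/
import Mathlib

section
/- Let {x_k}_{k≥0} and {x̂_k}_{k≥0} be sequences in ℝ^d with x_0 = x̂_0 = 0. Let {P_k}_{k≥0} be real numbers with 0 < P_k ≤ 1, and set p_0 = P_0 and p_k = P_k − P_{k−1} for k ≥ 1. Define the averaged sequence x̃_k = P_k^{−1} ∑_{i=0}^{k} p_i x_i. If the weighting scheme satisfies x̂_{k+1} − x̂_k = (1 − P_k)(x_{k+1} − x_k) for all k ≥ 0, then for every k ≥ 0 it holds that P_k (x_k − x̃_k) = x_k − x̂_k, and consequently x̂_k − x̃_k = (1 − P_k)(x_k − x̃_k). -/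
/-- Discrete iterate-averaging lemma (scalar weighting scheme), Lemma B.1 of the paper. -/
theorem iterate_averaging_discrete
    (d : ℕ) (x xhat : ℕ → EuclideanSpace ℝ (Fin d))
    (hx0 : x 0 = 0) (hxhat0 : xhat 0 = 0)
    (P p : ℕ → ℝ)
    (hPpos : ∀ k, 0 < P k) (hPle : ∀ k, P k ≤ 1)
    (hp0 : p 0 = P 0) (hps : ∀ k, p (k + 1) = P (k + 1) - P k)
    (xtil : ℕ → EuclideanSpace ℝ (Fin d))
    (hxtil : ∀ k, xtil k = (P k)⁻¹ • ∑ i ∈ Finset.range (k + 1), p i • x i)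
    (hscheme : ∀ k, xhat (k + 1) - xhat k = (1 - P k) • (x (k + 1) - x k)) :
    ∀ k, P k • (x k - xtil k) = x k - xhat k ∧
      xhat k - xtil k = (1 - P k) • (x k - xtil k) := by
  have key : ∀ k, P k • x k - (∑ i ∈ Finset.range (k + 1), p i • x i)
      = x k - xhat k := by
    intro k
    induction k with
    | zero => simp [hx0, hxhat0]
    | succ n ih =>
      rw [Finset.sum_range_succ]
      have hsch := hscheme n
      have : xhat (n + 1) = xhat n + (1 - P n) • (x (n + 1) - x n) := by
        rw [← hsch]; abel
      rw [this, hps n]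
      have := ih
      rw [sub_eq_iff_eq_add] at this
      calc P (n+1) • x (n+1) - ((∑ i ∈ Finset.range (n+1), p i • x i) + (P (n+1) - P n) • x (n+1))
          = P n • x (n+1) - ∑ i ∈ Finset.range (n+1), p i • x i := by
            rw [sub_smul]; abel
        _ = P n • x n - (∑ i ∈ Finset.range (n+1), p i • x i) + P n • (x (n+1) - x n) := by
            rw [smul_sub]; abel
        _ = x n - xhat n + P n • (x (n+1) - x n) := by rw [ih]
        _ = x (n+1) - (xhat n + (1 - P n) • (x (n+1) - x n)) := by
            module
  intro k
  have hPne : P k ≠ 0 := (hPpos k).ne'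
  have h1 : P k • (x k - xtil k) = x k - xhat k := by
    rw [hxtil k, smul_sub, smul_smul, mul_inv_cancel₀ hPne, one_smul, key k]
  refine ⟨h1, ?_⟩
  rw [sub_smul, one_smul, h1]
  abel
end

section
/- Let {x_k}_{k≥0} and {x̂_k}_{k≥0} be sequences in ℝ^d with x_0 = x̂_0 = 0. Let {P_k}_{k≥0} be symmetric matrices in ℝ^{d×d} with 0 ≺ P_k ⪯ I (P_k positive definite and I − P_k positive semi-definite), and set p_0 = P_0 and p_k = P_k − P_{k−1} for k ≥ 1. Define the averaged sequence x̃_k = P_k^{−1} ∑_{i=0}^{k} p_i x_i. If x̂_{k+1} − x̂_k = (I − P_k)(x_{k+1} − x_k) for all k ≥ 0, then for every k ≥ 0 it holds that P_k (x_k − x̃_k) = x_k − x̂_k. -/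
/-- Discrete iterate-averaging lemma with matrix-valued weighting scheme. -/
theorem iterate_averaging_discrete_matrix
    (d : ℕ) (x xhat : ℕ → EuclideanSpace ℝ (Fin d))
    (hx0 : x 0 = 0) (hxhat0 : xhat 0 = 0)
    (P p : ℕ → Matrix (Fin d) (Fin d) ℝ)
    (hPpos : ∀ k, (P k).PosDef) (hPle : ∀ k, (1 - P k).PosSemidef)
    (hp0 : p 0 = P 0) (hps : ∀ k, p (k + 1) = P (k + 1) - P k)
    (xtil : ℕ → EuclideanSpace ℝ (Fin d))
    (hxtil : ∀ k, xtil k = (P k)⁻¹.mulVec (∑ i ∈ Finset.range (k + 1), (p i).mulVec (x i)))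
    (hscheme : ∀ k, xhat (k + 1) - xhat k = (1 - P k).mulVec (x (k + 1) - x k)) :
    ∀ k, (P k).mulVec (x k - xtil k) = x k - xhat k := by
  set X : ℕ → Fin d → ℝ := fun k => x k with hX
  set Xhat : ℕ → Fin d → ℝ := fun k => xhat k with hXhat
  set Xtil : ℕ → Fin d → ℝ := fun k => xtil k with hXtil
  have hX0 : X 0 = 0 := by simp [hX, hx0]
  have hXhat0 : Xhat 0 = 0 := by simp [hXhat, hxhat0]
  have hXtilEq : ∀ k, Xtil k =
      (P k)⁻¹.mulVec (∑ i ∈ Finset.range (k + 1), (p i).mulVec (X i)) := hxtil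
  have hSch : ∀ k, Xhat (k + 1) - Xhat k = (1 - P k).mulVec (X (k + 1) - X k) := by
    intro k
    have := hscheme k
    calc Xhat (k + 1) - Xhat k = xhat (k + 1) - xhat k := rfl
      _ = (1 - P k).mulVec (x (k + 1) - x k) := this
      _ = (1 - P k).mulVec (X (k + 1) - X k) := rfl
  have key : ∀ k, X k - Xhat k =
      (P k).mulVec (X k) - ∑ i ∈ Finset.range (k + 1), (p i).mulVec (X i) := by
    intro k
    induction k with
    | zero =>
      simp [hX0, hXhat0, hp0]
    | succ k ih =>
      have hstep : X (k + 1) - Xhat (k + 1) =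
          (X k - Xhat k) + ((X (k + 1) - X k) - (Xhat (k + 1) - Xhat k)) := by abel
      rw [hstep, ih, hSch k,
        Finset.sum_range_succ (fun i => (p i).mulVec (X i)) (k + 1), hps k]
      simp only [Matrix.sub_mulVec, Matrix.mulVec_sub, Matrix.one_mulVec]
      abel
  intro k
  have hinv : P k * (P k)⁻¹ = 1 :=
    Matrix.mul_nonsing_inv _ (isUnit_iff_ne_zero.mpr (hPpos k).det_pos.ne')
  show (P k).mulVec (X k - Xtil k) = X k - Xhat k
  rw [key k, hXtilEq k, Matrix.mulVec_sub, Matrix.mulVec_mulVec, hinv, Matrix.one_mulVec]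
end

section
/- Consider the quadratic loss L(w) = ½ wᵀΣw − aᵀw with Σ ∈ ℝ^{d×d} symmetric positive definite and a ∈ ℝ^d, and the ℓ2-regularizer R(w) = ½‖w‖₂². Let λ > 0 and let {η_k}_{k≥0}, {γ_k}_{k≥0} be positive learning rates satisfying 1 − λγ_k = γ_k/η_k (equivalently γ_k = η_k/(1 + λη_k)) for all k. Let w_{k+1} = w_k − η_k(Σ w_k − a) with w_0 = 0, and ŵ_{k+1} = ŵ_k − γ_k((Σ + λI)ŵ_k − a) with ŵ_0 = 0. Define the weighting scheme P_k = 1 − ∏_{i=0}^{k}(γ_i/η_i) (so p_0 = P_0 and p_k = P_k − P_{k−1}) and the averaged iterate w̃_k = P_k^{−1} ∑_{i=0}^{k} p_i w_i. Then for every k ≥ 0, P_k · w̃_k = ŵ_k − (1 − P_k) · w_k. -/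
/-- Theorem 1, part 1 (expectation form): the averaged GD path on the quadratic loss
equals the ℓ2-regularized GD path, via the weighting scheme `P_k = 1 − ∏ (γ_i/η_i)`. -/
theorem averaged_gd_equals_regularized_gd_quadratic
    (d : ℕ) (S : Matrix (Fin d) (Fin d) ℝ) (hS : S.PosDef)
    (a : Fin d → ℝ) (lam : ℝ) (hlam : 0 < lam)
    (η γ : ℕ → ℝ) (hη : ∀ k, 0 < η k) (hγ : ∀ k, 0 < γ k)
    (hrate : ∀ k, 1 - lam * γ k = γ k / η k)
    (w what : ℕ → Fin d → ℝ)
    (hw0 : w 0 = 0) (hwhat0 : what 0 = 0)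
    (hw : ∀ k, w (k + 1) = w k - η k • (S.mulVec (w k) - a))
    (hwhat : ∀ k, what (k + 1)
      = what k - γ k • ((S + lam • (1 : Matrix (Fin d) (Fin d) ℝ)).mulVec (what k) - a))
    (P p : ℕ → ℝ)
    (hP : ∀ k, P k = 1 - ∏ i ∈ Finset.range (k + 1), (γ i / η i))
    (hp0 : p 0 = P 0) (hps : ∀ k, p (k + 1) = P (k + 1) - P k)
    (wtil : ℕ → Fin d → ℝ)
    (hwtil : ∀ k, wtil k = (P k)⁻¹ • ∑ i ∈ Finset.range (k + 1), p i • w i) :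
    ∀ k, P k • wtil k = what k - (1 - P k) • w k := by
  classical
  set Q : ℕ → ℝ := fun k => ∏ i ∈ Finset.range k, (γ i / η i) with hQdef
  have hrpos : ∀ k, 0 < γ k / η k := fun k => div_pos (hγ k) (hη k)
  have hrlt : ∀ k, γ k / η k < 1 := by
    intro k
    rw [← hrate k]
    nlinarith [hγ k, hlam]
  have hQ0 : Q 0 = 1 := by simp [hQdef]
  have hQs : ∀ k, Q (k + 1) = Q k * (γ k / η k) := by
    intro k; exact Finset.prod_range_succ _ k
  have hQpos : ∀ k, 0 < Q k := by
    intro k; induction k with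
    | zero => simp [hQ0]
    | succ n ih => rw [hQs]; exact mul_pos ih (hrpos n)
  have hQle : ∀ k, Q k ≤ 1 := by
    intro k; induction k with
    | zero => simp [hQ0]
    | succ n ih => rw [hQs]; nlinarith [hQpos n, hrpos n, hrlt n]
  have hQlt : ∀ k, Q (k + 1) < 1 := by
    intro k; rw [hQs]; nlinarith [hQpos k, hrpos k, hrlt k, hQle k]
  have hPQ : ∀ k, P k = 1 - Q (k + 1) := by
    intro k; rw [hP k]
  have hPpos : ∀ k, 0 < P k := by
    intro k; rw [hPQ k]; linarith [hQlt k]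
  have hγeq : ∀ k, γ k = η k * (γ k / η k) := by
    intro k; rw [mul_div_assoc', mul_div_cancel_left₀ _ (ne_of_gt (hη k))]
  have main : ∀ k,
      ((S + lam • (1 : Matrix (Fin d) (Fin d) ℝ)).mulVec (what k) - a
        = Q k • (S.mulVec (w k) - a)) ∧
      (what k = (∑ i ∈ Finset.range (k + 1), p i • w i) + Q (k + 1) • w k) := by
    intro k
    induction k with
    | zero =>
      constructor
      · simp [hwhat0, hw0, hQ0, Matrix.mulVec_zero]
      · simp [hwhat0, hw0]
    | succ n ih =>
      obtain ⟨ih1, ih2⟩ := ih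
      have hηne : η n ≠ 0 := ne_of_gt (hη n)
      have hwv : w (n + 1) = w n - η n • (S.mulVec (w n) - a) := hw n
      have hwhatv : what (n + 1)
          = what n - γ n • ((S + lam • (1 : Matrix (Fin d) (Fin d) ℝ)).mulVec (what n) - a) :=
        hwhat n
      have hmul : ∀ v : Fin d → ℝ,
          (S + lam • (1 : Matrix (Fin d) (Fin d) ℝ)).mulVec v = S.mulVec v + lam • v := by
        intro v
        rw [Matrix.add_mulVec, Matrix.smul_mulVec, Matrix.one_mulVec]
      constructor
      · have hexp : (S + lam • (1 : Matrix (Fin d) (Fin d) ℝ)).mulVec (what n)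
            = Q n • (S.mulVec (w n) - a) + a := by
          rw [← ih1]; abel
        have h1 : 1 - lam * γ n = γ n / η n := hrate n
        have h2 : γ n = η n * (γ n / η n) := hγeq n
        rw [hwhatv, ih1, hwv, smul_smul, Matrix.mulVec_sub, Matrix.mulVec_smul, hexp, hmul,
          hQs n]
        simp only [Matrix.mulVec_sub, Matrix.mulVec_smul, smul_sub, smul_add, sub_smul,
          mul_smul]
        match_scalars
        · linear_combination Q n * hrate n
        · linear_combination (-Q n) * hrate n
        · linear_combination (-Q n) * hγeq n
        · linear_combination Q n * hγeq n
      · rw [hwhatv, Finset.sum_range_succ]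
        have hsum : (∑ i ∈ Finset.range (n + 1), p i • w i)
            = what n - Q (n + 1) • w n := by
          rw [ih2]; abel
        rw [hsum, hps n, hPQ n, hPQ (n + 1), hwv,
          show what n - γ n • ((S + lam • (1 : Matrix (Fin d) (Fin d) ℝ)).mulVec (what n) - a)
            = what n - γ n • (Q n • (S.mulVec (w n) - a)) by rw [ih1]]
        rw [hQs n, hQs (n + 1), hQs n]
        match_scalars
        · ring
        · linear_combination (-Q n) * hγeq n
        · linear_combination Q n * hγeq n
        · ring
  intro k
  have hsum : (∑ i ∈ Finset.range (k + 1), p i • w i)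
      = what k - Q (k + 1) • w k := by
    rw [(main k).2]; abel
  rw [hwtil k, smul_smul, mul_inv_cancel₀ (ne_of_gt (hPpos k)), one_smul, hsum, hPQ k,
    sub_sub_cancel]
end

section
/- In the setting of the averaged gradient-descent scheme for the quadratic loss L(w) = ½wᵀΣw − aᵀw with symmetric Σ satisfying αI ⪯ Σ ⪯ βI for 0 < α ≤ β, assume additionally that the learning rates satisfy η ≤ η_k < 1/β for some η > 0, γ_k = η_k/(1+λη_k), and set γ = η/(1+λη). Then: (i) w_k converges to Σ^{−1}a and ŵ_k converges to (Σ + λI)^{−1}a as k → ∞; (ii) there exists a constant M > 0 such that for all k, ‖ŵ_k − w̃_k‖₂ ≤ M (1 − λγ)^k; in particular w̃_k also converges to (Σ + λI)^{−1}a. -/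
open RealInnerProductSpace
open scoped Matrix

private lemma sym_op_norm_bound {E : Type*} [NormedAddCommGroup E] [InnerProductSpace ℝ E]
    (T : E →ₗ[ℝ] E) (hT : ∀ x y : E, ⟪T x, y⟫ = ⟪x, T y⟫)
    (c : ℝ) (hc : 0 ≤ c) (h : ∀ x : E, |⟪x, T x⟫| ≤ c * ‖x‖ ^ 2) (x : E) :
    ‖T x‖ ≤ c * ‖x‖ := by
  rcases eq_or_ne (T x) 0 with h0 | h0
  · rw [h0, norm_zero]; positivity
  rcases eq_or_ne x 0 with rfl | hx0
  · simp at h0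
  have ht : (0:ℝ) < ‖T x‖ := norm_pos_iff.mpr h0
  have hx : (0:ℝ) < ‖x‖ := norm_pos_iff.mpr hx0
  set n : ℝ := ‖x‖ with hn
  set t : ℝ := ‖T x‖ with htdef
  set u : E := n • T x with hu
  set v : E := t • x with hv
  have e1 := (abs_le.mp (h (u + v))).2
  have e2 := (abs_le.mp (h (u - v))).1
  have hsymx : ⟪x, T (T x)⟫ = ⟪T x, T x⟫ := (hT x (T x)).symm
  have i1 : ⟪u + v, T (u + v)⟫
      = n * n * ⟪T x, T (T x)⟫ + 2 * (n * t) * ⟪T x, T x⟫ + t * t * ⟪x, T x⟫ := by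
    simp only [hu, hv, map_add, map_smul, inner_add_left, inner_add_right,
      real_inner_smul_left, real_inner_smul_right, hsymx]
    ring
  have i2 : ⟪u - v, T (u - v)⟫
      = n * n * ⟪T x, T (T x)⟫ - 2 * (n * t) * ⟪T x, T x⟫ + t * t * ⟪x, T x⟫ := by
    simp only [hu, hv, map_sub, map_smul, inner_sub_left, inner_sub_right,
      real_inner_smul_left, real_inner_smul_right, hsymx]
    ring
  have nu : ‖u‖ = n * t := by rw [hu, norm_smul, Real.norm_eq_abs, abs_of_pos hx]
  have nv : ‖v‖ = t * n := by rw [hv, norm_smul, Real.norm_eq_abs, abs_of_pos ht]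
  have n1 : ‖u + v‖ ^ 2 = ‖u‖^2 + 2*⟪u,v⟫ + ‖v‖^2 := norm_add_sq_real u v
  have n2 : ‖u - v‖ ^ 2 = ‖u‖^2 - 2*⟪u,v⟫ + ‖v‖^2 := norm_sub_sq_real u v
  have hTT : ⟪T x, T x⟫ = t ^ 2 := real_inner_self_eq_norm_sq (T x)
  rw [i1, n1, nu, nv, hTT] at e1
  rw [i2, n2, nu, nv, hTT] at e2
  have key : n * t * t ^ 2 ≤ c * (n ^ 2 * t ^ 2) := by nlinarith [e1, e2]
  nlinarith [key, mul_pos hx (mul_pos ht ht)]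

private lemma contract_step {E : Type*} [NormedAddCommGroup E] [InnerProductSpace ℝ E]
    (T : E →ₗ[ℝ] E) (hT : ∀ x y : E, ⟪T x, y⟫ = ⟪x, T y⟫)
    (a b t : ℝ) (hab : a ≤ b)
    (hl : ∀ x : E, a * ‖x‖ ^ 2 ≤ ⟪x, T x⟫) (hu : ∀ x : E, ⟪x, T x⟫ ≤ b * ‖x‖ ^ 2)
    (ht : 0 ≤ t) (htb : t * b ≤ 1) (x : E) :
    ‖x - t • T x‖ ≤ (1 - t * a) * ‖x‖ := by
  have hta : t * a ≤ 1 := le_trans (by nlinarith) htb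
  set T' : E →ₗ[ℝ] E := LinearMap.id - t • T with hT'def
  have hT' : ∀ y z : E, ⟪T' y, z⟫ = ⟪y, T' z⟫ := by
    intro y z
    rw [hT'def]
    simp only [LinearMap.sub_apply, LinearMap.id_apply, LinearMap.smul_apply,
      inner_sub_left, inner_sub_right, real_inner_smul_left, real_inner_smul_right, hT y z]
  have hbnd : ∀ y : E, |⟪y, T' y⟫| ≤ (1 - t * a) * ‖y‖ ^ 2 := by
    intro y
    have hq : ⟪y, T' y⟫ = ‖y‖ ^ 2 - t * ⟪y, T y⟫ := by
      rw [hT'def]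
      simp only [LinearMap.sub_apply, LinearMap.id_apply, LinearMap.smul_apply,
        inner_sub_right, real_inner_smul_right, real_inner_self_eq_norm_sq]
    rw [hq, abs_le]
    constructor
    · nlinarith [mul_le_mul_of_nonneg_left (hu y) ht, sq_nonneg ‖y‖]
    · nlinarith [mul_le_mul_of_nonneg_left (hl y) ht, sq_nonneg ‖y‖]
  have := sym_op_norm_bound T' hT' (1 - t * a) (by linarith) hbnd x
  simpa [hT'def, LinearMap.sub_apply, LinearMap.smul_apply] using this

private lemma geo_bound {E : Type*} [NormedAddCommGroup E] (v : ℕ → E) (q C : ℝ) (hq : 0 ≤ q)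
    (h0 : ‖v 0‖ ≤ C) (hstep : ∀ k, ‖v (k + 1)‖ ≤ q * ‖v k‖) : ∀ k, ‖v k‖ ≤ C * q ^ k := by
  intro k
  induction k with
  | zero => simpa using h0
  | succ k ih =>
    calc ‖v (k + 1)‖ ≤ q * ‖v k‖ := hstep k
    _ ≤ q * (C * q ^ k) := mul_le_mul_of_nonneg_left ih hq
    _ = C * q ^ (k + 1) := by ring

private lemma tendsto_of_geo {E : Type*} [NormedAddCommGroup E] (v : ℕ → E) (l : E) (q C : ℝ)
    (hq0 : 0 ≤ q) (hq1 : q < 1) (h : ∀ k, ‖v k - l‖ ≤ C * q ^ k) :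
    Filter.Tendsto v Filter.atTop (nhds l) := by
  rw [← tendsto_sub_nhds_zero_iff]
  apply squeeze_zero_norm h
  simpa using (tendsto_pow_atTop_nhds_zero_of_lt_one hq0 hq1).const_mul C

set_option maxHeartbeats 4000000 in
/-- Theorem 1, part 2 (expectation form): convergence of the plain, regularized and
averaged GD paths on a quadratic loss with `αI ⪯ Σ ⪯ βI`. -/
theorem averaged_gd_quadratic_convergence
    (d : ℕ) (S : Matrix (Fin d) (Fin d) ℝ)
    (α β : ℝ) (hα : 0 < α) (hαβ : α ≤ β)
    (hlower : (S - α • (1 : Matrix (Fin d) (Fin d) ℝ)).PosSemidef)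
    (hupper : ((β • (1 : Matrix (Fin d) (Fin d) ℝ)) - S).PosSemidef)
    (a : EuclideanSpace ℝ (Fin d)) (lam : ℝ) (hlam : 0 < lam)
    (η₀ : ℝ) (hη₀ : 0 < η₀)
    (η γ : ℕ → ℝ) (hηlb : ∀ k, η₀ ≤ η k) (hηub : ∀ k, η k < 1 / β)
    (hγk : ∀ k, γ k = η k / (1 + lam * η k))
    (γ₀ : ℝ) (hγ₀ : γ₀ = η₀ / (1 + lam * η₀))
    (w what : ℕ → EuclideanSpace ℝ (Fin d))
    (hw0 : w 0 = 0) (hwhat0 : what 0 = 0)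
    (hw : ∀ k, w (k + 1) = w k - η k • (Matrix.toEuclideanLin S (w k) - a))
    (hwhat : ∀ k, what (k + 1)
      = what k - γ k • (Matrix.toEuclideanLin
          (S + lam • (1 : Matrix (Fin d) (Fin d) ℝ)) (what k) - a))
    (P p : ℕ → ℝ)
    (hP : ∀ k, P k = 1 - ∏ i ∈ Finset.range (k + 1), (γ i / η i))
    (hp0 : p 0 = P 0) (hps : ∀ k, p (k + 1) = P (k + 1) - P k)
    (wtil : ℕ → EuclideanSpace ℝ (Fin d))
    (hwtil : ∀ k, wtil k = (P k)⁻¹ • ∑ i ∈ Finset.range (k + 1), p i • w i) :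
    Filter.Tendsto w Filter.atTop (nhds (Matrix.toEuclideanLin S⁻¹ a)) ∧
    Filter.Tendsto what Filter.atTop
      (nhds (Matrix.toEuclideanLin (S + lam • (1 : Matrix (Fin d) (Fin d) ℝ))⁻¹ a)) ∧
    (∃ M : ℝ, 0 < M ∧ ∀ k, ‖what k - wtil k‖ ≤ M * (1 - lam * γ₀) ^ k) ∧
    Filter.Tendsto wtil Filter.atTop
      (nhds (Matrix.toEuclideanLin (S + lam • (1 : Matrix (Fin d) (Fin d) ℝ))⁻¹ a)) := by
  classical
  have hβ : 0 < β := lt_of_lt_of_le hα hαβ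
  -- scalar facts
  have hηpos : ∀ k, 0 < η k := fun k => lt_of_lt_of_le hη₀ (hηlb k)
  have hηβ : ∀ k, η k * β < 1 := fun k => (lt_div_iff₀ hβ).mp (hηub k)
  have h1lam : ∀ k, 0 < 1 + lam * η k := fun k => by nlinarith [hηpos k]
  have h1lam0 : (0:ℝ) < 1 + lam * η₀ := by nlinarith
  have hγpos : ∀ k, 0 < γ k := fun k => by rw [hγk]; exact div_pos (hηpos k) (h1lam k)
  have hγ₀pos : 0 < γ₀ := by rw [hγ₀]; exact div_pos hη₀ h1lam0
  have hγlb : ∀ k, γ₀ ≤ γ k := by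
    intro k
    rw [hγ₀, hγk, div_le_div_iff₀ h1lam0 (h1lam k)]
    nlinarith [hηlb k, hηpos k]
  have hγβ : ∀ k, γ k * (β + lam) ≤ 1 := by
    intro k
    rw [hγk, div_mul_eq_mul_div, div_le_one (h1lam k)]
    nlinarith [hηβ k]
  have hγ₀β : γ₀ * (β + lam) ≤ 1 := by
    refine le_trans ?_ (hγβ 0)
    have hbl : (0:ℝ) < β + lam := by linarith
    nlinarith [hγlb 0]
  have hq1nonneg : (0:ℝ) ≤ 1 - η₀ * α := by
    nlinarith [hηβ 0, mul_le_mul_of_nonneg_right (hηlb 0) hα.le,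
      mul_le_mul_of_nonneg_left hαβ (hηpos 0).le]
  have hq1lt : 1 - η₀ * α < 1 := by nlinarith [mul_pos hη₀ hα]
  have hq2nonneg : (0:ℝ) ≤ 1 - γ₀ * (α + lam) := by
    nlinarith [hγ₀β, mul_le_mul_of_nonneg_left hαβ hγ₀pos.le]
  have hq2lt : 1 - γ₀ * (α + lam) < 1 := by
    nlinarith [mul_pos hγ₀pos hα, mul_pos hγ₀pos hlam]
  have hr0 : (0:ℝ) < 1 - lam * γ₀ := by nlinarith [hq2nonneg, mul_pos hγ₀pos hα]
  have hr1 : 1 - lam * γ₀ < 1 := by nlinarith [mul_pos hlam hγ₀pos]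
  set r : ℝ := 1 - lam * γ₀ with hrdef
  -- matrix setup
  set S' : Matrix (Fin d) (Fin d) ℝ := S + lam • (1 : Matrix (Fin d) (Fin d) ℝ) with hS'def
  have hone : Matrix.toEuclideanLin (1 : Matrix (Fin d) (Fin d) ℝ) = LinearMap.id := by
    rw [Matrix.toEuclideanLin_eq_toLin]
    exact Matrix.toLin_one _
  set L := Matrix.toEuclideanLin S with hLdef
  set L' := Matrix.toEuclideanLin S' with hL'def
  have hL'apply : ∀ x : EuclideanSpace ℝ (Fin d), L' x = L x + lam • x := by
    intro x
    rw [hL'def, hS'def]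
    simp only [map_add, map_smul, hone, LinearMap.add_apply, LinearMap.smul_apply,
      LinearMap.id_apply, ← hLdef]
  have hsmulherm : ∀ c : ℝ, (c • (1 : Matrix (Fin d) (Fin d) ℝ)).IsHermitian := by
    intro c
    show Matrix.conjTranspose (c • (1 : Matrix (Fin d) (Fin d) ℝ))
        = c • (1 : Matrix (Fin d) (Fin d) ℝ)
    simp
  have hSherm : S.IsHermitian := by
    have h := hlower.1.add (hsmulherm α)
    have e : S - α • (1 : Matrix (Fin d) (Fin d) ℝ) + α • (1 : Matrix (Fin d) (Fin d) ℝ) = S := by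
      abel
    rwa [e] at h
  have hS'herm : S'.IsHermitian := by rw [hS'def]; exact hSherm.add (hsmulherm lam)
  have hLsym : ∀ x y : EuclideanSpace ℝ (Fin d), ⟪L x, y⟫ = ⟪x, L y⟫ := by
    rw [hLdef]; exact Matrix.isHermitian_iff_isSymmetric.mp hSherm
  have hL'sym : ∀ x y : EuclideanSpace ℝ (Fin d), ⟪L' x, y⟫ = ⟪x, L' y⟫ := by
    rw [hL'def]; exact Matrix.isHermitian_iff_isSymmetric.mp hS'herm
  have hbridge : ∀ (A : Matrix (Fin d) (Fin d) ℝ) (x : EuclideanSpace ℝ (Fin d)),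
      ⟪x, Matrix.toEuclideanLin A x⟫
        = dotProduct (star ((WithLp.equiv 2 (Fin d → ℝ)) x))
            (A *ᵥ ((WithLp.equiv 2 (Fin d → ℝ)) x)) :=
    fun A x => (EuclideanSpace.inner_eq_star_dotProduct _ _).trans (dotProduct_comm _ _)
  have hLlow : ∀ x : EuclideanSpace ℝ (Fin d), α * ‖x‖ ^ 2 ≤ ⟪x, L x⟫ := by
    intro x
    have h := hlower.dotProduct_mulVec_nonneg ((WithLp.equiv 2 (Fin d → ℝ)) x)
    rw [← hbridge (S - α • 1) x] at h
    have hsub : Matrix.toEuclideanLin (S - α • (1 : Matrix (Fin d) (Fin d) ℝ)) x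
        = L x - α • x := by
      rw [map_sub, map_smul, hone]
      simp only [LinearMap.sub_apply, LinearMap.smul_apply, LinearMap.id_apply, ← hLdef]
    rw [hsub, inner_sub_right, real_inner_smul_right, real_inner_self_eq_norm_sq] at h
    linarith
  have hLup : ∀ x : EuclideanSpace ℝ (Fin d), ⟪x, L x⟫ ≤ β * ‖x‖ ^ 2 := by
    intro x
    have h := hupper.dotProduct_mulVec_nonneg ((WithLp.equiv 2 (Fin d → ℝ)) x)
    rw [← hbridge (β • 1 - S) x] at h
    have hsub : Matrix.toEuclideanLin (β • (1 : Matrix (Fin d) (Fin d) ℝ) - S) x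
        = β • x - L x := by
      rw [map_sub, map_smul, hone]
      simp only [LinearMap.sub_apply, LinearMap.smul_apply, LinearMap.id_apply, ← hLdef]
    rw [hsub, inner_sub_right, real_inner_smul_right, real_inner_self_eq_norm_sq] at h
    linarith
  have hL'low : ∀ x : EuclideanSpace ℝ (Fin d), (α + lam) * ‖x‖ ^ 2 ≤ ⟪x, L' x⟫ := by
    intro x
    rw [hL'apply x, inner_add_right, real_inner_smul_right, real_inner_self_eq_norm_sq]
    nlinarith [hLlow x]
  have hL'up : ∀ x : EuclideanSpace ℝ (Fin d), ⟪x, L' x⟫ ≤ (β + lam) * ‖x‖ ^ 2 := by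
    intro x
    rw [hL'apply x, inner_add_right, real_inner_smul_right, real_inner_self_eq_norm_sq]
    nlinarith [hLup x]
  -- positive definiteness and the fixed points
  have hsmulpd : ∀ c : ℝ, 0 < c → (c • (1 : Matrix (Fin d) (Fin d) ℝ)).PosDef := by
    intro c hc
    refine Matrix.PosDef.of_dotProduct_mulVec_pos (hsmulherm c) (fun x hx => ?_)
    have h1 : (c • (1 : Matrix (Fin d) (Fin d) ℝ)) *ᵥ x = c • x := by
      rw [Matrix.smul_mulVec, Matrix.one_mulVec]
    rw [h1, dotProduct_smul, smul_eq_mul]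
    exact mul_pos hc (Matrix.dotProduct_star_self_pos_iff.mpr hx)
  have hSpd : S.PosDef := by
    have h := Matrix.PosDef.posSemidef_add hlower (hsmulpd α hα)
    have e : S - α • (1 : Matrix (Fin d) (Fin d) ℝ) + α • (1 : Matrix (Fin d) (Fin d) ℝ) = S := by
      abel
    rwa [e] at h
  have hS'pd : S'.PosDef := by
    rw [hS'def]
    exact Matrix.PosDef.add_posSemidef hSpd (hsmulpd lam hlam).posSemidef
  have hSinv : S * S⁻¹ = 1 := Matrix.mul_nonsing_inv S hSpd.det_pos.ne'.isUnit
  have hS'inv : S' * S'⁻¹ = 1 := Matrix.mul_nonsing_inv S' hS'pd.det_pos.ne'.isUnit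
  set wstar : EuclideanSpace ℝ (Fin d) := Matrix.toEuclideanLin S⁻¹ a with hwstardef
  set whstar : EuclideanSpace ℝ (Fin d) := Matrix.toEuclideanLin S'⁻¹ a with hwhstardef
  have hLwstar : L wstar = a := by
    rw [hwstardef, hLdef, Matrix.toEuclideanLin_eq_toLin, ← Matrix.toLin_mul_apply, hSinv,
      Matrix.toLin_one, LinearMap.id_apply]
  have hL'whstar : L' whstar = a := by
    rw [hwhstardef, hL'def, Matrix.toEuclideanLin_eq_toLin, ← Matrix.toLin_mul_apply, hS'inv,
      Matrix.toLin_one, LinearMap.id_apply]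
  -- contraction bounds
  have hcontr1 : ∀ k (x : EuclideanSpace ℝ (Fin d)),
      ‖x - η k • L x‖ ≤ (1 - η₀ * α) * ‖x‖ := by
    intro k x
    have h := contract_step L hLsym α β (η k) hαβ hLlow hLup (hηpos k).le (hηβ k).le x
    refine le_trans h (mul_le_mul_of_nonneg_right ?_ (norm_nonneg x))
    nlinarith [mul_le_mul_of_nonneg_right (hηlb k) hα.le]
  have hcontr2 : ∀ k (x : EuclideanSpace ℝ (Fin d)),
      ‖x - γ k • L' x‖ ≤ (1 - γ₀ * (α + lam)) * ‖x‖ := by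
    intro k x
    have h := contract_step L' hL'sym (α + lam) (β + lam) (γ k) (by linarith) hL'low hL'up
      (hγpos k).le (hγβ k) x
    refine le_trans h (mul_le_mul_of_nonneg_right ?_ (norm_nonneg x))
    nlinarith [mul_le_mul_of_nonneg_right (hγlb k) (by linarith : (0:ℝ) ≤ α + lam)]
  have hwerr : ∀ k, w (k + 1) - wstar = (w k - wstar) - η k • L (w k - wstar) := by
    intro k
    have hLe : L (w k - wstar) = L (w k) - a := by rw [map_sub, hLwstar]
    rw [hw k, ← hLe]
    abel
  have hwhaterr : ∀ k, what (k + 1) - whstar = (what k - whstar) - γ k • L' (what k - whstar) := by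
    intro k
    have hLe : L' (what k - whstar) = L' (what k) - a := by rw [map_sub, hL'whstar]
    rw [hwhat k, ← hLe]
    abel
  have hw_bound : ∀ k, ‖w k - wstar‖ ≤ ‖wstar‖ * (1 - η₀ * α) ^ k := by
    have h0 : ‖w 0 - wstar‖ ≤ ‖wstar‖ := by rw [hw0]; simp
    exact geo_bound (fun k => w k - wstar) _ _ hq1nonneg h0 (fun k => by
      show ‖w (k + 1) - wstar‖ ≤ _
      rw [hwerr k]; exact hcontr1 k _)
  have hwhat_bound : ∀ k, ‖what k - whstar‖ ≤ ‖whstar‖ * (1 - γ₀ * (α + lam)) ^ k := by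
    have h0 : ‖what 0 - whstar‖ ≤ ‖whstar‖ := by rw [hwhat0]; simp
    exact geo_bound (fun k => what k - whstar) _ _ hq2nonneg h0 (fun k => by
      show ‖what (k + 1) - whstar‖ ≤ _
      rw [hwhaterr k]; exact hcontr2 k _)
  have htend1 : Filter.Tendsto w Filter.atTop (nhds wstar) :=
    tendsto_of_geo w wstar _ _ hq1nonneg hq1lt hw_bound
  have htend2 : Filter.Tendsto what Filter.atTop (nhds whstar) :=
    tendsto_of_geo what whstar _ _ hq2nonneg hq2lt hwhat_bound
  have hρ : ∀ i, γ i / η i = 1 / (1 + lam * η i) := by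
    intro i
    rw [hγk i, div_div, div_eq_div_iff (mul_pos (h1lam i) (hηpos i)).ne' (h1lam i).ne']
    ring
  -- the exact averaging identity
  have key : ∀ k, (what k = (∑ i ∈ Finset.range (k + 1), p i • w i)
        + (∏ i ∈ Finset.range (k + 1), (γ i / η i)) • w k)
      ∧ (L' (∑ i ∈ Finset.range (k + 1), p i • w i)
        + (lam * ∏ i ∈ Finset.range (k + 1), (γ i / η i)) • w (k + 1) = P k • a) := by
    intro k
    induction k with
    | zero =>
      constructor
      · simp [hwhat0, hw0, Finset.sum_range_one, Finset.prod_range_one]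
      · have hw1 : w 1 = η 0 • a := by rw [hw 0, hw0]; simp
        rw [Finset.sum_range_one, Finset.prod_range_one, hw0, smul_zero, map_zero, hw1,
          hP 0, Finset.prod_range_one, hγk 0, zero_add]
        match_scalars
        field_simp [(hηpos 0).ne', (h1lam 0).ne']
        ring
    | succ k ih =>
      obtain ⟨ihA, ihC⟩ := ih
      set Qk : ℝ := ∏ i ∈ Finset.range (k + 1), (γ i / η i) with hQkdef
      have hC' : L' (∑ i ∈ Finset.range (k + 1), p i • w i)
          = P k • a - (lam * Qk) • w (k + 1) :=
        eq_sub_of_add_eq ihC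
      have hp1 : p (k + 1) = Qk - Qk * (1 / (1 + lam * η (k + 1))) := by
        rw [hps k, hP (k + 1), hP k, Finset.prod_range_succ, ← hQkdef, hρ (k + 1)]; ring
      have hA' : what (k + 1) = (∑ i ∈ Finset.range (k + 1), p i • w i)
          + Qk • w (k + 1) := by
        rw [hwhat k, ihA]
        simp only [map_add, map_smul]
        rw [hL'apply (w k), hC', hw k, hP k, ← hQkdef, hγk k]
        match_scalars <;> (field_simp [(hηpos k).ne', (h1lam k).ne', (show 1 + η k * lam ≠ 0 by rw [mul_comm]; exact (h1lam k).ne')]; try ring)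
      constructor
      · rw [Finset.sum_range_succ, Finset.prod_range_succ, ← hQkdef, hρ (k + 1), hA', hp1]
        module
      · rw [Finset.sum_range_succ, Finset.prod_range_succ, ← hQkdef, hρ (k + 1)]
        simp only [map_add, map_smul]
        rw [hL'apply (w (k + 1)), hC', hw (k + 1), hp1, hP (k + 1),
          Finset.prod_range_succ, ← hQkdef, hρ (k + 1), hP k, ← hQkdef]
        match_scalars <;> (field_simp [(hηpos (k + 1)).ne', (h1lam (k + 1)).ne', (show 1 + η (k + 1) * lam ≠ 0 by rw [mul_comm]; exact (h1lam (k + 1)).ne')]; try ring)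
  -- bounds on the weights
  have hrval : r = 1 / (1 + lam * η₀) := by
    rw [hrdef, hγ₀]
    field_simp
    ring
  have hρle : ∀ i, γ i / η i ≤ r := by
    intro i
    rw [hρ i, hrval]
    apply one_div_le_one_div_of_le h1lam0
    nlinarith [hηlb i]
  have hρpos : ∀ i, 0 < γ i / η i := fun i => div_pos (hγpos i) (hηpos i)
  have hQpos : ∀ k, 0 < ∏ i ∈ Finset.range (k + 1), (γ i / η i) :=
    fun k => Finset.prod_pos (fun i _ => hρpos i)
  have hQle : ∀ k, (∏ i ∈ Finset.range (k + 1), (γ i / η i)) ≤ r ^ (k + 1) := by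
    intro k
    calc (∏ i ∈ Finset.range (k + 1), (γ i / η i)) ≤ ∏ _i ∈ Finset.range (k + 1), r :=
        Finset.prod_le_prod (fun i _ => (hρpos i).le) (fun i _ => hρle i)
    _ = r ^ (k + 1) := by rw [Finset.prod_const, Finset.card_range]
  have hrpow : ∀ k, r ^ (k + 1) ≤ r := by
    intro k
    calc r ^ (k + 1) ≤ r ^ 1 := pow_le_pow_of_le_one hr0.le hr1.le (by omega)
    _ = r := pow_one r
  have hlg : lam * γ₀ = 1 - r := by rw [hrdef]; ring
  have hPge : ∀ k, lam * γ₀ ≤ P k := by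
    intro k
    rw [hP k]
    linarith [hQle k, hrpow k, hlg]
  have hlgpos : 0 < lam * γ₀ := mul_pos hlam hγ₀pos
  have hPpos : ∀ k, 0 < P k := fun k => lt_of_lt_of_le hlgpos (hPge k)
  have hwnorm : ∀ k, ‖w k‖ ≤ 2 * ‖wstar‖ := by
    intro k
    have h1 := hw_bound k
    have h2 : (1 - η₀ * α) ^ k ≤ 1 := pow_le_one₀ hq1nonneg (by linarith)
    have h3 : ‖w k‖ ≤ ‖w k - wstar‖ + ‖wstar‖ := by
      have := norm_add_le (w k - wstar) wstar
      simpa using this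
    nlinarith [h1, h3, mul_le_mul_of_nonneg_left h2 (norm_nonneg wstar)]
  have hwhatnorm : ∀ k, ‖what k‖ ≤ 2 * ‖whstar‖ := by
    intro k
    have h1 := hwhat_bound k
    have h2 : (1 - γ₀ * (α + lam)) ^ k ≤ 1 := pow_le_one₀ hq2nonneg (by linarith)
    have h3 : ‖what k‖ ≤ ‖what k - whstar‖ + ‖whstar‖ := by
      have := norm_add_le (what k - whstar) whstar
      simpa using this
    nlinarith [h1, h3, mul_le_mul_of_nonneg_left h2 (norm_nonneg whstar)]
  set B : ℝ := 2 * ‖whstar‖ + 2 * ‖wstar‖ with hBdef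
  set M : ℝ := (B + 1) / (lam * γ₀) with hMdef
  have hB0 : 0 ≤ B := by rw [hBdef]; positivity
  have hM0 : 0 < M := by rw [hMdef]; exact div_pos (by linarith) hlgpos
  have hMbd : ∀ k, ‖what k - wtil k‖ ≤ M * r ^ k := by
    intro k
    have hu : (∑ i ∈ Finset.range (k + 1), p i • w i)
        = what k - (∏ i ∈ Finset.range (k + 1), (γ i / η i)) • w k := by
      rw [(key k).1]; abel
    have hdiff : what k - wtil k = (1 - (P k)⁻¹) • what k
        + ((P k)⁻¹ * ∏ i ∈ Finset.range (k + 1), (γ i / η i)) • w k := by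
      rw [hwtil k, hu]
      module
    have hPk1 : 1 - P k = ∏ i ∈ Finset.range (k + 1), (γ i / η i) := by rw [hP k]; ring
    have habs1 : |1 - (P k)⁻¹| = (∏ i ∈ Finset.range (k + 1), (γ i / η i)) / P k := by
      have h4 : 1 - (P k)⁻¹ = -((∏ i ∈ Finset.range (k + 1), (γ i / η i)) / P k) := by
        rw [← hPk1]
        field_simp [(hPpos k).ne']
        try ring
      rw [h4, abs_neg, abs_of_nonneg (div_nonneg (hQpos k).le (hPpos k).le)]
    have habs2 : |(P k)⁻¹ * ∏ i ∈ Finset.range (k + 1), (γ i / η i)|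
        = (∏ i ∈ Finset.range (k + 1), (γ i / η i)) / P k := by
      rw [abs_of_nonneg (mul_nonneg (inv_nonneg.mpr (hPpos k).le) (hQpos k).le),
        inv_mul_eq_div]
    have hQP : 0 ≤ (∏ i ∈ Finset.range (k + 1), (γ i / η i)) / P k :=
      div_nonneg (hQpos k).le (hPpos k).le
    calc ‖what k - wtil k‖
        ≤ |1 - (P k)⁻¹| * ‖what k‖
          + |(P k)⁻¹ * ∏ i ∈ Finset.range (k + 1), (γ i / η i)| * ‖w k‖ := by
          rw [hdiff]
          refine le_trans (norm_add_le _ _) ?_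
          rw [norm_smul, norm_smul, Real.norm_eq_abs, Real.norm_eq_abs]
      _ = ((∏ i ∈ Finset.range (k + 1), (γ i / η i)) / P k) * ‖what k‖
          + ((∏ i ∈ Finset.range (k + 1), (γ i / η i)) / P k) * ‖w k‖ := by
          rw [habs1, habs2]
      _ ≤ ((∏ i ∈ Finset.range (k + 1), (γ i / η i)) / P k) * (2 * ‖whstar‖)
          + ((∏ i ∈ Finset.range (k + 1), (γ i / η i)) / P k) * (2 * ‖wstar‖) :=
          add_le_add (mul_le_mul_of_nonneg_left (hwhatnorm k) hQP)
            (mul_le_mul_of_nonneg_left (hwnorm k) hQP)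
      _ = ((∏ i ∈ Finset.range (k + 1), (γ i / η i)) / P k) * B := by rw [hBdef]; ring
      _ ≤ (r ^ (k + 1) / (lam * γ₀)) * B := by
          refine mul_le_mul_of_nonneg_right ?_ hB0
          exact div_le_div₀ (pow_nonneg hr0.le _) (hQle k) hlgpos (hPge k)
      _ = (r * B / (lam * γ₀)) * r ^ k := by ring
      _ ≤ M * r ^ k := by
          refine mul_le_mul_of_nonneg_right ?_ (pow_nonneg hr0.le k)
          rw [hMdef]
          refine div_le_div₀ (by linarith) ?_ hlgpos le_rfl
          nlinarith [hr1, hB0, hr0]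
  have htendd : Filter.Tendsto (fun k => what k - wtil k) Filter.atTop (nhds 0) := by
    apply squeeze_zero_norm hMbd
    simpa using (tendsto_pow_atTop_nhds_zero_of_lt_one hr0.le hr1).const_mul M
  have htend3 : Filter.Tendsto wtil Filter.atTop (nhds whstar) := by
    have h := htend2.sub htendd
    simpa using h
  exact ⟨htend1, htend2, ⟨M, hM0, hMbd⟩, htend3⟩
end

section
/- Let Σ ∈ ℝ^{d×d} be symmetric with αI ⪯ Σ ⪯ βI, 0 < α ≤ β, let λ > 0, and let γ ≤ γ_h ≤ 1/(λ+β) for all h, with γ > 0. For 0 ≤ j < k define A_j = γ_j (∏_{h=0}^{j−1}(1 − λγ_h)) (∑_{i=j+1}^{k} λγ_i ∏_{h=j+1}^{i−1}(I − γ_h(Σ + λI))). Then the operator norm satisfies ‖A_j‖₂² ≤ (λ²/(γ²(λ+α)²(λ+β)⁴)) (1 − λγ)^{2j}, and consequently ∑_{j=0}^{k−1} ‖A_j‖₂² ≤ λ/(γ³(2 − λγ)(λ+α)²(λ+β)⁴). -/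
open scoped Matrix.Norms.L2Operator

namespace NoiseAux

lemma psd_smul {d : ℕ} {X : Matrix (Fin d) (Fin d) ℝ} (h : X.PosSemidef) {c : ℝ} (hc : 0 ≤ c) :
    (c • X).PosSemidef := by
  refine Matrix.PosSemidef.of_dotProduct_mulVec_nonneg ?_ (fun x => ?_)
  · have h1 := h.1
    unfold Matrix.IsHermitian at *
    rw [Matrix.conjTranspose_smul, h1]
    simp
  · rw [Matrix.smul_mulVec, dotProduct_smul]
    exact mul_nonneg hc (by simpa using h.dotProduct_mulVec_nonneg x)

open scoped MatrixOrder in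
lemma norm_le_of_psd {d : ℕ} {M : Matrix (Fin d) (Fin d) ℝ} {c : ℝ} (hc : 0 ≤ c)
    (h1 : M.PosSemidef) (h2 : (c • (1 : Matrix (Fin d) (Fin d) ℝ) - M).PosSemidef) : ‖M‖ ≤ c := by
  classical
  set B := CFC.sqrt M with hBdef
  have hB : B.PosSemidef := Matrix.nonneg_iff_posSemidef.mp (CFC.sqrt_nonneg M)
  have hBB : B * B = M := CFC.sqrt_mul_sqrt_self M h1.nonneg
  have hBH : B.conjTranspose = B := hB.1
  have hBMB : B * M * B = M * M := by
    conv_lhs => rw [← hBB]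
    rw [← mul_assoc, mul_assoc (B*B) B B, hBB]
  have key : ((c^2) • (1 : Matrix (Fin d) (Fin d) ℝ) - M * M).PosSemidef := by
    have e : (c^2) • (1 : Matrix (Fin d) (Fin d) ℝ) - M * M
        = B * (c • 1 - M) * B.conjTranspose + c • (c • (1 : Matrix (Fin d) (Fin d) ℝ) - M) := by
      rw [hBH, Matrix.mul_sub, Matrix.sub_mul, Matrix.mul_smul, Matrix.mul_one, Matrix.smul_mul,
        hBB, hBMB, smul_sub, smul_smul]
      module
    rw [e]
    exact (h2.mul_mul_conjTranspose_same B).add (psd_smul h2 hc)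
  rw [Matrix.cstar_norm_def]
  refine ContinuousLinearMap.opNorm_le_bound _ hc fun x => ?_
  set y : Fin d → ℝ := (WithLp.equiv 2 (Fin d → ℝ)) x with hy
  have hx : x = (WithLp.equiv 2 (Fin d → ℝ)).symm y := by simp [hy]
  rw [hx, WithLp.equiv_symm_apply, Matrix.toEuclideanCLM_toLp]
  have hkey := key.dotProduct_mulVec_nonneg y
  simp only [star_trivial, Matrix.sub_mulVec, Matrix.smul_mulVec, Matrix.one_mulVec,
    dotProduct_sub, dotProduct_smul, smul_eq_mul] at hkey
  have hMT : M.transpose = M := by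
    have := h1.1
    simpa [Matrix.conjTranspose, Matrix.IsSymm] using this
  have hdot : dotProduct y ((M * M).mulVec y)
      = dotProduct (M.mulVec y) (M.mulVec y) := by
    rw [← Matrix.mulVec_mulVec, Matrix.dotProduct_mulVec, ← Matrix.mulVec_transpose, hMT]
  rw [hdot] at hkey
  have hnorm : ∀ v : Fin d → ℝ, ‖WithLp.toLp 2 v‖
      = Real.sqrt (dotProduct v v) := by
    intro v
    rw [EuclideanSpace.norm_eq]
    congr 1
    simp [dotProduct, Real.norm_eq_abs, sq_abs, pow_two]
  rw [hnorm, hnorm]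
  rw [show c * Real.sqrt (dotProduct y y) = Real.sqrt (c^2 * dotProduct y y) by
    rw [Real.sqrt_mul (by positivity), Real.sqrt_sq hc]]
  exact Real.sqrt_le_sqrt (by linarith)

lemma norm_one_le (d : ℕ) : ‖(1 : Matrix (Fin d) (Fin d) ℝ)‖ ≤ 1 := by
  rw [Matrix.cstar_norm_def, map_one]
  exact ContinuousLinearMap.norm_id_le

lemma prod_norm_le {d : ℕ} (f : ℕ → Matrix (Fin d) (Fin d) ℝ) {r : ℝ} (hr : 0 ≤ r)
    (hf : ∀ h, ‖f h‖ ≤ r) : ∀ (n s : ℕ), ‖((List.range' s n).map f).prod‖ ≤ r ^ n := by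
  intro n
  induction n with
  | zero => intro s; simpa using norm_one_le d
  | succ m ih =>
    intro s
    rw [List.range'_succ, List.map_cons, List.prod_cons, pow_succ']
    exact le_trans (Matrix.l2_opNorm_mul _ _)
      (mul_le_mul (hf s) (ih (s+1)) (norm_nonneg _) hr)

lemma geom_bound {r : ℝ} (h0 : 0 ≤ r) (h1 : r < 1) (n : ℕ) :
    ∑ m ∈ Finset.range n, r ^ m ≤ 1 / (1 - r) := by
  have h2 : (0:ℝ) < 1 - r := by linarith
  rw [le_div_iff₀ h2]
  have := geom_sum_mul r n
  have hrn : 0 ≤ r ^ n := pow_nonneg h0 n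
  nlinarith [this]

end NoiseAux

/-- The operator-norm bound on the noise coefficient matrices `A_j` in the proof of
Theorem 1, and the resulting bound on the sum of their squared norms.  Here `‖·‖` is the
spectral (ℓ2 operator) norm of a matrix. -/
theorem noise_coefficient_norm_bound
    (d : ℕ) (S : Matrix (Fin d) (Fin d) ℝ)
    (α β : ℝ) (hα : 0 < α) (hαβ : α ≤ β)
    (hlower : (S - α • (1 : Matrix (Fin d) (Fin d) ℝ)).PosSemidef)
    (hupper : ((β • (1 : Matrix (Fin d) (Fin d) ℝ)) - S).PosSemidef)
    (lam : ℝ) (hlam : 0 < lam)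
    (γ₀ : ℝ) (hγ₀ : 0 < γ₀)
    (γ : ℕ → ℝ) (hγlb : ∀ h, γ₀ ≤ γ h) (hγub : ∀ h, γ h ≤ 1 / (lam + β))
    (k : ℕ) (A : ℕ → Matrix (Fin d) (Fin d) ℝ)
    (hA : ∀ j, A j
      = (γ j * ∏ h ∈ Finset.range j, (1 - lam * γ h)) •
          ∑ i ∈ Finset.Icc (j + 1) k, (lam * γ i) •
            (((List.range' (j + 1) (i - j - 1)).map
              (fun h => (1 : Matrix (Fin d) (Fin d) ℝ)
                - γ h • (S + lam • (1 : Matrix (Fin d) (Fin d) ℝ)))).prod)) :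
    (∀ j, j < k →
      ‖A j‖ ^ 2 ≤ (lam ^ 2 / (γ₀ ^ 2 * (lam + α) ^ 2 * (lam + β) ^ 4))
        * (1 - lam * γ₀) ^ (2 * j)) ∧
    ∑ j ∈ Finset.range k, ‖A j‖ ^ 2
      ≤ lam / (γ₀ ^ 3 * (2 - lam * γ₀) * (lam + α) ^ 2 * (lam + β) ^ 4) := by
  have hβ : 0 < β := lt_of_lt_of_le hα hαβ
  have hlb : 0 < lam + β := by linarith
  have hla : 0 < lam + α := by linarith
  have hγ0ub : γ₀ ≤ 1 / (lam + β) := (hγlb 0).trans (hγub 0)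
  set q : ℝ := 1 - lam * γ₀ with hqdef
  set r : ℝ := 1 - γ₀ * (lam + α) with hrdef
  set G : ℝ := 1 / (lam + β) with hGdef
  set C : ℝ := lam / (γ₀ * (lam + α) * (lam + β) ^ 2) with hCdef
  have hGpos : 0 < G := by positivity
  have hγpos : ∀ h, 0 < γ h := fun h => lt_of_lt_of_le hγ₀ (hγlb h)
  have hγa1 : ∀ h, γ h * (lam + α) ≤ 1 := by
    intro h
    have h1 : γ h * (lam + α) ≤ G * (lam + α) :=
      mul_le_mul_of_nonneg_right (hγub h) (le_of_lt hla)
    have h2 : G * (lam + α) ≤ 1 := by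
      rw [hGdef, div_mul_eq_mul_div, one_mul, div_le_one hlb]; linarith
    linarith
  have hγb1 : ∀ h, lam * γ h ≤ 1 := by
    intro h
    have h1 : lam * γ h ≤ lam * G := mul_le_mul_of_nonneg_left (hγub h) (le_of_lt hlam)
    have h2 : lam * G ≤ 1 := by
      rw [hGdef, mul_one_div, div_le_one hlb]; linarith
    linarith
  have hr0 : 0 ≤ r := by
    have := hγa1 0
    have h1 : γ₀ * (lam + α) ≤ γ 0 * (lam + α) :=
      mul_le_mul_of_nonneg_right (hγlb 0) (le_of_lt hla)
    rw [hrdef]; linarith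
  have hr1 : r < 1 := by
    have : 0 < γ₀ * (lam + α) := by positivity
    rw [hrdef]; linarith
  have hq0 : 0 ≤ q := by
    have h1 : lam * γ₀ ≤ lam * γ 0 := mul_le_mul_of_nonneg_left (hγlb 0) (le_of_lt hlam)
    have := hγb1 0
    rw [hqdef]; linarith
  have hq1 : q < 1 := by
    have : 0 < lam * γ₀ := by positivity
    rw [hqdef]; linarith
  -- norm bound on each factor
  have hfac : ∀ h : ℕ, ‖(1 : Matrix (Fin d) (Fin d) ℝ)
      - γ h • (S + lam • (1 : Matrix (Fin d) (Fin d) ℝ))‖ ≤ r := by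
    intro h
    have hc : (0:ℝ) ≤ 1 - γ h * (lam + α) := by linarith [hγa1 h]
    have hgb : γ h * (lam + β) ≤ 1 := by
      have h1 : γ h * (lam + β) ≤ G * (lam + β) :=
        mul_le_mul_of_nonneg_right (hγub h) (le_of_lt hlb)
      have h2 : G * (lam + β) = 1 := by
        rw [hGdef]; field_simp
      linarith
    have hM : ((1 : Matrix (Fin d) (Fin d) ℝ)
        - γ h • (S + lam • (1 : Matrix (Fin d) (Fin d) ℝ))).PosSemidef := by
      have e : (1 : Matrix (Fin d) (Fin d) ℝ) - γ h • (S + lam • (1 : Matrix (Fin d) (Fin d) ℝ))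
          = (1 - γ h * (lam + β)) • (1 : Matrix (Fin d) (Fin d) ℝ)
            + γ h • ((β • (1 : Matrix (Fin d) (Fin d) ℝ)) - S) := by
        module
      rw [e]
      exact (NoiseAux.psd_smul Matrix.PosSemidef.one (by linarith)).add
        (NoiseAux.psd_smul hupper (le_of_lt (hγpos h)))
    have hM2 : ((1 - γ h * (lam + α)) • (1 : Matrix (Fin d) (Fin d) ℝ)
        - ((1 : Matrix (Fin d) (Fin d) ℝ)
            - γ h • (S + lam • (1 : Matrix (Fin d) (Fin d) ℝ)))).PosSemidef := by
      have e : (1 - γ h * (lam + α)) • (1 : Matrix (Fin d) (Fin d) ℝ)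
          - ((1 : Matrix (Fin d) (Fin d) ℝ)
            - γ h • (S + lam • (1 : Matrix (Fin d) (Fin d) ℝ)))
          = γ h • (S - α • (1 : Matrix (Fin d) (Fin d) ℝ)) := by
        module
      rw [e]
      exact NoiseAux.psd_smul hlower (le_of_lt (hγpos h))
    have := NoiseAux.norm_le_of_psd hc hM hM2
    have hle : 1 - γ h * (lam + α) ≤ r := by
      have h1 : γ₀ * (lam + α) ≤ γ h * (lam + α) :=
        mul_le_mul_of_nonneg_right (hγlb h) (le_of_lt hla)
      rw [hrdef]; linarith
    linarith
  -- main per-j bound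
  have hAle : ∀ j, ‖A j‖ ≤ C * q ^ j := by
    intro j
    rw [hA j, norm_smul, Real.norm_eq_abs]
    have hP0 : 0 ≤ ∏ h ∈ Finset.range j, (1 - lam * γ h) :=
      Finset.prod_nonneg fun h _ => by linarith [hγb1 h]
    have hPle : ∏ h ∈ Finset.range j, (1 - lam * γ h) ≤ q ^ j := by
      calc ∏ h ∈ Finset.range j, (1 - lam * γ h)
          ≤ ∏ _h ∈ Finset.range j, q := by
            refine Finset.prod_le_prod (fun h _ => by linarith [hγb1 h]) (fun h _ => ?_)
            have := mul_le_mul_of_nonneg_left (hγlb h) (le_of_lt hlam)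
            rw [hqdef]; linarith
        _ = q ^ j := by rw [Finset.prod_const, Finset.card_range]
    have habs : |γ j * ∏ h ∈ Finset.range j, (1 - lam * γ h)|
        = γ j * ∏ h ∈ Finset.range j, (1 - lam * γ h) :=
      abs_of_nonneg (mul_nonneg (le_of_lt (hγpos j)) hP0)
    have hMsum : ‖∑ i ∈ Finset.Icc (j + 1) k, (lam * γ i) •
        (((List.range' (j + 1) (i - j - 1)).map
          (fun h => (1 : Matrix (Fin d) (Fin d) ℝ)
            - γ h • (S + lam • (1 : Matrix (Fin d) (Fin d) ℝ)))).prod)‖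
        ≤ lam * G * (1 / (1 - r)) := by
      calc ‖∑ i ∈ Finset.Icc (j + 1) k, (lam * γ i) •
          (((List.range' (j + 1) (i - j - 1)).map
            (fun h => (1 : Matrix (Fin d) (Fin d) ℝ)
              - γ h • (S + lam • (1 : Matrix (Fin d) (Fin d) ℝ)))).prod)‖
          ≤ ∑ i ∈ Finset.Icc (j + 1) k, (lam * G) * r ^ (i - j - 1) := by
            refine le_trans (norm_sum_le _ _) (Finset.sum_le_sum fun i _ => ?_)
            rw [norm_smul, Real.norm_eq_abs,
              abs_of_nonneg (mul_nonneg (le_of_lt hlam) (le_of_lt (hγpos i)))]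
            exact mul_le_mul (mul_le_mul_of_nonneg_left (hγub i) (le_of_lt hlam))
              (NoiseAux.prod_norm_le _ hr0 hfac _ _) (norm_nonneg _)
              (by positivity)
        _ = (lam * G) * ∑ i ∈ Finset.Icc (j + 1) k, r ^ (i - j - 1) := by
            rw [Finset.mul_sum]
        _ ≤ lam * G * (1 / (1 - r)) := by
            refine mul_le_mul_of_nonneg_left ?_ (by positivity)
            rw [← Finset.Ico_add_one_right_eq_Icc, Finset.sum_Ico_eq_sum_range]
            calc ∑ i ∈ Finset.range (k + 1 - (j + 1)), r ^ (j + 1 + i - j - 1)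
                = ∑ i ∈ Finset.range (k + 1 - (j + 1)), r ^ i :=
                  Finset.sum_congr rfl fun i _ => by
                    rw [show j + 1 + i - j - 1 = i from by omega]
              _ ≤ 1 / (1 - r) := NoiseAux.geom_bound hr0 hr1 _
    calc |γ j * ∏ h ∈ Finset.range j, (1 - lam * γ h)| * ‖∑ i ∈ Finset.Icc (j + 1) k,
          (lam * γ i) • (((List.range' (j + 1) (i - j - 1)).map
            (fun h => (1 : Matrix (Fin d) (Fin d) ℝ)
              - γ h • (S + lam • (1 : Matrix (Fin d) (Fin d) ℝ)))).prod)‖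
        ≤ (G * q ^ j) * (lam * G * (1 / (1 - r))) := by
          rw [habs]
          refine mul_le_mul ?_ hMsum (norm_nonneg _) (by positivity)
          exact mul_le_mul (hγub j) hPle hP0 (le_of_lt hGpos)
      _ = C * q ^ j := by
          have h1r : 1 - r = γ₀ * (lam + α) := by rw [hrdef]; ring
          rw [h1r, hGdef, hCdef]
          field_simp
  have hsq : ∀ j, ‖A j‖ ^ 2 ≤ C ^ 2 * (q ^ 2) ^ j := by
    intro j
    calc ‖A j‖ ^ 2 ≤ (C * q ^ j) ^ 2 := pow_le_pow_left₀ (norm_nonneg _) (hAle j) 2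
      _ = C ^ 2 * (q ^ 2) ^ j := by rw [mul_pow, ← pow_mul, ← pow_mul, Nat.mul_comm]
  have hC2 : C ^ 2 = lam ^ 2 / (γ₀ ^ 2 * (lam + α) ^ 2 * (lam + β) ^ 4) := by
    rw [hCdef]
    rw [div_pow]
    congr 1
    ring
  constructor
  · intro j _
    calc ‖A j‖ ^ 2 ≤ C ^ 2 * (q ^ 2) ^ j := hsq j
      _ = lam ^ 2 / (γ₀ ^ 2 * (lam + α) ^ 2 * (lam + β) ^ 4) * q ^ (2 * j) := by
          rw [hC2, ← pow_mul]
  · have hq20 : 0 ≤ q ^ 2 := sq_nonneg q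
    have hq21 : q ^ 2 < 1 := by nlinarith
    calc ∑ j ∈ Finset.range k, ‖A j‖ ^ 2
        ≤ ∑ j ∈ Finset.range k, C ^ 2 * (q ^ 2) ^ j := Finset.sum_le_sum fun j _ => hsq j
      _ = C ^ 2 * ∑ j ∈ Finset.range k, (q ^ 2) ^ j := by rw [Finset.mul_sum]
      _ ≤ C ^ 2 * (1 / (1 - q ^ 2)) :=
          mul_le_mul_of_nonneg_left (NoiseAux.geom_bound hq20 hq21 k) (sq_nonneg C)
      _ = lam / (γ₀ ^ 3 * (2 - lam * γ₀) * (lam + α) ^ 2 * (lam + β) ^ 4) := by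
          have h1q : 1 - q ^ 2 = lam * γ₀ * (2 - lam * γ₀) := by rw [hqdef]; ring
          have h2q : (0:ℝ) < 2 - lam * γ₀ := by
            have : 0 < lam * γ₀ := by positivity
            nlinarith [hq0]
          rw [h1q, hCdef]
          field_simp
end

section
/- Let K ∈ ℝ^{n×n} be symmetric positive definite, y ∈ ℝ^n, and 0 ≤ λ < λ̂. Let {η_k}_{k≥0} be positive learning rates and define the matrix learning rates γ_k = η_k (I + (λ̂ − λ)η_k K)^{−1}. Let α_{k+1} = α_k − η_k (K²α_k − Ky + λKα_k) with α_0 = 0, and α̂_{k+1} = α̂_k − γ_k (K²α̂_k − Ky + λ̂Kα̂_k) with α̂_0 = 0. Define the matrix weighting scheme P_k = I − ∏_{i=0}^{k}(γ_i η_i^{−1}) = I − ∏_{i=0}^{k}(I + (λ̂−λ)η_i K)^{−1}, p_0 = P_0, p_k = P_k − P_{k−1}, and the averaged iterate α̃_k = P_k^{−1} ∑_{i=0}^{k} p_i α_i. Then for every k ≥ 0, P_k α̃_k = α̂_k − (I − P_k) α_k. -/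
open Matrix Polynomial

namespace KernelAveragedGD

variable {n : ℕ}

noncomputable def Fm (K : Matrix (Fin n) (Fin n) ℝ) (d : ℕ → ℝ) (i : ℕ) :
    Matrix (Fin n) (Fin n) ℝ := 1 + d i • K

noncomputable def Bm (K : Matrix (Fin n) (Fin n) ℝ) (d : ℕ → ℝ) (i : ℕ) :
    Matrix (Fin n) (Fin n) ℝ := (Fm K d i)⁻¹

noncomputable def Rm (K : Matrix (Fin n) (Fin n) ℝ) (d : ℕ → ℝ) (k : ℕ) :
    Matrix (Fin n) (Fin n) ℝ := ((List.range k).map (Bm K d)).prod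

noncomputable def Tm (K : Matrix (Fin n) (Fin n) ℝ) (d : ℕ → ℝ) (k : ℕ) :
    Matrix (Fin n) (Fin n) ℝ := ((List.range k).map (Fm K d)).prod

variable {K : Matrix (Fin n) (Fin n) ℝ} {d : ℕ → ℝ}

lemma psd_smul {M : Matrix (Fin n) (Fin n) ℝ} (hM : M.PosSemidef)
    {a : ℝ} (ha : 0 ≤ a) : (a • M).PosSemidef := by
  refine ⟨?_, fun x => ?_⟩
  · unfold Matrix.IsHermitian
    rw [conjTranspose_smul, hM.1]; simp
  · exact (hM.smul ha).2 x

lemma pd_smul {M : Matrix (Fin n) (Fin n) ℝ} (hM : M.PosDef)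
    {a : ℝ} (ha : 0 < a) : (a • M).PosDef := by
  refine ⟨?_, fun x hx => ?_⟩
  · unfold Matrix.IsHermitian
    rw [conjTranspose_smul, hM.1]; simp
  · exact (hM.smul ha).2 hx

lemma psd_aeval (hK : K.PosSemidef)
    (q : ℝ[X]) (hq : ∀ i, 0 ≤ q.coeff i) : (Polynomial.aeval K q).PosSemidef := by
  rw [Polynomial.aeval_eq_sum_range]
  refine Finset.sum_induction _ _ (fun a b ha hb => ha.add hb) Matrix.PosSemidef.zero ?_
  intro i _
  exact psd_smul (hK.pow i) (hq i)

lemma commute_inv {A B : Matrix (Fin n) (Fin n) ℝ}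
    (h : Commute A B) (hB : IsUnit B.det) : Commute A B⁻¹ := by
  show A * B⁻¹ = B⁻¹ * A
  calc A * B⁻¹ = B⁻¹ * B * (A * B⁻¹) := by rw [Matrix.nonsing_inv_mul _ hB, one_mul]
  _ = B⁻¹ * (B * A) * B⁻¹ := by noncomm_ring
  _ = B⁻¹ * (A * B) * B⁻¹ := by rw [h.eq]
  _ = B⁻¹ * A * (B * B⁻¹) := by noncomm_ring
  _ = B⁻¹ * A := by rw [Matrix.mul_nonsing_inv _ hB, mul_one]

lemma Fm_posdef (hK : K.PosDef) (hd : ∀ i, 0 < d i) (i : ℕ) : (Fm K d i).PosDef :=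
  Matrix.PosDef.add_posSemidef Matrix.PosDef.one (psd_smul hK.posSemidef (hd i).le)

lemma Fm_det (hK : K.PosDef) (hd : ∀ i, 0 < d i) (i : ℕ) : IsUnit (Fm K d i).det :=
  isUnit_iff_ne_zero.mpr (Fm_posdef hK hd i).det_pos.ne'

lemma FB_one (hK : K.PosDef) (hd : ∀ i, 0 < d i) (i : ℕ) : Fm K d i * Bm K d i = 1 :=
  Matrix.mul_nonsing_inv _ (Fm_det hK hd i)

lemma BF_one (hK : K.PosDef) (hd : ∀ i, 0 < d i) (i : ℕ) : Bm K d i * Fm K d i = 1 :=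
  Matrix.nonsing_inv_mul _ (Fm_det hK hd i)

lemma commute_K_F (i : ℕ) : Commute K (Fm K d i) :=
  (Commute.one_right K).add_right ((Commute.refl K).smul_right _)

lemma commute_K_B (hK : K.PosDef) (hd : ∀ i, 0 < d i) (i : ℕ) : Commute K (Bm K d i) :=
  commute_inv (commute_K_F i) (Fm_det hK hd i)

lemma commute_K_R (hK : K.PosDef) (hd : ∀ i, 0 < d i) (k : ℕ) : Commute K (Rm K d k) :=
  Commute.list_prod_right _ _ (by
    intro x hx
    simp only [List.mem_map] at hx
    obtain ⟨i, -, rfl⟩ := hx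
    exact commute_K_B hK hd i)

lemma commute_F_of_K {X : Matrix (Fin n) (Fin n) ℝ} (h : Commute K X) (i : ℕ) :
    Commute X (Fm K d i) :=
  (Commute.one_right X).add_right (h.symm.smul_right _)

lemma commute_B_of_K (hK : K.PosDef) (hd : ∀ i, 0 < d i)
    {X : Matrix (Fin n) (Fin n) ℝ} (h : Commute K X) (i : ℕ) :
    Commute X (Bm K d i) :=
  commute_inv (commute_F_of_K h i) (Fm_det hK hd i)

lemma Rm_succ (k : ℕ) : Rm K d (k + 1) = Rm K d k * Bm K d k := by
  unfold Rm
  rw [List.range_succ, List.map_append, List.prod_append, List.map_singleton,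
    List.prod_singleton]

lemma Tm_succ (k : ℕ) : Tm K d (k + 1) = Tm K d k * Fm K d k := by
  unfold Tm
  rw [List.range_succ, List.map_append, List.prod_append, List.map_singleton,
    List.prod_singleton]

lemma TR_one (hK : K.PosDef) (hd : ∀ i, 0 < d i) (k : ℕ) :
    Tm K d k * Rm K d k = 1 := by
  induction k with
  | zero => simp [Tm, Rm]
  | succ k ih =>
    rw [Tm_succ, Rm_succ, mul_assoc, ← mul_assoc (Fm K d k),
      ← (commute_F_of_K (commute_K_R hK hd k) k).eq, mul_assoc, FB_one hK hd, mul_one, ih]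

lemma Rm_det (hK : K.PosDef) (hd : ∀ i, 0 < d i) (k : ℕ) : IsUnit (Rm K d k).det := by
  have := congrArg Matrix.det (TR_one hK hd k)
  rw [Matrix.det_mul, Matrix.det_one] at this
  exact IsUnit.of_mul_eq_one _ (by rw [mul_comm] at this; exact this)

lemma Tm_repr (hd : ∀ i, 0 < d i) (k : ℕ) :
    ∃ s : ℝ, 0 < s ∧ ∃ q : ℝ[X], (∀ i, 0 ≤ q.coeff i) ∧
      Tm K d (k + 1) = 1 + s • K + K * (Polynomial.aeval K q) * K := by
  induction k with
  | zero =>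
    refine ⟨d 0, hd 0, 0, by simp, ?_⟩
    show Tm K d 1 = _
    rw [show (1 : ℕ) = 0 + 1 from rfl, Tm_succ]
    simp [Tm, Fm]
  | succ k ih =>
    obtain ⟨s, hs, q, hq, hT⟩ := ih
    refine ⟨s + d (k + 1), add_pos hs (hd _),
      q + Polynomial.C (s * d (k + 1)) + Polynomial.C (d (k + 1)) * q * X, ?_, ?_⟩
    · intro i
      simp only [coeff_add]
      have h1 : 0 ≤ (Polynomial.C (s * d (k + 1))).coeff i := by
        rw [coeff_C]
        split_ifs
        · exact (mul_pos hs (hd _)).le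
        · exact le_refl 0
      have h2 : 0 ≤ (Polynomial.C (d (k + 1)) * q * X).coeff i := by
        match i with
        | 0 => rw [coeff_mul_X_zero]
        | (j + 1) =>
          rw [coeff_mul_X, coeff_C_mul]
          exact mul_nonneg (hd _).le (hq j)
      exact add_nonneg (add_nonneg (hq i) h1) h2
    · rw [Tm_succ, hT]
      show _ = 1 + (s + d (k+1)) • K + K * (Polynomial.aeval K
        (q + Polynomial.C (s * d (k + 1)) + Polynomial.C (d (k + 1)) * q * X)) * K
      simp only [map_add, _root_.map_mul, aeval_C, aeval_X, Fm]
      simp only [algebraMap_smul, Algebra.algebraMap_eq_smul_one]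
      simp only [mul_add, add_mul, mul_one, one_mul, smul_mul_assoc, mul_smul_comm,
        smul_add, smul_smul, add_smul, mul_assoc]
      abel

lemma Tm_sub_one_posdef (hK : K.PosDef) (hd : ∀ i, 0 < d i) (k : ℕ) :
    (Tm K d (k + 1) - 1).PosDef := by
  obtain ⟨s, hs, q, hq, hT⟩ := Tm_repr (K := K) hd k
  rw [hT]
  have h1 : (1 : Matrix (Fin n) (Fin n) ℝ) + s • K + K * (Polynomial.aeval K q) * K - 1
      = s • K + K * (Polynomial.aeval K q) * K := by abel
  rw [h1]
  refine Matrix.PosDef.add_posSemidef (pd_smul hK hs) ?_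
  have h2 : K * (Polynomial.aeval K q) * K = K * (Polynomial.aeval K q) * Kᴴ := by
    rw [hK.isHermitian]
  rw [h2]
  exact (psd_aeval hK.posSemidef q hq).mul_mul_conjTranspose_same K

end KernelAveragedGD

open KernelAveragedGD

set_option maxHeartbeats 1000000 in
/-- Theorem 2 (kernel ridge regression), part 1: the averaged GD path in the dual,
under the matrix weighting scheme, equals the GD path of the more regularized problem. -/
theorem kernel_averaged_gd
    (n : ℕ) (K : Matrix (Fin n) (Fin n) ℝ) (hK : K.PosDef)
    (y : Fin n → ℝ) (lam lamhat : ℝ) (hlam : 0 ≤ lam) (hll : lam < lamhat)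
    (η : ℕ → ℝ) (hη : ∀ k, 0 < η k)
    (γ : ℕ → Matrix (Fin n) (Fin n) ℝ)
    (hγ : ∀ k, γ k = η k •
      ((1 : Matrix (Fin n) (Fin n) ℝ) + ((lamhat - lam) * η k) • K)⁻¹)
    (α αhat : ℕ → Fin n → ℝ)
    (hα0 : α 0 = 0) (hαhat0 : αhat 0 = 0)
    (hα : ∀ k, α (k + 1)
      = α k - η k • ((K * K).mulVec (α k) - K.mulVec y + lam • K.mulVec (α k)))
    (hαhat : ∀ k, αhat (k + 1)
      = αhat k - (γ k).mulVec
          ((K * K).mulVec (αhat k) - K.mulVec y + lamhat • K.mulVec (αhat k)))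
    (P p : ℕ → Matrix (Fin n) (Fin n) ℝ)
    (hP : ∀ k, P k = 1 - ((List.range (k + 1)).map
      (fun i => ((1 : Matrix (Fin n) (Fin n) ℝ) + ((lamhat - lam) * η i) • K)⁻¹)).prod)
    (hp0 : p 0 = P 0) (hps : ∀ k, p (k + 1) = P (k + 1) - P k)
    (αtil : ℕ → Fin n → ℝ)
    (hαtil : ∀ k, αtil k
      = (P k)⁻¹.mulVec (∑ i ∈ Finset.range (k + 1), (p i).mulVec (α i))) :
    ∀ k, (P k).mulVec (αtil k) = αhat k - (1 - P k).mulVec (α k) := by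
  have hc : 0 < lamhat - lam := sub_pos.mpr hll
  set d : ℕ → ℝ := fun i => (lamhat - lam) * η i with hd_def
  have hd : ∀ i, 0 < d i := fun i => mul_pos hc (hη i)
  have hP' : ∀ k, P k = 1 - Rm K d (k + 1) := fun k => hP k
  have hγ' : ∀ k, γ k = η k • Bm K d k := fun k => hγ k
  -- abbreviations for gradients
  set gl : ℕ → Fin n → ℝ :=
    fun k => (K * K).mulVec (α k) - K.mulVec y + lam • K.mulVec (α k) with hgl_def
  set gh : ℕ → Fin n → ℝ :=
    fun k => (K * K).mulVec (αhat k) - K.mulVec y + lamhat • K.mulVec (αhat k) with hgh_def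
  have hα' : ∀ k, α (k + 1) = α k - η k • gl k := fun k => hα k
  have hαhat' : ∀ k, αhat (k + 1) = αhat k - (γ k).mulVec (gh k) := fun k => hαhat k
  -- gradients in matrix form
  have hexp : ∀ (mu : ℝ) (v : Fin n → ℝ),
      (K * K).mulVec v - K.mulVec y + mu • K.mulVec v
        = (K * K + mu • K).mulVec v - K.mulVec y := by
    intro mu v
    rw [Matrix.add_mulVec, smul_mulVec]
    abel
  set Ml : Matrix (Fin n) (Fin n) ℝ := K * K + lam • K with hMl_def
  set Mh : Matrix (Fin n) (Fin n) ℝ := K * K + lamhat • K with hMh_def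
  have hglm : ∀ k, gl k = Ml.mulVec (α k) - K.mulVec y := fun k => hexp lam (α k)
  have hghm : ∀ k, gh k = Mh.mulVec (αhat k) - K.mulVec y := fun k => hexp lamhat (αhat k)
  -- commutation facts
  have cKMl : Commute K Ml :=
    ((Commute.refl K).mul_right (Commute.refl K)).add_right ((Commute.refl K).smul_right _)
  have cKMh : Commute K Mh :=
    ((Commute.refl K).mul_right (Commute.refl K)).add_right ((Commute.refl K).smul_right _)
  have cMhF : ∀ i, Commute Mh (Fm K d i) := fun i => commute_F_of_K cKMh i
  -- the key matrix identity: 1 - η k • (Mh * B k) = B k * (1 - η k • Ml)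
  have hBA : ∀ k, (1 : Matrix (Fin n) (Fin n) ℝ) - η k • (Mh * Bm K d k)
      = Bm K d k * ((1 : Matrix (Fin n) (Fin n) ℝ) - η k • Ml) := by
    intro k
    have h1 : Fm K d k * ((1 : Matrix (Fin n) (Fin n) ℝ) - η k • (Mh * Bm K d k))
        = Fm K d k * (Bm K d k * ((1 : Matrix (Fin n) (Fin n) ℝ) - η k • Ml)) := by
      rw [← mul_assoc, FB_one hK hd, one_mul]
      rw [mul_sub, mul_one, mul_smul_comm, ← mul_assoc, ← (cMhF k).eq, mul_assoc,
        FB_one hK hd, mul_one]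
      show Fm K d k - η k • Mh = 1 - η k • Ml
      rw [hMh_def, hMl_def]
      show 1 + ((lamhat - lam) * η k) • K - η k • (K * K + lamhat • K)
        = 1 - η k • (K * K + lam • K)
      module
    calc (1 : Matrix (Fin n) (Fin n) ℝ) - η k • (Mh * Bm K d k)
        = Bm K d k * (Fm K d k * ((1 : Matrix (Fin n) (Fin n) ℝ) - η k • (Mh * Bm K d k))) := by
          rw [← mul_assoc, BF_one hK hd, one_mul]
      _ = Bm K d k * (Fm K d k * (Bm K d k * ((1 : Matrix (Fin n) (Fin n) ℝ) - η k • Ml))) := by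
          rw [h1]
      _ = Bm K d k * ((1 : Matrix (Fin n) (Fin n) ℝ) - η k • Ml) := by
          rw [← mul_assoc (Fm K d k), FB_one hK hd, one_mul]
  -- one-step recursions for gradients
  have hglrec : ∀ k, gl (k + 1)
      = ((1 : Matrix (Fin n) (Fin n) ℝ) - η k • Ml).mulVec (gl k) := by
    intro k
    rw [hglm (k + 1), hα' k, Matrix.mulVec_sub, Matrix.mulVec_smul, Matrix.sub_mulVec,
      Matrix.one_mulVec, smul_mulVec, hglm k]
    abel
  have hghrec : ∀ k, gh (k + 1) = (Bm K d k * ((1 : Matrix (Fin n) (Fin n) ℝ) - η k • Ml)).mulVec (gh k) := by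
    intro k
    rw [← hBA k, hghm (k + 1), hαhat' k, hγ' k, Matrix.mulVec_sub, smul_mulVec,
      Matrix.mulVec_smul, Matrix.mulVec_mulVec, Matrix.sub_mulVec, Matrix.one_mulVec,
      smul_mulVec, hghm k]
    abel
  -- the combined induction
  have main : ∀ k,
      ((∑ i ∈ Finset.range (k + 1), (p i).mulVec (α i))
          = αhat k - (Rm K d (k + 1)).mulVec (α k))
      ∧ gh k = (Rm K d k).mulVec (gl k) := by
    intro k
    induction k with
    | zero =>
      constructor
      · simp [hα0, hαhat0]
      · rw [hgl_def, hgh_def]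
        show (K * K).mulVec (αhat 0) - K.mulVec y + lamhat • K.mulVec (αhat 0)
          = (Rm K d 0).mulVec ((K * K).mulVec (α 0) - K.mulVec y + lam • K.mulVec (α 0))
        rw [hα0, hαhat0]
        simp [Rm]
    | succ k ih =>
      obtain ⟨ih1, ih2⟩ := ih
      have cRB : Commute (Rm K d k) (Bm K d k) :=
        commute_B_of_K hK hd (commute_K_R hK hd k) k
      have cRK : Commute (Rm K d k) K := (commute_K_R hK hd k).symm
      have cRA : Commute (Rm K d k) ((1 : Matrix (Fin n) (Fin n) ℝ) - η k • Ml) :=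
        (Commute.one_right _).sub_right
          (((cRK.mul_right cRK).add_right (cRK.smul_right lam)).smul_right (η k))
      have inv_succ : gh (k + 1) = (Rm K d (k + 1)).mulVec (gl (k + 1)) := by
        have hmm : Bm K d k * ((1 : Matrix (Fin n) (Fin n) ℝ) - η k • Ml) * Rm K d k
            = Rm K d k * Bm K d k * ((1 : Matrix (Fin n) (Fin n) ℝ) - η k • Ml) := by
          rw [mul_assoc, ← cRA.eq, ← mul_assoc, cRB.eq]
        rw [hghrec k, ih2, Matrix.mulVec_mulVec, hglrec k, Matrix.mulVec_mulVec,
          Rm_succ, hmm]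
      refine ⟨?_, inv_succ⟩
      -- the sum identity
      have hpk : p (k + 1) = Rm K d (k + 1) - Rm K d (k + 2) := by
        rw [hps k, hP' (k + 1), hP' k]
        abel
      have h2 : (γ k).mulVec (gh k) = η k • (Rm K d (k + 1)).mulVec (gl k) := by
        rw [hγ' k, ih2, smul_mulVec, Matrix.mulVec_mulVec, ← cRB.eq, ← Rm_succ]
      have h3 : (Rm K d (k + 1)).mulVec (α (k + 1)) - (Rm K d (k + 1)).mulVec (α k)
          = -((γ k).mulVec (gh k)) := by
        rw [← Matrix.mulVec_sub, hα' k,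
          show α k - η k • gl k - α k = -(η k • gl k) from by abel,
          Matrix.mulVec_neg, Matrix.mulVec_smul, h2]
      have hdiff : αhat (k + 1)
          = αhat k + ((Rm K d (k + 1)).mulVec (α (k + 1)) - (Rm K d (k + 1)).mulVec (α k)) := by
        rw [h3, hαhat' k]
        abel
      rw [Finset.sum_range_succ, ih1, hpk, Matrix.sub_mulVec, hdiff]
      abel
  -- conclusion
  intro k
  have hsum := (main k).1
  have hPk : P k = (Tm K d (k + 1) - 1) * Rm K d (k + 1) := by
    rw [hP' k, sub_mul, one_mul, TR_one hK hd (k + 1)]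
  have hdet : IsUnit (P k).det := by
    rw [hPk, Matrix.det_mul]
    exact (isUnit_iff_ne_zero.mpr (Tm_sub_one_posdef hK hd k).det_pos.ne').mul
      (Rm_det hK hd (k + 1))
  have h1P : (1 : Matrix (Fin n) (Fin n) ℝ) - P k = Rm K d (k + 1) := by
    rw [hP' k, sub_sub_cancel]
  rw [hαtil k, Matrix.mulVec_mulVec, Matrix.mul_nonsing_inv _ hdet, Matrix.one_mulVec,
    hsum, h1P]
end

section
/- In the setting of the kernel averaging scheme with K symmetric positive definite with eigenvalues in [λ_min, λ_max] (λ_min > 0), 0 ≤ λ < λ̂, and learning rates satisfying η ≤ η_k ≤ max{ 1/(λ_max(λ_max+λ)), 1/(λ_max(λ_max+2λ̂−λ)) } for some η > 0: both α_k and α̂_k converge as k → ∞, and there exists a constant M > 0 such that for all k, ‖α̂_k − α̃_k‖₂ ≤ M (1 + (λ̂ − λ)η λ_min)^{−k}. -/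
namespace KGDAux
open Matrix

variable {n : ℕ}



lemma dot_self_nonneg (x : Fin n → ℝ) : 0 ≤ x ⬝ᵥ x :=
  Finset.sum_nonneg fun i _ => mul_self_nonneg _

lemma sq_le_imp {a c : ℝ} (h : a^2 ≤ c^2) (hc : 0 ≤ c) : a ≤ c := by
  nlinarith [sq_nonneg (a - c), sq_nonneg (a + c)]

lemma dot_sym {M : Matrix (Fin n) (Fin n) ℝ} (h : M.IsHermitian) (x y : Fin n → ℝ) :
    x ⬝ᵥ M *ᵥ y = y ⬝ᵥ M *ᵥ x := by
  have hT : Mᵀ = M := by have := h.eq; rwa [Matrix.conjTranspose_eq_transpose_of_trivial] at this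
  rw [Matrix.dotProduct_mulVec x M y, ← Matrix.mulVec_transpose, hT,
    dotProduct_comm]

lemma psd_nonneg {M : Matrix (Fin n) (Fin n) ℝ} (h : M.PosSemidef) (x : Fin n → ℝ) :
    0 ≤ x ⬝ᵥ M *ᵥ x := by simpa using h.dotProduct_mulVec_nonneg x

lemma psd_cs {M : Matrix (Fin n) (Fin n) ℝ} (h : M.PosSemidef) (u v : Fin n → ℝ) :
    (u ⬝ᵥ M *ᵥ v)^2 ≤ (u ⬝ᵥ M *ᵥ u) * (v ⬝ᵥ M *ᵥ v) := by
  have key : ∀ t : ℝ, 0 ≤ (u ⬝ᵥ M *ᵥ u) * (t*t) + (2*(u ⬝ᵥ M *ᵥ v)) * t + (v ⬝ᵥ M *ᵥ v) := by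
    intro t
    have h0 := psd_nonneg h (v + t • u)
    have hsym := dot_sym h.1 u v
    simp only [Matrix.mulVec_add, Matrix.mulVec_smul, add_dotProduct,
      dotProduct_add, smul_dotProduct, dotProduct_smul,
      smul_eq_mul] at h0
    rw [← hsym] at h0
    linear_combination h0
  have hd := discrim_le_zero key
  unfold discrim at hd
  nlinarith [hd]

lemma cs (u v : Fin n → ℝ) : (u ⬝ᵥ v)^2 ≤ (u ⬝ᵥ u) * (v ⬝ᵥ v) := by
  have := psd_cs (Matrix.PosSemidef.one (n := Fin n) (R := ℝ)) u v
  simpa [Matrix.one_mulVec] using this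

lemma norm_sq_eq (v : EuclideanSpace ℝ (Fin n)) :
    ‖v‖^2 = (WithLp.equiv 2 _ v) ⬝ᵥ (WithLp.equiv 2 _ v) := by
  rw [EuclideanSpace.norm_eq, Real.sq_sqrt (by positivity)]
  simp [dotProduct, Real.norm_eq_abs, sq, abs_mul_abs_self]

lemma norm_symm_sq_eq (w : Fin n → ℝ) :
    ‖(WithLp.equiv 2 (Fin n → ℝ)).symm w‖^2 = w ⬝ᵥ w := by
  rw [norm_sq_eq]; simp

lemma toE_apply (M : Matrix (Fin n) (Fin n) ℝ) (v : EuclideanSpace ℝ (Fin n)) :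
    Matrix.toEuclideanLin M v = (WithLp.equiv 2 _).symm (M *ᵥ (WithLp.equiv 2 _ v)) :=
  Matrix.toEuclideanLin_apply M v

lemma norm_toE_sq (M : Matrix (Fin n) (Fin n) ℝ) (v : EuclideanSpace ℝ (Fin n)) :
    ‖Matrix.toEuclideanLin M v‖^2
      = (M *ᵥ (WithLp.equiv 2 _ v)) ⬝ᵥ (M *ᵥ (WithLp.equiv 2 _ v)) := by
  rw [toE_apply, norm_symm_sq_eq]

lemma toE_mul (M N : Matrix (Fin n) (Fin n) ℝ) (v : EuclideanSpace ℝ (Fin n)) :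
    Matrix.toEuclideanLin (M*N) v = Matrix.toEuclideanLin M (Matrix.toEuclideanLin N v) := by
  simp [toE_apply, Matrix.mulVec_mulVec]

lemma toE_one (v : EuclideanSpace ℝ (Fin n)) :
    Matrix.toEuclideanLin (1 : Matrix (Fin n) (Fin n) ℝ) v = v := by
  simp [toE_apply]

/-- upper norm bound from a two-sided PSD sandwich -/
lemma norm_le_of_sandwich {M : Matrix (Fin n) (Fin n) ℝ} {b : ℝ} (hb : 0 ≤ b)
    (h1 : M.PosSemidef) (h2 : (b • (1 : Matrix (Fin n) (Fin n) ℝ) - M).PosSemidef)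
    (v : EuclideanSpace ℝ (Fin n)) :
    ‖Matrix.toEuclideanLin M v‖ ≤ b * ‖v‖ := by
  set x := (WithLp.equiv 2 (Fin n → ℝ)) v with hx
  have quad : ∀ z : Fin n → ℝ, z ⬝ᵥ M *ᵥ z ≤ b * (z ⬝ᵥ z) := by
    intro z
    have h0 := psd_nonneg h2 z
    simp only [Matrix.sub_mulVec, Matrix.smul_mulVec, Matrix.one_mulVec,
      dotProduct_sub, dotProduct_smul, smul_eq_mul] at h0
    linarith
  set w := M *ᵥ x with hw
  have hww : 0 ≤ w ⬝ᵥ w := dot_self_nonneg w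
  have hxx : 0 ≤ x ⬝ᵥ x := dot_self_nonneg x
  have e1 : w ⬝ᵥ w = x ⬝ᵥ M *ᵥ w := by
    rw [hw, dotProduct_comm, dot_sym h1.1]
  have e2 : (x ⬝ᵥ M *ᵥ w)^2 ≤ (x ⬝ᵥ M *ᵥ x) * (w ⬝ᵥ M *ᵥ w) := psd_cs h1 x w
  have e3 : x ⬝ᵥ M *ᵥ x ≤ b * (x ⬝ᵥ x) := quad x
  have e4 : w ⬝ᵥ M *ᵥ w ≤ b * (w ⬝ᵥ w) := quad w
  have e5 : (w ⬝ᵥ w)^2 ≤ (b * (x ⬝ᵥ x)) * (b * (w ⬝ᵥ w)) := by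
    have t1 : (w ⬝ᵥ w)^2 ≤ (x ⬝ᵥ M *ᵥ x) * (w ⬝ᵥ M *ᵥ w) := by rw [e1]; exact e2
    have t2 : (x ⬝ᵥ M *ᵥ x) * (w ⬝ᵥ M *ᵥ w) ≤ (b * (x ⬝ᵥ x)) * (b * (w ⬝ᵥ w)) :=
      mul_le_mul e3 e4 (psd_nonneg h1 w) (mul_nonneg hb hxx)
    exact le_trans t1 t2
  have e6 : w ⬝ᵥ w ≤ b^2 * (x ⬝ᵥ x) := by
    rcases eq_or_lt_of_le hww with h | h
    · nlinarith
    · nlinarith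
  have e7 : ‖Matrix.toEuclideanLin M v‖^2 ≤ (b*‖v‖)^2 := by
    rw [norm_toE_sq, ← hx, ← hw, mul_pow, norm_sq_eq, ← hx]
    nlinarith
  exact sq_le_imp e7 (by positivity)

/-- lower norm bound from a quadratic-form lower bound -/
lemma norm_ge_of_quad {M : Matrix (Fin n) (Fin n) ℝ} {d : ℝ} (hd : 0 ≤ d)
    (h : ∀ z : Fin n → ℝ, d * (z ⬝ᵥ z) ≤ z ⬝ᵥ M *ᵥ z)
    (v : EuclideanSpace ℝ (Fin n)) :
    d * ‖v‖ ≤ ‖Matrix.toEuclideanLin M v‖ := by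
  set x := (WithLp.equiv 2 (Fin n → ℝ)) v with hx
  set w := M *ᵥ x with hw
  have hww : 0 ≤ w ⬝ᵥ w := dot_self_nonneg w
  have hxx : 0 ≤ x ⬝ᵥ x := dot_self_nonneg x
  have e1 : (x ⬝ᵥ w)^2 ≤ (x ⬝ᵥ x) * (w ⬝ᵥ w) := cs x w
  have e2 : d * (x ⬝ᵥ x) ≤ x ⬝ᵥ w := h x
  have e3 : (d * ‖v‖)^2 ≤ ‖Matrix.toEuclideanLin M v‖^2 := by
    rw [norm_toE_sq, ← hx, ← hw, mul_pow, norm_sq_eq, ← hx]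
    rcases eq_or_lt_of_le hxx with h0 | h0
    · have hz : x ⬝ᵥ x = 0 := h0.symm
      rw [hz]; simpa using hww
    · have e4 : 0 ≤ x ⬝ᵥ w := le_trans (mul_nonneg hd hxx) e2
      have e5 : (d * (x ⬝ᵥ x))^2 ≤ (x ⬝ᵥ w)^2 :=
        pow_le_pow_left₀ (mul_nonneg hd h0.le) e2 2
      nlinarith [e1, e5, h0]
  exact sq_le_imp e3 (norm_nonneg _)

lemma isUnit_of_quad {M : Matrix (Fin n) (Fin n) ℝ} {d : ℝ} (hd : 0 < d)
    (h : ∀ z : Fin n → ℝ, d * (z ⬝ᵥ z) ≤ z ⬝ᵥ M *ᵥ z) : IsUnit M := by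
  apply Matrix.mulVec_injective_iff_isUnit.mp
  intro a b hab
  have h0 : M *ᵥ (a - b) = 0 := by
    rw [Matrix.mulVec_sub, hab, sub_self]
  have h1 := norm_ge_of_quad hd.le h ((WithLp.equiv 2 (Fin n → ℝ)).symm (a - b))
  rw [toE_apply] at h1
  simp only [Equiv.apply_symm_apply, h0] at h1
  have h2 : ‖(WithLp.equiv 2 (Fin n → ℝ)).symm (a - b)‖ = 0 := by
    have hnn := norm_nonneg ((WithLp.equiv 2 (Fin n → ℝ)).symm (a-b))
    have h3 : ‖((WithLp.equiv 2 (Fin n → ℝ)).symm (0 : Fin n → ℝ))‖ = 0 := by simp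
    rw [h3] at h1
    nlinarith [h1, hnn, hd]
  have h4 : (WithLp.equiv 2 (Fin n → ℝ)).symm (a - b) = 0 := norm_eq_zero.mp h2
  have : a - b = 0 := by
    simpa using congrArg (WithLp.equiv 2 (Fin n → ℝ)) h4
  exact sub_eq_zero.mp this


def good (K M : Matrix (Fin n) (Fin n) ℝ) : Prop := ∀ N, Commute K N → Commute M N

variable {K : Matrix (Fin n) (Fin n) ℝ}

lemma good_K : good K K := fun _ h => h
lemma good_one : good K 1 := fun N _ => Commute.one_left N
lemma good_add {M M'} (h : good K M) (h' : good K M') : good K (M+M') :=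
  fun N hN => (h N hN).add_left (h' N hN)
lemma good_sub {M M'} (h : good K M) (h' : good K M') : good K (M-M') :=
  fun N hN => (h N hN).sub_left (h' N hN)
lemma good_mul {M M'} (h : good K M) (h' : good K M') : good K (M*M') :=
  fun N hN => (h N hN).mul_left (h' N hN)
lemma good_smul {M} (c : ℝ) (h : good K M) : good K (c • M) := by
  intro N hN
  show (c • M) * N = N * (c • M)
  rw [smul_mul_assoc, mul_smul_comm, h N hN]
lemma good_inv {M} (h : good K M) (hu : IsUnit M) : good K M⁻¹ := by
  intro N hN
  have hc : M * N = N * M := h N hN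
  have hd := (Matrix.isUnit_iff_isUnit_det M).mp hu
  show M⁻¹ * N = N * M⁻¹
  calc M⁻¹ * N = M⁻¹ * N * (M * M⁻¹) := by rw [Matrix.mul_nonsing_inv _ hd, mul_one]
  _ = M⁻¹ * (N * M) * M⁻¹ := by simp only [mul_assoc]
  _ = M⁻¹ * (M * N) * M⁻¹ := by rw [← hc]
  _ = (M⁻¹ * M) * (N * M⁻¹) := by simp only [mul_assoc]
  _ = N * M⁻¹ := by rw [Matrix.nonsing_inv_mul _ hd, one_mul]
lemma good_listprod {l : List (Matrix (Fin n) (Fin n) ℝ)} (h : ∀ M ∈ l, good K M) :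
    good K l.prod :=
  fun N hN => Commute.list_prod_left l N (fun x hx => h x hx N hN)
lemma good.commute {M M'} (h : good K M) (h' : good K M') : Commute M M' :=
  h M' ((h' K (Commute.refl K)).symm)

lemma psd_of_quad {M : Matrix (Fin n) (Fin n) ℝ} (hM : M.IsHermitian)
    (h : ∀ x : Fin n → ℝ, 0 ≤ x ⬝ᵥ M *ᵥ x) : M.PosSemidef :=
  .of_dotProduct_mulVec_nonneg hM (fun x => by simpa using h x)

lemma herm_smul {M : Matrix (Fin n) (Fin n) ℝ} (h : M.IsHermitian) (c : ℝ) :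
    (c • M).IsHermitian := by
  rw [Matrix.IsHermitian, Matrix.conjTranspose_smul, star_trivial, h.eq]

lemma psd_smul {M : Matrix (Fin n) (Fin n) ℝ} {c : ℝ} (hc : 0 ≤ c) (h : M.PosSemidef) :
    (c • M).PosSemidef := by
  refine psd_of_quad (herm_smul h.1 c) (fun x => ?_)
  rw [Matrix.smul_mulVec, dotProduct_smul, smul_eq_mul]
  exact mul_nonneg hc (by simpa using h.dotProduct_mulVec_nonneg x)

lemma herm_mul_self {M : Matrix (Fin n) (Fin n) ℝ} (h : M.IsHermitian) :
    (M*M).IsHermitian := by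
  rw [Matrix.IsHermitian, Matrix.conjTranspose_mul, h.eq]

example (M N : Matrix (Fin n) (Fin n) ℝ) (v : EuclideanSpace ℝ (Fin n)) :
    Matrix.toEuclideanLin (M+N) v = Matrix.toEuclideanLin M v + Matrix.toEuclideanLin N v := by
  rw [map_add]; rfl
example (M N : Matrix (Fin n) (Fin n) ℝ) (v : EuclideanSpace ℝ (Fin n)) :
    Matrix.toEuclideanLin (M-N) v = Matrix.toEuclideanLin M v - Matrix.toEuclideanLin N v := by
  rw [map_sub]; rfl
example (M : Matrix (Fin n) (Fin n) ℝ) (c : ℝ) (v : EuclideanSpace ℝ (Fin n)) :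
    Matrix.toEuclideanLin (c • M) v = c • Matrix.toEuclideanLin M v := by
  rw [_root_.map_smul]; rfl
example (M : Matrix (Fin n) (Fin n) ℝ) (v w : EuclideanSpace ℝ (Fin n)) :
    Matrix.toEuclideanLin M (v - w) = Matrix.toEuclideanLin M v - Matrix.toEuclideanLin M w :=
  map_sub _ _ _
example (M : Matrix (Fin n) (Fin n) ℝ) : Matrix.toEuclideanLin M 0 = 0 := map_zero _
example (s : Finset ℕ) (f : ℕ → Matrix (Fin n) (Fin n) ℝ) (v : EuclideanSpace ℝ (Fin n)) :
    Matrix.toEuclideanLin (∑ i ∈ s, f i) v = ∑ i ∈ s, Matrix.toEuclideanLin (f i) v := by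
  rw [map_sum]; simp [LinearMap.sum_apply]

lemma dot_mulVec_self_le {M : Matrix (Fin n) (Fin n) ℝ} {b : ℝ} (hb : 0 ≤ b)
    (h : ∀ v : EuclideanSpace ℝ (Fin n), ‖Matrix.toEuclideanLin M v‖ ≤ b * ‖v‖)
    (x : Fin n → ℝ) : (M *ᵥ x) ⬝ᵥ (M *ᵥ x) ≤ b^2 * (x ⬝ᵥ x) := by
  have hv := h ((WithLp.equiv 2 (Fin n → ℝ)).symm x)
  have h2 := pow_le_pow_left₀ (norm_nonneg _) hv 2
  rw [norm_toE_sq, mul_pow, norm_symm_sq_eq] at h2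
  simpa using h2

lemma dot_mulVec_self_ge {M : Matrix (Fin n) (Fin n) ℝ} {d : ℝ} (hd : 0 ≤ d)
    (h : ∀ v : EuclideanSpace ℝ (Fin n), d * ‖v‖ ≤ ‖Matrix.toEuclideanLin M v‖)
    (x : Fin n → ℝ) : d^2 * (x ⬝ᵥ x) ≤ (M *ᵥ x) ⬝ᵥ (M *ᵥ x) := by
  have hv := h ((WithLp.equiv 2 (Fin n → ℝ)).symm x)
  have h2 := pow_le_pow_left₀ (by positivity) hv 2
  rw [norm_toE_sq, mul_pow, norm_symm_sq_eq] at h2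
  simpa using h2

lemma quad_le_of_norm {M : Matrix (Fin n) (Fin n) ℝ} {b : ℝ} (hb : 0 ≤ b)
    (h : ∀ v : EuclideanSpace ℝ (Fin n), ‖Matrix.toEuclideanLin M v‖ ≤ b * ‖v‖)
    (x : Fin n → ℝ) : x ⬝ᵥ M *ᵥ x ≤ b * (x ⬝ᵥ x) := by
  have h1 := cs x (M *ᵥ x)
  have h2 := dot_mulVec_self_le hb h x
  have hxx := dot_self_nonneg x
  have h3 : (x ⬝ᵥ M *ᵥ x)^2 ≤ (b * (x ⬝ᵥ x))^2 := by nlinarith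
  exact sq_le_imp h3 (mul_nonneg hb hxx)

-- generic commuting shuffle helpers (any monoid)
lemma mul_left_comm' {M : Type*} [Monoid M] {a b : M} (h : Commute a b) (c : M) :
    a*(b*c) = b*(a*c) := by rw [← mul_assoc, h.eq, mul_assoc]

lemma mul_shuffle1 {M : Type*} [Monoid M] {a b c d : M}
    (hac : Commute a c) (hbc : Commute b c) (hbd : Commute b d) :
    a * b * (c * d) = (c * a) * (d * b) := by
  calc a*b*(c*d) = a*((b*c)*d) := by rw [mul_assoc, ← mul_assoc b c d]
  _ = a*((c*b)*d) := by rw [hbc.eq]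
  _ = a*(c*(b*d)) := by rw [mul_assoc]
  _ = a*(c*(d*b)) := by rw [hbd.eq]
  _ = (a*c)*(d*b) := by rw [← mul_assoc]
  _ = (c*a)*(d*b) := by rw [hac.eq]

lemma mul_shuffle2 {M : Type*} [Monoid M] {a b c d : M} (hbc : Commute b c) :
    (a * b) * (c * d) = (a * c) * (b * d) := by
  calc (a*b)*(c*d) = a*((b*c)*d) := by rw [mul_assoc, ← mul_assoc b c d]
  _ = a*((c*b)*d) := by rw [hbc.eq]
  _ = (a*c)*(b*d) := by rw [mul_assoc c b d, ← mul_assoc]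


end KGDAux

set_option maxHeartbeats 8000000 in
open KGDAux Matrix in
/-- Theorem 2 (kernel ridge regression), part 2: convergence of the dual GD paths and
geometric convergence of the averaged path to the regularized path. -/
theorem kernel_averaged_gd_convergence
    (n : ℕ) (K : Matrix (Fin n) (Fin n) ℝ)
    (lammin lammax : ℝ) (hlammin : 0 < lammin)
    (hKlower : (K - lammin • (1 : Matrix (Fin n) (Fin n) ℝ)).PosSemidef)
    (hKupper : ((lammax • (1 : Matrix (Fin n) (Fin n) ℝ)) - K).PosSemidef)
    (y : EuclideanSpace ℝ (Fin n)) (lam lamhat : ℝ) (hlam : 0 ≤ lam) (hll : lam < lamhat)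
    (η₀ : ℝ) (hη₀ : 0 < η₀)
    (η : ℕ → ℝ) (hηlb : ∀ k, η₀ ≤ η k)
    (hηub : ∀ k, η k ≤ max (1 / (lammax * (lammax + lam)))
      (1 / (lammax * (lammax + 2 * lamhat - lam))))
    (γ : ℕ → Matrix (Fin n) (Fin n) ℝ)
    (hγ : ∀ k, γ k = η k •
      ((1 : Matrix (Fin n) (Fin n) ℝ) + ((lamhat - lam) * η k) • K)⁻¹)
    (α αhat : ℕ → EuclideanSpace ℝ (Fin n))
    (hα0 : α 0 = 0) (hαhat0 : αhat 0 = 0)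
    (hα : ∀ k, α (k + 1)
      = α k - η k • (Matrix.toEuclideanLin (K * K) (α k) - Matrix.toEuclideanLin K y
          + lam • Matrix.toEuclideanLin K (α k)))
    (hαhat : ∀ k, αhat (k + 1)
      = αhat k - Matrix.toEuclideanLin (γ k)
          (Matrix.toEuclideanLin (K * K) (αhat k) - Matrix.toEuclideanLin K y
            + lamhat • Matrix.toEuclideanLin K (αhat k)))
    (P p : ℕ → Matrix (Fin n) (Fin n) ℝ)
    (hP : ∀ k, P k = 1 - ((List.range (k + 1)).map
      (fun i => ((1 : Matrix (Fin n) (Fin n) ℝ) + ((lamhat - lam) * η i) • K)⁻¹)).prod)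
    (hp0 : p 0 = P 0) (hps : ∀ k, p (k + 1) = P (k + 1) - P k)
    (αtil : ℕ → EuclideanSpace ℝ (Fin n))
    (hαtil : ∀ k, αtil k
      = Matrix.toEuclideanLin (P k)⁻¹ (∑ i ∈ Finset.range (k + 1),
          Matrix.toEuclideanLin (p i) (α i))) :
    (∃ L : EuclideanSpace ℝ (Fin n), Filter.Tendsto α Filter.atTop (nhds L)) ∧
    (∃ Lhat : EuclideanSpace ℝ (Fin n), Filter.Tendsto αhat Filter.atTop (nhds Lhat)) ∧
    (∃ M : ℝ, 0 < M ∧ ∀ k,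
      ‖αhat k - αtil k‖ ≤ M * ((1 + (lamhat - lam) * η₀ * lammin)⁻¹) ^ k) := by
  classical
  have hllpos : 0 < lamhat - lam := sub_pos.mpr hll
  set s : ℝ := 1 + (lamhat - lam) * η₀ * lammin with hs_def
  have hs1 : 1 < s := by
    have : 0 < (lamhat - lam) * η₀ * lammin := by positivity
    rw [hs_def]; linarith
  have hs0 : 0 < s := by linarith
  have hr0 : 0 < s⁻¹ := inv_pos.mpr hs0
  have hr1 : s⁻¹ < 1 := inv_lt_one_of_one_lt₀ hs1
  have hrle1 : s⁻¹ ≤ 1 := hr1.le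
  rcases Nat.eq_zero_or_pos n with hn | hn
  · subst hn
    have hsub : ∀ v : EuclideanSpace ℝ (Fin 0), v = 0 := fun v => PiLp.ext fun i => i.elim0
    refine ⟨⟨0, ?_⟩, ⟨0, ?_⟩, ⟨1, one_pos, fun k => ?_⟩⟩
    · have h : α = fun _ => (0 : EuclideanSpace ℝ (Fin 0)) := funext fun k => hsub _
      rw [h]; exact tendsto_const_nhds
    · have h : αhat = fun _ => (0 : EuclideanSpace ℝ (Fin 0)) := funext fun k => hsub _
      rw [h]; exact tendsto_const_nhds
    · rw [hsub (αhat k - αtil k), norm_zero, one_mul]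
      exact pow_nonneg hr0.le k
  -- ===================== main case : 0 < n =====================
  -- scalar preliminaries
  have hminmax : lammin ≤ lammax := by
    have hsum : ((lammax - lammin) • (1 : Matrix (Fin n) (Fin n) ℝ)).PosSemidef := by
      have h := hKlower.add hKupper
      have e : (K - lammin • 1) + (lammax • (1 : Matrix (Fin n) (Fin n) ℝ) - K)
          = (lammax - lammin) • 1 := by module
      rwa [e] at h
    have h2 := psd_nonneg hsum (Pi.single (⟨0, hn⟩ : Fin n) (1:ℝ))
    rw [Matrix.smul_mulVec, Matrix.one_mulVec, dotProduct_smul] at h2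
    have h3 : (Pi.single (⟨0,hn⟩:Fin n) (1:ℝ)) ⬝ᵥ (Pi.single (⟨0,hn⟩:Fin n) (1:ℝ)) = 1 := by
      simp [dotProduct, Pi.single_apply]
    rw [h3] at h2
    simpa using h2
  have hlmax0 : 0 < lammax := lt_of_lt_of_le hlammin hminmax
  have hD1 : 0 < lammax * (lammax + lam) := mul_pos hlmax0 (by linarith)
  have hηpos : ∀ k, 0 < η k := fun k => lt_of_lt_of_le hη₀ (hηlb k)
  have hηmax : ∀ k, η k ≤ 1 / (lammax*(lammax+lam)) := by
    intro k
    have h := hηub k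
    have hle : (1 : ℝ) / (lammax*(lammax+2*lamhat-lam)) ≤ 1/(lammax*(lammax+lam)) := by
      apply one_div_le_one_div_of_le hD1
      nlinarith
    rw [max_eq_left hle] at h; exact h
  have hηD : ∀ k, η k * (lammax*(lammax+lam)) ≤ 1 := by
    intro k
    have h := hηmax k
    rw [div_eq_mul_inv, one_mul] at h
    calc η k * (lammax*(lammax+lam)) ≤ (lammax*(lammax+lam))⁻¹ * (lammax*(lammax+lam)) :=
          mul_le_mul_of_nonneg_right h hD1.le
    _ = 1 := inv_mul_cancel₀ hD1.ne'
  -- Hermitian and quadratic facts about K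
  have hKh : K.IsHermitian := by
    have h1 := hKlower.1
    have h2 : K - lammin • 1 + lammin • (1:Matrix (Fin n) (Fin n) ℝ) = K := by module
    rw [← h2]; exact h1.add (herm_smul Matrix.isHermitian_one lammin)
  have qKl : ∀ x : Fin n → ℝ, lammin * (x ⬝ᵥ x) ≤ x ⬝ᵥ K *ᵥ x := by
    intro x
    have h := psd_nonneg hKlower x
    simp only [Matrix.sub_mulVec, Matrix.smul_mulVec, Matrix.one_mulVec,
      dotProduct_sub, dotProduct_smul, smul_eq_mul] at h
    linarith
  have qKu : ∀ x : Fin n → ℝ, x ⬝ᵥ K *ᵥ x ≤ lammax * (x ⬝ᵥ x) := by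
    intro x
    have h := psd_nonneg hKupper x
    simp only [Matrix.sub_mulVec, Matrix.smul_mulVec, Matrix.one_mulVec,
      dotProduct_sub, dotProduct_smul, smul_eq_mul] at h
    linarith
  have hKpsd : K.PosSemidef := psd_of_quad hKh
    (fun x => le_trans (mul_nonneg hlammin.le (dot_self_nonneg x)) (qKl x))
  have nKu : ∀ v, ‖Matrix.toEuclideanLin K v‖ ≤ lammax * ‖v‖ :=
    norm_le_of_sandwich hlmax0.le hKpsd hKupper
  have nKl : ∀ v, lammin * ‖v‖ ≤ ‖Matrix.toEuclideanLin K v‖ :=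
    norm_ge_of_quad hlammin.le qKl
  have qK2 : ∀ x : Fin n → ℝ, x ⬝ᵥ (K*K) *ᵥ x = (K *ᵥ x) ⬝ᵥ (K *ᵥ x) := by
    intro x; rw [← Matrix.mulVec_mulVec]; exact dot_sym hKh x (K *ᵥ x)
  have qK2u : ∀ x : Fin n → ℝ, x ⬝ᵥ (K*K) *ᵥ x ≤ lammax^2 * (x ⬝ᵥ x) := by
    intro x; rw [qK2]; exact dot_mulVec_self_le hlmax0.le nKu x
  have qK2l : ∀ x : Fin n → ℝ, lammin^2 * (x ⬝ᵥ x) ≤ x ⬝ᵥ (K*K) *ᵥ x := by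
    intro x; rw [qK2]; exact dot_mulVec_self_ge hlammin.le nKl x
  -- matrices
  set A : Matrix (Fin n) (Fin n) ℝ := K*K + lam • K with hA_def
  set Ahat : Matrix (Fin n) (Fin n) ℝ := K*K + lamhat • K with hAhat_def
  set Cm : Matrix (Fin n) (Fin n) ℝ := (lamhat - lam) • K with hCm_def
  set Bm : ℕ → Matrix (Fin n) (Fin n) ℝ := fun i => 1 + ((lamhat - lam) * η i) • K with hBm_def
  set Tm : ℕ → Matrix (Fin n) (Fin n) ℝ := fun i => 1 - η i • A with hTm_def
  set Qm : ℕ → Matrix (Fin n) (Fin n) ℝ :=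
    fun k => ((List.range k).map (fun i => (Bm i)⁻¹)).prod with hQm_def
  set Wm : ℕ → Matrix (Fin n) (Fin n) ℝ := fun k => ((List.range k).map Tm).prod with hWm_def
  have hQ0 : Qm 0 = 1 := by rw [hQm_def]; simp
  have hW0 : Wm 0 = 1 := by rw [hWm_def]; simp
  have hQsucc : ∀ k, Qm (k+1) = Qm k * (Bm k)⁻¹ := by
    intro k; rw [hQm_def]; simp only []
    rw [List.range_succ, List.map_append, List.prod_append]; simp
  have hWsucc : ∀ k, Wm (k+1) = Wm k * Tm k := by
    intro k; rw [hWm_def]; simp only []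
    rw [List.range_succ, List.map_append, List.prod_append]; simp
  -- quadratic facts for A, Ahat, Bm
  have qA : ∀ x : Fin n → ℝ, x ⬝ᵥ A *ᵥ x = x ⬝ᵥ (K*K) *ᵥ x + lam * (x ⬝ᵥ K *ᵥ x) := by
    intro x; rw [hA_def]
    simp [Matrix.add_mulVec, Matrix.smul_mulVec, dotProduct_add,
      dotProduct_smul]
  have qAhat : ∀ x : Fin n → ℝ, x ⬝ᵥ Ahat *ᵥ x = x ⬝ᵥ (K*K) *ᵥ x + lamhat * (x ⬝ᵥ K *ᵥ x) := by
    intro x; rw [hAhat_def]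
    simp [Matrix.add_mulVec, Matrix.smul_mulVec, dotProduct_add,
      dotProduct_smul]
  have qAu : ∀ x : Fin n → ℝ, x ⬝ᵥ A *ᵥ x ≤ (lammax*(lammax+lam)) * (x ⬝ᵥ x) := by
    intro x
    have h1 := qK2u x; have h2 := qKu x; have h3 := dot_self_nonneg x
    rw [qA]; nlinarith [mul_le_mul_of_nonneg_left h2 hlam]
  have qAl : ∀ x : Fin n → ℝ, (lammin*(lammin+lam)) * (x ⬝ᵥ x) ≤ x ⬝ᵥ A *ᵥ x := by
    intro x
    have h1 := qK2l x; have h2 := qKl x; have h3 := dot_self_nonneg x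
    rw [qA]; nlinarith [mul_le_mul_of_nonneg_left h2 hlam]
  have qAhatl : ∀ x : Fin n → ℝ, (lammin*(lammin+lamhat)) * (x ⬝ᵥ x) ≤ x ⬝ᵥ Ahat *ᵥ x := by
    intro x
    have h1 := qK2l x; have h2 := qKl x; have h3 := dot_self_nonneg x
    rw [qAhat]; nlinarith [mul_le_mul_of_nonneg_left h2 (le_of_lt (lt_of_le_of_lt hlam hll))]
  have hA_lb_pos : 0 < lammin*(lammin+lam) := mul_pos hlammin (by linarith)
  have hAhat_lb_pos : 0 < lammin*(lammin+lamhat) := mul_pos hlammin (by linarith)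
  have hAU : IsUnit A := isUnit_of_quad hA_lb_pos qAl
  have hAhatU : IsUnit Ahat := isUnit_of_quad hAhat_lb_pos qAhatl
  -- Bm facts
  have qB : ∀ i, ∀ x : Fin n → ℝ, s * (x ⬝ᵥ x) ≤ x ⬝ᵥ (Bm i) *ᵥ x := by
    intro i x
    have h1 := qKl x; have h2 := dot_self_nonneg x
    have h3 : (lamhat - lam) * η₀ ≤ (lamhat - lam) * η i :=
      mul_le_mul_of_nonneg_left (hηlb i) hllpos.le
    rw [hBm_def]
    simp only [Matrix.add_mulVec, Matrix.one_mulVec, Matrix.smul_mulVec,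
      dotProduct_add, dotProduct_smul, smul_eq_mul]
    rw [hs_def]
    nlinarith [mul_le_mul_of_nonneg_left h1 (mul_nonneg hllpos.le (hηpos i).le),
      mul_le_mul_of_nonneg_right h3 (mul_nonneg hlammin.le h2)]
  have hBU : ∀ i, IsUnit (Bm i) := fun i => isUnit_of_quad hs0 (qB i)
  have hBdet : ∀ i, IsUnit (Bm i).det := fun i => (Matrix.isUnit_iff_isUnit_det _).mp (hBU i)
  have hAdet : IsUnit A.det := (Matrix.isUnit_iff_isUnit_det _).mp hAU
  have hAhatdet : IsUnit Ahat.det := (Matrix.isUnit_iff_isUnit_det _).mp hAhatU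
  -- norm bound for (Bm i)⁻¹
  have nBinv : ∀ i, ∀ u : EuclideanSpace ℝ (Fin n),
      ‖Matrix.toEuclideanLin (Bm i)⁻¹ u‖ ≤ s⁻¹ * ‖u‖ := by
    intro i u
    have h1 := norm_ge_of_quad hs0.le (qB i) (Matrix.toEuclideanLin (Bm i)⁻¹ u)
    rw [← toE_mul, Matrix.mul_nonsing_inv _ (hBdet i), toE_one] at h1
    rw [inv_mul_eq_div, le_div_iff₀ hs0]
    linarith [h1]
  -- Tm sandwich
  have hermA : A.IsHermitian := by
    rw [hA_def]; exact (herm_mul_self hKh).add (herm_smul hKh lam)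
  have hermT : ∀ i, (Tm i).IsHermitian := by
    intro i; rw [hTm_def]
    exact Matrix.isHermitian_one.sub (herm_smul hermA (η i))
  set ρ : ℝ := 1 - η₀ * (lammin*(lammin+lam)) with hρ_def
  have hρ1 : ρ < 1 := by
    have : 0 < η₀ * (lammin*(lammin+lam)) := mul_pos hη₀ hA_lb_pos
    rw [hρ_def]; linarith
  have hρ0 : 0 ≤ ρ := by
    have h1 : η₀ * (lammin*(lammin+lam)) ≤ η₀ * (lammax*(lammax+lam)) := by
      apply mul_le_mul_of_nonneg_left _ hη₀.le
      nlinarith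
    have h2 := hηD 0
    have h3 : η₀ * (lammax*(lammax+lam)) ≤ η 0 * (lammax*(lammax+lam)) :=
      mul_le_mul_of_nonneg_right (hηlb 0) hD1.le
    rw [hρ_def]; linarith
  have qT : ∀ i, ∀ x : Fin n → ℝ, x ⬝ᵥ (Tm i) *ᵥ x = x ⬝ᵥ x - η i * (x ⬝ᵥ A *ᵥ x) := by
    intro i x; rw [hTm_def]
    simp [Matrix.sub_mulVec, Matrix.one_mulVec, Matrix.smul_mulVec,
      dotProduct_sub, dotProduct_smul]
  have psdT : ∀ i, (Tm i).PosSemidef := by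
    intro i
    refine psd_of_quad (hermT i) (fun x => ?_)
    rw [qT]
    have h1 := qAu x
    have h2 := hηD i
    have h3 := dot_self_nonneg x
    have h4 : η i * (x ⬝ᵥ A *ᵥ x) ≤ η i * ((lammax*(lammax+lam)) * (x ⬝ᵥ x)) :=
      mul_le_mul_of_nonneg_left h1 (hηpos i).le
    nlinarith [mul_le_mul_of_nonneg_right h2 h3]
  have psdT2 : ∀ i, (ρ • (1:Matrix (Fin n) (Fin n) ℝ) - Tm i).PosSemidef := by
    intro i
    refine psd_of_quad ((herm_smul Matrix.isHermitian_one ρ).sub (hermT i)) (fun x => ?_)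
    have hq : x ⬝ᵥ (ρ • (1:Matrix (Fin n) (Fin n) ℝ) - Tm i) *ᵥ x
        = ρ * (x ⬝ᵥ x) - x ⬝ᵥ (Tm i) *ᵥ x := by
      simp [Matrix.sub_mulVec, Matrix.smul_mulVec, Matrix.one_mulVec,
        dotProduct_sub, dotProduct_smul]
    rw [hq, qT, hρ_def]
    have h1 := qAl x
    have h3 := dot_self_nonneg x
    have h5 : η₀ * (x ⬝ᵥ A *ᵥ x) ≤ η i * (x ⬝ᵥ A *ᵥ x) := by
      apply mul_le_mul_of_nonneg_right (hηlb i)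
      exact le_trans (mul_nonneg hA_lb_pos.le h3) h1
    nlinarith [mul_le_mul_of_nonneg_left h1 hη₀.le]
  have nT : ∀ i, ∀ v : EuclideanSpace ℝ (Fin n),
      ‖Matrix.toEuclideanLin (Tm i) v‖ ≤ ρ * ‖v‖ :=
    fun i => norm_le_of_sandwich hρ0 (psdT i) (psdT2 i)
  have nT1 : ∀ i, ∀ v : EuclideanSpace ℝ (Fin n),
      ‖Matrix.toEuclideanLin (Tm i) v‖ ≤ ‖v‖ := by
    intro i v
    calc ‖Matrix.toEuclideanLin (Tm i) v‖ ≤ ρ * ‖v‖ := nT i v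
    _ ≤ 1 * ‖v‖ := mul_le_mul_of_nonneg_right hρ1.le (norm_nonneg v)
    _ = ‖v‖ := one_mul _
  -- norm chains for products
  have nQ : ∀ k, ∀ v : EuclideanSpace ℝ (Fin n),
      ‖Matrix.toEuclideanLin (Qm k) v‖ ≤ (s⁻¹)^k * ‖v‖ := by
    intro k
    induction k with
    | zero => intro v; rw [hQ0, toE_one, pow_zero, one_mul]
    | succ k ih =>
      intro v
      rw [hQsucc k, toE_mul]
      calc ‖Matrix.toEuclideanLin (Qm k) (Matrix.toEuclideanLin (Bm k)⁻¹ v)‖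
          ≤ (s⁻¹)^k * ‖Matrix.toEuclideanLin (Bm k)⁻¹ v‖ := ih _
      _ ≤ (s⁻¹)^k * (s⁻¹ * ‖v‖) := by
          apply mul_le_mul_of_nonneg_left (nBinv k v) (pow_nonneg hr0.le k)
      _ = (s⁻¹)^(k+1) * ‖v‖ := by ring
  have nW : ∀ k, ∀ v : EuclideanSpace ℝ (Fin n),
      ‖Matrix.toEuclideanLin (Wm k) v‖ ≤ ‖v‖ := by
    intro k
    induction k with
    | zero => intro v; rw [hW0, toE_one]
    | succ k ih =>
      intro v
      rw [hWsucc k, toE_mul]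
      exact le_trans (ih _) (nT1 k v)
  have nWρ : ∀ k, ∀ v : EuclideanSpace ℝ (Fin n),
      ‖Matrix.toEuclideanLin (Wm k) v‖ ≤ ρ^k * ‖v‖ := by
    intro k
    induction k with
    | zero => intro v; rw [hW0, toE_one, pow_zero, one_mul]
    | succ k ih =>
      intro v
      rw [hWsucc k, toE_mul]
      calc ‖Matrix.toEuclideanLin (Wm k) (Matrix.toEuclideanLin (Tm k) v)‖
          ≤ ρ^k * ‖Matrix.toEuclideanLin (Tm k) v‖ := ih _
      _ ≤ ρ^k * (ρ * ‖v‖) := mul_le_mul_of_nonneg_left (nT k v) (pow_nonneg hρ0 k)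
      _ = ρ^(k+1) * ‖v‖ := by ring
  -- commuting (`good`) facts
  have gA : good K A := by
    simp only [hA_def]; exact good_add (good_mul good_K good_K) (good_smul _ good_K)
  have gAhat : good K Ahat := by
    simp only [hAhat_def]; exact good_add (good_mul good_K good_K) (good_smul _ good_K)
  have gCm : good K Cm := by simp only [hCm_def]; exact good_smul _ good_K
  have gB : ∀ i, good K (Bm i) := by
    intro i; simp only [hBm_def]; exact good_add good_one (good_smul _ good_K)
  have gBinv : ∀ i, good K ((Bm i)⁻¹) := fun i => good_inv (gB i) (hBU i)
  have gT : ∀ i, good K (Tm i) := by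
    intro i; simp only [hTm_def]; exact good_sub good_one (good_smul _ gA)
  have gQ : ∀ k, good K (Qm k) := by
    intro k; simp only [hQm_def]
    apply good_listprod; intro M hM
    simp only [List.mem_map] at hM
    obtain ⟨i, _, rfl⟩ := hM
    exact gBinv i
  have gW : ∀ k, good K (Wm k) := by
    intro k; simp only [hWm_def]
    apply good_listprod; intro M hM
    simp only [List.mem_map] at hM
    obtain ⟨i, _, rfl⟩ := hM
    exact gT i
  have gAhatinv : good K (Ahat⁻¹) := good_inv gAhat hAhatU
  -- fixed points
  set w : EuclideanSpace ℝ (Fin n) := Matrix.toEuclideanLin K y with hw_def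
  set astar : EuclideanSpace ℝ (Fin n) := Matrix.toEuclideanLin A⁻¹ w with hastar_def
  set ahstar : EuclideanSpace ℝ (Fin n) := Matrix.toEuclideanLin Ahat⁻¹ w with hahstar_def
  have hAast : Matrix.toEuclideanLin A astar = w := by
    rw [hastar_def, ← toE_mul, Matrix.mul_nonsing_inv _ hAdet, toE_one]
  have hAhast : Matrix.toEuclideanLin Ahat ahstar = w := by
    rw [hahstar_def, ← toE_mul, Matrix.mul_nonsing_inv _ hAhatdet, toE_one]
  have toEA : ∀ v : EuclideanSpace ℝ (Fin n), Matrix.toEuclideanLin A v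
      = Matrix.toEuclideanLin (K*K) v + lam • Matrix.toEuclideanLin K v := by
    intro v
    rw [hA_def, map_add, LinearMap.add_apply, _root_.map_smul, LinearMap.smul_apply]
  have toEAhat : ∀ v : EuclideanSpace ℝ (Fin n), Matrix.toEuclideanLin Ahat v
      = Matrix.toEuclideanLin (K*K) v + lamhat • Matrix.toEuclideanLin K v := by
    intro v
    rw [hAhat_def, map_add, LinearMap.add_apply, _root_.map_smul, LinearMap.smul_apply]
  have toE_smulM : ∀ (c : ℝ) (M : Matrix (Fin n) (Fin n) ℝ) (v : EuclideanSpace ℝ (Fin n)),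
      Matrix.toEuclideanLin (c • M) v = c • Matrix.toEuclideanLin M v := by
    intro c M v; rw [_root_.map_smul, LinearMap.smul_apply]
  have toE_subM : ∀ (M N : Matrix (Fin n) (Fin n) ℝ) (v : EuclideanSpace ℝ (Fin n)),
      Matrix.toEuclideanLin (M - N) v
        = Matrix.toEuclideanLin M v - Matrix.toEuclideanLin N v := by
    intro M N v; rw [map_sub, LinearMap.sub_apply]
  -- closed form for α
  have F1 : ∀ k, α k = astar - Matrix.toEuclideanLin (Wm k) astar := by
    intro k
    induction k with
    | zero => rw [hα0, hW0, toE_one, sub_self]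
    | succ k ih =>
      have hTW : Tm k * Wm k = Wm (k+1) := by
        rw [hWsucc k]; exact ((gT k).commute (gW k)).eq
      have e1 : Matrix.toEuclideanLin (K*K) (α k)
          - Matrix.toEuclideanLin K y
          + lam • Matrix.toEuclideanLin K (α k)
          = Matrix.toEuclideanLin A (α k) - w := by
        rw [toEA, hw_def]; module
      rw [hα k, e1, ih]
      rw [map_sub (Matrix.toEuclideanLin A), hAast]
      have e2 : Matrix.toEuclideanLin (Tm k) (Matrix.toEuclideanLin (Wm k) astar)
          = Matrix.toEuclideanLin (Wm k) astar
            - η k • Matrix.toEuclideanLin A (Matrix.toEuclideanLin (Wm k) astar) := by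
        simp only [hTm_def]
        rw [toE_subM, toE_one, toE_smulM]
      have e3 : astar - Matrix.toEuclideanLin (Wm (k+1)) astar
          = astar - Matrix.toEuclideanLin (Tm k) (Matrix.toEuclideanLin (Wm k) astar) := by
        rw [← hTW, toE_mul]
      rw [e3, e2]
      module
  -- closed form for αhat
  have hBT : ∀ k, (Bm k)⁻¹ * Tm k = 1 - η k • ((Bm k)⁻¹ * Ahat) := by
    intro k
    have e1 : Tm k = Bm k - η k • Ahat := by
      simp only [hTm_def, hBm_def, hAhat_def, hA_def]; module
    rw [e1, mul_sub, Matrix.nonsing_inv_mul _ (hBdet k), mul_smul_comm]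
  have F2 : ∀ k, αhat k = ahstar - Matrix.toEuclideanLin (Qm k * Wm k) ahstar := by
    intro k
    induction k with
    | zero => rw [hαhat0, hQ0, hW0, one_mul, toE_one, sub_self]
    | succ k ih =>
      have hγ' : γ k = η k • (Bm k)⁻¹ := by rw [hγ k]
      have e1 : Matrix.toEuclideanLin (K*K) (αhat k)
          - Matrix.toEuclideanLin K y
          + lamhat • Matrix.toEuclideanLin K (αhat k)
          = Matrix.toEuclideanLin Ahat (αhat k) - w := by
        rw [toEAhat, hw_def]; module
      rw [hαhat k, e1, ih, hγ']
      rw [map_sub (Matrix.toEuclideanLin Ahat), hAhast]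
      have e4 : Qm (k+1) * Wm (k+1) = (Bm k)⁻¹ * Tm k * (Qm k * Wm k) := by
        rw [hQsucc k, hWsucc k]
        exact (mul_shuffle1 ((gBinv k).commute (gQ k)) ((gT k).commute (gQ k))
          ((gT k).commute (gW k))).symm
      have e5 : Matrix.toEuclideanLin (Qm (k+1) * Wm (k+1)) ahstar
          = Matrix.toEuclideanLin (Qm k * Wm k) ahstar
            - η k • Matrix.toEuclideanLin (Bm k)⁻¹
                (Matrix.toEuclideanLin Ahat (Matrix.toEuclideanLin (Qm k * Wm k) ahstar)) := by
        rw [e4, hBT k]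
        simp only [toE_mul, toE_subM, toE_smulM, toE_one]
      have e7 : Matrix.toEuclideanLin (Bm k)⁻¹
          (w - Matrix.toEuclideanLin Ahat (Matrix.toEuclideanLin (Qm k * Wm k) ahstar) - w)
          = - Matrix.toEuclideanLin (Bm k)⁻¹
              (Matrix.toEuclideanLin Ahat (Matrix.toEuclideanLin (Qm k * Wm k) ahstar)) := by
        rw [show w - Matrix.toEuclideanLin Ahat (Matrix.toEuclideanLin (Qm k * Wm k) ahstar) - w
            = -(Matrix.toEuclideanLin Ahat (Matrix.toEuclideanLin (Qm k * Wm k) ahstar)) from by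
              module,
          map_neg]
      rw [e5, toE_smulM, e7]
      module
  -- p in closed form, partial sums
  have hPQ : ∀ k, P k = 1 - Qm (k+1) := by
    intro k; rw [hP k]
  have keyB : ∀ j, 1 - (Bm j)⁻¹ = η j • (Cm * (Bm j)⁻¹) := by
    intro j
    have e1 : (Bm j - 1) * (Bm j)⁻¹ = 1 - (Bm j)⁻¹ := by
      rw [sub_mul, Matrix.mul_nonsing_inv _ (hBdet j), one_mul]
    have e2 : Bm j - 1 = η j • Cm := by
      simp only [hBm_def, hCm_def]; module
    rw [← e1, e2, smul_mul_assoc]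
  have hp' : ∀ i, p i = η i • (Cm * Qm (i+1)) := by
    intro i
    cases i with
    | zero =>
      have hq1 : Qm 1 = (Bm 0)⁻¹ := by rw [hQsucc 0, hQ0, one_mul]
      rw [hp0, hPQ 0, hq1, keyB 0]
    | succ i =>
      have e3 : (1 - Qm (i+1+1)) - (1 - Qm (i+1)) = Qm (i+1) * (1 - (Bm (i+1))⁻¹) := by
        rw [hQsucc (i+1), mul_sub, mul_one]
        abel
      rw [hps i, hPQ (i+1), hPQ i, e3, keyB (i+1), mul_smul_comm]
      congr 1
      rw [hQsucc (i+1)]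
      exact mul_left_comm' ((gQ (i+1)).commute gCm) _
  have hPsum : ∀ k, (∑ i ∈ Finset.range (k+1), p i) = P k := by
    intro k
    induction k with
    | zero => rw [Finset.sum_range_one, hp0]
    | succ k ih => rw [Finset.sum_range_succ, ih, hps k]; abel
  -- telescoping identity
  have G2 : ∀ k, (∑ i ∈ Finset.range (k+1), η i • (Qm (i+1) * Wm i * Ahat))
      = 1 - Qm (k+1) * Wm (k+1) := by
    intro k
    induction k with
    | zero =>
      have h1 : Qm 1 = (Bm 0)⁻¹ := by rw [hQsucc 0, hQ0, one_mul]
      have h2 : Wm 1 = Tm 0 := by rw [hWsucc 0, hW0, one_mul]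
      rw [Finset.sum_range_one, h1, h2, hW0, mul_one, hBT 0, sub_sub_cancel]
    | succ k ih =>
      have c1 : (Qm (k+1) * (Bm (k+1))⁻¹) * (Wm (k+1) * Tm (k+1))
          = (Qm (k+1) * Wm (k+1)) * ((Bm (k+1))⁻¹ * Tm (k+1)) :=
        mul_shuffle2 ((gBinv (k+1)).commute (gW (k+1)))
      have c2 : (Qm (k+1) * Wm (k+1)) * ((Bm (k+1))⁻¹ * Ahat)
          = (Qm (k+1) * (Bm (k+1))⁻¹) * (Wm (k+1) * Ahat) :=
        mul_shuffle2 ((gW (k+1)).commute (gBinv (k+1)))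
      have e1 : Qm (k+1+1) * Wm (k+1+1)
          = Qm (k+1) * Wm (k+1) - η (k+1) • (Qm (k+1+1) * Wm (k+1) * Ahat) := by
        rw [hQsucc (k+1), hWsucc (k+1), c1, hBT (k+1), mul_sub, mul_one, mul_smul_comm, c2,
          ← mul_assoc]
      rw [Finset.sum_range_succ, ih, e1]
      abel
  -- rewriting each summand
  have hQWAhat : ∀ i, Cm * Ahat⁻¹ * (η i • (Qm (i+1) * Wm i * Ahat))
      = η i • (Cm * (Qm (i+1) * Wm i)) := by
    intro i
    rw [mul_smul_comm]
    congr 1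
    have gX : good K (Qm (i+1) * Wm i) := good_mul (gQ (i+1)) (gW i)
    have c1 : Ahat⁻¹ * (Qm (i+1) * Wm i) = (Qm (i+1) * Wm i) * Ahat⁻¹ :=
      (gAhatinv.commute gX).eq
    calc Cm * Ahat⁻¹ * (Qm (i+1) * Wm i * Ahat)
        = Cm * ((Ahat⁻¹ * (Qm (i+1) * Wm i)) * Ahat) := by
          rw [mul_assoc, ← mul_assoc Ahat⁻¹]
      _ = Cm * ((Qm (i+1) * Wm i) * (Ahat⁻¹ * Ahat)) := by rw [c1, mul_assoc]
      _ = Cm * (Qm (i+1) * Wm i) := by rw [Matrix.nonsing_inv_mul _ hAhatdet, mul_one]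
  have hSsum : ∀ k, (∑ i ∈ Finset.range (k+1), Matrix.toEuclideanLin (p i) (α i))
      = Matrix.toEuclideanLin (P k) astar
        - Matrix.toEuclideanLin (Cm * Ahat⁻¹ * (1 - Qm (k+1) * Wm (k+1))) astar := by
    intro k
    have term : ∀ i, Matrix.toEuclideanLin (p i) (α i)
        = Matrix.toEuclideanLin (p i) astar - Matrix.toEuclideanLin (p i * Wm i) astar := by
      intro i; rw [F1 i, map_sub, toE_mul]
    have msum : (∑ i ∈ Finset.range (k+1), (p i * Wm i))
        = Cm * Ahat⁻¹ * (1 - Qm (k+1) * Wm (k+1)) := by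
      rw [← G2 k, Finset.mul_sum]
      apply Finset.sum_congr rfl
      intro i _
      rw [hp' i, smul_mul_assoc, hQWAhat i]
      congr 1
      rw [mul_assoc]
    calc (∑ i ∈ Finset.range (k+1), Matrix.toEuclideanLin (p i) (α i))
        = ∑ i ∈ Finset.range (k+1), (Matrix.toEuclideanLin (p i) astar
            - Matrix.toEuclideanLin (p i * Wm i) astar) :=
          Finset.sum_congr rfl (fun i _ => term i)
      _ = (∑ i ∈ Finset.range (k+1), Matrix.toEuclideanLin (p i) astar)
          - (∑ i ∈ Finset.range (k+1), Matrix.toEuclideanLin (p i * Wm i) astar) :=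
          Finset.sum_sub_distrib _ _
      _ = Matrix.toEuclideanLin (P k) astar
          - Matrix.toEuclideanLin (Cm * Ahat⁻¹ * (1 - Qm (k+1) * Wm (k+1))) astar := by
          rw [← hPsum k, ← msum, map_sum, map_sum]
          simp [LinearMap.sum_apply]
  have hCA : Matrix.toEuclideanLin (Cm * Ahat⁻¹) astar = astar - ahstar := by
    have e2 : Cm = Ahat - A := by simp only [hCm_def, hAhat_def, hA_def]; module
    have e1 : Cm * Ahat⁻¹ = 1 - A * Ahat⁻¹ := by
      rw [e2, sub_mul, Matrix.mul_nonsing_inv _ hAhatdet]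
    have e3 : A * Ahat⁻¹ = Ahat⁻¹ * A := (gA.commute gAhatinv).eq
    rw [e1, toE_subM, toE_one, e3, toE_mul, hAast, hahstar_def]
  -- bound on P k quadratic form and inverse
  have hpow : ∀ k : ℕ, (s⁻¹)^(k+1) ≤ (s⁻¹)^k :=
    fun k => pow_le_pow_of_le_one hr0.le hrle1 (Nat.le_succ k)
  have hpow1 : ∀ k : ℕ, (s⁻¹)^k ≤ 1 := fun k => pow_le_one₀ hr0.le hrle1
  have hpownn : ∀ k : ℕ, (0:ℝ) ≤ (s⁻¹)^k := fun k => pow_nonneg hr0.le k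
  have qP : ∀ k, ∀ x : Fin n → ℝ, (1 - s⁻¹) * (x ⬝ᵥ x) ≤ x ⬝ᵥ (P k) *ᵥ x := by
    intro k x
    have h2 : ∀ v : EuclideanSpace ℝ (Fin n),
        ‖Matrix.toEuclideanLin (Qm (k+1)) v‖ ≤ s⁻¹ * ‖v‖ := by
      intro v
      calc ‖Matrix.toEuclideanLin (Qm (k+1)) v‖ ≤ (s⁻¹)^(k+1) * ‖v‖ := nQ (k+1) v
      _ ≤ s⁻¹ * ‖v‖ := by
          apply mul_le_mul_of_nonneg_right _ (norm_nonneg v)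
          calc (s⁻¹)^(k+1) ≤ (s⁻¹)^1 := pow_le_pow_of_le_one hr0.le hrle1 (by omega)
          _ = s⁻¹ := pow_one _
    have h1 : x ⬝ᵥ (Qm (k+1)) *ᵥ x ≤ s⁻¹ * (x ⬝ᵥ x) := quad_le_of_norm hr0.le h2 x
    have e : x ⬝ᵥ (P k) *ᵥ x = x ⬝ᵥ x - x ⬝ᵥ (Qm (k+1)) *ᵥ x := by
      rw [hPQ k]
      simp [Matrix.sub_mulVec, Matrix.one_mulVec, dotProduct_sub]
    rw [e]; linarith
  have h1r : 0 < 1 - s⁻¹ := by linarith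
  have hPU : ∀ k, IsUnit (P k) := fun k => isUnit_of_quad h1r (qP k)
  have hPdet : ∀ k, IsUnit (P k).det := fun k => (Matrix.isUnit_iff_isUnit_det _).mp (hPU k)
  have nPinv : ∀ k, ∀ u : EuclideanSpace ℝ (Fin n),
      ‖Matrix.toEuclideanLin (P k)⁻¹ u‖ ≤ (1 - s⁻¹)⁻¹ * ‖u‖ := by
    intro k u
    have h1 := norm_ge_of_quad h1r.le (qP k) (Matrix.toEuclideanLin (P k)⁻¹ u)
    rw [← toE_mul, Matrix.mul_nonsing_inv _ (hPdet k), toE_one] at h1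
    rw [inv_mul_eq_div, le_div_iff₀ h1r]
    linarith
  -- the residual identity
  have hδ : ∀ k, (∑ i ∈ Finset.range (k+1), Matrix.toEuclideanLin (p i) (α i))
        - Matrix.toEuclideanLin (P k) (αhat k)
      = - Matrix.toEuclideanLin (Qm (k+1)) astar
        + Matrix.toEuclideanLin (Qm (k+1)) (Matrix.toEuclideanLin (Wm (k+1)) astar)
        - Matrix.toEuclideanLin (Qm (k+1)) (Matrix.toEuclideanLin (Wm (k+1)) ahstar)
        + Matrix.toEuclideanLin (Qm (k+1)) ahstar
        + Matrix.toEuclideanLin (Qm k) (Matrix.toEuclideanLin (Wm k) ahstar)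
        - Matrix.toEuclideanLin (Qm (k+1))
            (Matrix.toEuclideanLin (Qm k) (Matrix.toEuclideanLin (Wm k) ahstar)) := by
    intro k
    have gX : good K (Qm (k+1) * Wm (k+1)) := good_mul (gQ (k+1)) (gW (k+1))
    have gOneX : good K (1 - Qm (k+1) * Wm (k+1)) := good_sub good_one gX
    have gCA : good K (Cm * Ahat⁻¹) := good_mul gCm gAhatinv
    have c1 : Cm * Ahat⁻¹ * (1 - Qm (k+1) * Wm (k+1))
        = (1 - Qm (k+1) * Wm (k+1)) * (Cm * Ahat⁻¹) := (gCA.commute gOneX).eq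
    rw [hSsum k, F2 k, c1, toE_mul, hCA, hPQ k]
    simp only [toE_subM, toE_mul, map_sub, toE_one, LinearMap.add_apply, LinearMap.sub_apply,
      LinearMap.smul_apply, LinearMap.neg_apply, neg_one_smul, neg_smul, one_smul]
    module
  -- norm bound on the residual
  have nδ : ∀ k, ‖(∑ i ∈ Finset.range (k+1), Matrix.toEuclideanLin (p i) (α i))
        - Matrix.toEuclideanLin (P k) (αhat k)‖
      ≤ (2*‖astar‖ + 4*‖ahstar‖) * (s⁻¹)^k := by
    intro k
    rw [hδ k]
    have comp : ∀ (j : ℕ) (v : EuclideanSpace ℝ (Fin n)),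
        ‖Matrix.toEuclideanLin (Qm (j+1)) v‖ ≤ (s⁻¹)^j * ‖v‖ := by
      intro j v
      exact le_trans (nQ (j+1) v) (mul_le_mul_of_nonneg_right (hpow j) (norm_nonneg v))
    have b1 : ‖Matrix.toEuclideanLin (Qm (k+1)) astar‖ ≤ (s⁻¹)^k * ‖astar‖ := comp k astar
    have b2 : ‖Matrix.toEuclideanLin (Qm (k+1)) (Matrix.toEuclideanLin (Wm (k+1)) astar)‖
        ≤ (s⁻¹)^k * ‖astar‖ := by
      refine le_trans (comp k _) ?_
      exact mul_le_mul_of_nonneg_left (nW (k+1) astar) (hpownn k)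
    have b3 : ‖Matrix.toEuclideanLin (Qm (k+1)) (Matrix.toEuclideanLin (Wm (k+1)) ahstar)‖
        ≤ (s⁻¹)^k * ‖ahstar‖ := by
      refine le_trans (comp k _) ?_
      exact mul_le_mul_of_nonneg_left (nW (k+1) ahstar) (hpownn k)
    have b4 : ‖Matrix.toEuclideanLin (Qm (k+1)) ahstar‖ ≤ (s⁻¹)^k * ‖ahstar‖ := comp k ahstar
    have b5 : ‖Matrix.toEuclideanLin (Qm k) (Matrix.toEuclideanLin (Wm k) ahstar)‖
        ≤ (s⁻¹)^k * ‖ahstar‖ := by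
      refine le_trans (nQ k _) ?_
      exact mul_le_mul_of_nonneg_left (nW k ahstar) (hpownn k)
    have b6 : ‖Matrix.toEuclideanLin (Qm (k+1))
          (Matrix.toEuclideanLin (Qm k) (Matrix.toEuclideanLin (Wm k) ahstar))‖
        ≤ (s⁻¹)^k * ‖ahstar‖ := by
      refine le_trans (comp k _) ?_
      refine le_trans (mul_le_mul_of_nonneg_left b5 (hpownn k)) ?_
      have := mul_le_mul_of_nonneg_right (hpow1 k) (mul_nonneg (hpownn k) (norm_nonneg ahstar))
      calc (s⁻¹)^k * ((s⁻¹)^k * ‖ahstar‖) ≤ 1 * ((s⁻¹)^k * ‖ahstar‖) :=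
            mul_le_mul_of_nonneg_right (hpow1 k) (mul_nonneg (hpownn k) (norm_nonneg ahstar))
      _ = (s⁻¹)^k * ‖ahstar‖ := one_mul _
    set a1 := Matrix.toEuclideanLin (Qm (k+1)) astar
    set a2 := Matrix.toEuclideanLin (Qm (k+1)) (Matrix.toEuclideanLin (Wm (k+1)) astar)
    set a3 := Matrix.toEuclideanLin (Qm (k+1)) (Matrix.toEuclideanLin (Wm (k+1)) ahstar)
    set a4 := Matrix.toEuclideanLin (Qm (k+1)) ahstar
    set a5 := Matrix.toEuclideanLin (Qm k) (Matrix.toEuclideanLin (Wm k) ahstar)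
    set a6 := Matrix.toEuclideanLin (Qm (k+1))
      (Matrix.toEuclideanLin (Qm k) (Matrix.toEuclideanLin (Wm k) ahstar))
    calc ‖-a1 + a2 - a3 + a4 + a5 - a6‖
        ≤ ‖-a1 + a2 - a3 + a4 + a5‖ + ‖a6‖ := norm_sub_le _ _
    _ ≤ (‖-a1 + a2 - a3 + a4‖ + ‖a5‖) + ‖a6‖ := by
        have := norm_add_le (-a1 + a2 - a3 + a4) a5
        linarith
    _ ≤ ((‖-a1 + a2 - a3‖ + ‖a4‖) + ‖a5‖) + ‖a6‖ := by
        have := norm_add_le (-a1 + a2 - a3) a4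
        linarith
    _ ≤ (((‖-a1 + a2‖ + ‖a3‖) + ‖a4‖) + ‖a5‖) + ‖a6‖ := by
        have := norm_sub_le (-a1 + a2) a3
        linarith
    _ ≤ ((((‖a1‖ + ‖a2‖) + ‖a3‖) + ‖a4‖) + ‖a5‖) + ‖a6‖ := by
        have h := norm_add_le (-a1) a2
        have h2 : ‖-a1‖ = ‖a1‖ := norm_neg a1
        linarith
    _ ≤ (2*‖astar‖ + 4*‖ahstar‖) * (s⁻¹)^k := by
        have expand : (2*‖astar‖ + 4*‖ahstar‖) * (s⁻¹)^k
            = ((s⁻¹)^k * ‖astar‖) + ((s⁻¹)^k * ‖astar‖) + ((s⁻¹)^k * ‖ahstar‖)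
              + ((s⁻¹)^k * ‖ahstar‖) + ((s⁻¹)^k * ‖ahstar‖) + ((s⁻¹)^k * ‖ahstar‖) := by ring
        rw [expand]
        linarith [b1, b2, b3, b4, b5, b6]
  -- part 3
  have part3 : ∀ k, ‖αhat k - αtil k‖
      ≤ ((1 - s⁻¹)⁻¹ * (2*‖astar‖ + 4*‖ahstar‖) + 1) * (s⁻¹)^k := by
    intro k
    have e1 : αhat k - αtil k
        = Matrix.toEuclideanLin (P k)⁻¹ (Matrix.toEuclideanLin (P k) (αhat k)
            - (∑ i ∈ Finset.range (k+1), Matrix.toEuclideanLin (p i) (α i))) := by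
      rw [hαtil k, map_sub, ← toE_mul, Matrix.nonsing_inv_mul _ (hPdet k), toE_one]
    have e2 : ‖Matrix.toEuclideanLin (P k) (αhat k)
          - (∑ i ∈ Finset.range (k+1), Matrix.toEuclideanLin (p i) (α i))‖
        = ‖(∑ i ∈ Finset.range (k+1), Matrix.toEuclideanLin (p i) (α i))
          - Matrix.toEuclideanLin (P k) (αhat k)‖ := norm_sub_rev _ _
    calc ‖αhat k - αtil k‖
        ≤ (1 - s⁻¹)⁻¹ * ‖Matrix.toEuclideanLin (P k) (αhat k)
            - (∑ i ∈ Finset.range (k+1), Matrix.toEuclideanLin (p i) (α i))‖ := by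
          rw [e1]; exact nPinv k _
    _ ≤ (1 - s⁻¹)⁻¹ * ((2*‖astar‖ + 4*‖ahstar‖) * (s⁻¹)^k) := by
          rw [e2]
          exact mul_le_mul_of_nonneg_left (nδ k) (inv_nonneg.mpr h1r.le)
    _ ≤ ((1 - s⁻¹)⁻¹ * (2*‖astar‖ + 4*‖ahstar‖) + 1) * (s⁻¹)^k := by
          have := hpownn k
          nlinarith
  refine ⟨⟨astar, ?_⟩, ⟨ahstar, ?_⟩,
    ⟨(1 - s⁻¹)⁻¹ * (2*‖astar‖ + 4*‖ahstar‖) + 1, ?_, part3⟩⟩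
  · have hb : ∀ k, ‖α k - astar‖ ≤ ‖astar‖ * ρ^k := by
      intro k
      have e : α k - astar = -(Matrix.toEuclideanLin (Wm k) astar) := by
        rw [F1 k]; module
      rw [e, norm_neg]
      exact le_trans (nWρ k astar) (le_of_eq (mul_comm _ _))
    have h0 : Filter.Tendsto (fun k : ℕ => ‖astar‖ * ρ^k) Filter.atTop (nhds 0) := by
      have h1 := (tendsto_pow_atTop_nhds_zero_of_lt_one hρ0 hρ1).const_mul ‖astar‖
      simpa using h1
    have h2 : Filter.Tendsto (fun k => α k - astar) Filter.atTop (nhds 0) :=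
      squeeze_zero_norm hb h0
    have h3 := h2.add_const astar
    simpa using h3
  · have hb : ∀ k, ‖αhat k - ahstar‖ ≤ ‖ahstar‖ * (s⁻¹)^k := by
      intro k
      have e : αhat k - ahstar = -(Matrix.toEuclideanLin (Qm k * Wm k) ahstar) := by
        rw [F2 k]; module
      rw [e, norm_neg, toE_mul]
      calc ‖Matrix.toEuclideanLin (Qm k) (Matrix.toEuclideanLin (Wm k) ahstar)‖
          ≤ (s⁻¹)^k * ‖Matrix.toEuclideanLin (Wm k) ahstar‖ := nQ k _
      _ ≤ (s⁻¹)^k * ‖ahstar‖ := mul_le_mul_of_nonneg_left (nW k ahstar) (hpownn k)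
      _ = ‖ahstar‖ * (s⁻¹)^k := mul_comm _ _
    have h0 : Filter.Tendsto (fun k : ℕ => ‖ahstar‖ * (s⁻¹)^k) Filter.atTop (nhds 0) := by
      have h1 := (tendsto_pow_atTop_nhds_zero_of_lt_one hr0.le hr1).const_mul ‖ahstar‖
      simpa using h1
    have h2 : Filter.Tendsto (fun k => αhat k - ahstar) Filter.atTop (nhds 0) :=
      squeeze_zero_norm hb h0
    have h3 := h2.add_const ahstar
    simpa using h3
  · positivity
end

section
/- Let Σ ∈ ℝ^{d×d} be symmetric positive semi-definite, a ∈ ℝ^d, Q ∈ ℝ^{d×d} symmetric positive definite, and λ > 0. Let positive learning rates satisfy 1 − λγ_k = γ_k/η_k for all k. Define the preconditioned GD iterates w_{k+1} = w_k − η_k Q^{−1}(Σ w_k − a), w_0 = 0, and the regularized preconditioned GD iterates ŵ_{k+1} = ŵ_k − γ_k Q^{−1}((Σ + λQ)ŵ_k − a), ŵ_0 = 0. Define the weighting scheme P_k = 1 − ∏_{i=0}^{k}(γ_i/η_i), p_0 = P_0, p_k = P_k − P_{k−1}, and the averaged iterate w̃_k = P_k^{−1} ∑_{i=0}^{k} p_i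 w_i. Then for every k ≥ 0, P_k · w̃_k = ŵ_k − (1 − P_k) · w_k. -/
/-- Theorem 3 (PSGD), part 1, expectation form: the averaged preconditioned GD path on
the quadratic loss equals the generalized-ℓ2-regularized preconditioned GD path. -/
theorem averaged_pgd_equals_regularized_pgd
    (d : ℕ) (S : Matrix (Fin d) (Fin d) ℝ) (hS : S.PosSemidef)
    (a : Fin d → ℝ)
    (Q : Matrix (Fin d) (Fin d) ℝ) (hQ : Q.PosDef)
    (lam : ℝ) (hlam : 0 < lam)
    (η γ : ℕ → ℝ) (hη : ∀ k, 0 < η k) (hγ : ∀ k, 0 < γ k)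
    (hrate : ∀ k, 1 - lam * γ k = γ k / η k)
    (w what : ℕ → Fin d → ℝ)
    (hw0 : w 0 = 0) (hwhat0 : what 0 = 0)
    (hw : ∀ k, w (k + 1) = w k - η k • Q⁻¹.mulVec (S.mulVec (w k) - a))
    (hwhat : ∀ k, what (k + 1)
      = what k - γ k • Q⁻¹.mulVec ((S + lam • Q).mulVec (what k) - a))
    (P p : ℕ → ℝ)
    (hP : ∀ k, P k = 1 - ∏ i ∈ Finset.range (k + 1), (γ i / η i))
    (hp0 : p 0 = P 0) (hps : ∀ k, p (k + 1) = P (k + 1) - P k)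
    (wtil : ℕ → Fin d → ℝ)
    (hwtil : ∀ k, wtil k = (P k)⁻¹ • ∑ i ∈ Finset.range (k + 1), p i • w i) :
    ∀ k, P k • wtil k = what k - (1 - P k) • w k := by
  -- notation
  set M : (Fin d → ℝ) → (Fin d → ℝ) := fun v => Q⁻¹.mulVec (S.mulVec v) with hM
  set b : Fin d → ℝ := Q⁻¹.mulVec a with hb
  have hdet : IsUnit Q.det := (Ne.isUnit hQ.det_pos.ne')
  have hQQ : ∀ v : Fin d → ℝ, Q⁻¹.mulVec (Q.mulVec v) = v := by
    intro v
    rw [Matrix.mulVec_mulVec, Matrix.nonsing_inv_mul Q hdet, Matrix.one_mulVec]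
  have Msub : ∀ x y : Fin d → ℝ, M (x - y) = M x - M y := by
    intro x y; simp [hM, Matrix.mulVec_sub]
  have Msmul : ∀ (s : ℝ) (x : Fin d → ℝ), M (s • x) = s • M x := by
    intro s x; simp [hM, Matrix.mulVec_smul]
  have hw' : ∀ k, w (k + 1) = w k - η k • (M (w k) - b) := by
    intro k; rw [hw k, Matrix.mulVec_sub]
  have hwhat' : ∀ k, what (k + 1) = what k - γ k • (M (what k) + lam • what k - b) := by
    intro k
    rw [hwhat k, Matrix.mulVec_sub, Matrix.add_mulVec, Matrix.mulVec_add,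
      Matrix.smul_mulVec, Matrix.mulVec_smul, hQQ]
  -- scalar sequence r
  set r : ℕ → ℝ := fun k => ∏ i ∈ Finset.range k, (γ i / η i) with hr
  have hr0 : r 0 = 1 := by simp [hr]
  have hrsucc : ∀ k, r (k + 1) = r k * (γ k / η k) := by
    intro k; simp only [hr]; rw [Finset.prod_range_succ]
  have hγη : ∀ k, γ k = η k * (1 - lam * γ k) := by
    intro k
    have hne := (hη k).ne'
    rw [hrate k]
    field_simp
  have h1 : ∀ k, r (k + 1) = r k * (1 - lam * γ k) := by
    intro k; rw [hrsucc k, hrate k]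
  have key1 : ∀ k, γ k * r k = η k * r (k + 1) := by
    intro k
    rw [h1 k]
    calc γ k * r k = (η k * (1 - lam * γ k)) * r k := by rw [← hγη k]
      _ = η k * (r k * (1 - lam * γ k)) := by ring
  have hck : ∀ k, 0 < γ k / η k ∧ γ k / η k < 1 := by
    intro k
    constructor
    · exact div_pos (hγ k) (hη k)
    · rw [← hrate k]; nlinarith [hlam, hγ k]
  have hrpos : ∀ k, 0 < r k ∧ r k ≤ 1 := by
    intro k
    induction k with
    | zero => simp [hr0]
    | succ n ih =>
      rw [hrsucc n]
      constructor
      · exact mul_pos ih.1 (hck n).1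
      · nlinarith [(hck n).1, (hck n).2, ih.1, ih.2]
  have hrlt : ∀ k, r (k + 1) < 1 := by
    intro k
    rw [hrsucc k]
    nlinarith [(hck k).1, (hck k).2, (hrpos k).1, (hrpos k).2]
  have hPr : ∀ k, P k = 1 - r (k + 1) := by intro k; rw [hP k]
  have hPpos : ∀ k, 0 < P k := by intro k; rw [hPr k]; linarith [hrlt k]
  have hpk : ∀ k, p (k + 1) = r (k + 1) - r (k + 2) := by
    intro k; rw [hps k, hPr k, hPr (k + 1)]; ring
  -- combined induction
  have main : ∀ k, (∑ i ∈ Finset.range (k + 1), p i • w i) = what k - r (k + 1) • w k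
      ∧ M (what k) + lam • what k = r k • M (w k) + (1 - r k) • b := by
    intro k
    induction k with
    | zero =>
      constructor
      · simp [hw0, hwhat0]
      · have : M (0 : Fin d → ℝ) = 0 := by simp [hM, Matrix.mulVec_zero]
        simp [hw0, hwhat0, hr0, this]
    | succ n ih =>
      obtain ⟨ih1, ih2⟩ := ih
      -- step A
      have stepA : what (n + 1) = what n - (γ n * r n) • (M (w n) - b) := by
        rw [hwhat' n, ih2]
        module
      have key := key1 n
      have h1n := h1 n
      constructor
      · have hnn : r (n + 1 + 1) = r (n + 2) := rfl
        rw [Finset.sum_range_succ, ih1, hpk n, stepA, hw' n, hnn]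
        match_scalars <;>
          first
            | ring1
            | linear_combination key
            | linear_combination -key
            | linear_combination h1n
            | linear_combination -h1n
      · have hMw1 : M (w (n + 1)) = M (w n) - η n • (M (M (w n)) - M b) := by
          rw [hw' n, Msub, Msmul, Msub]
        have hMwhat1 : M (what (n + 1))
            = M (what n) - (γ n * r n) • (M (M (w n)) - M b) := by
          rw [stepA, Msub, Msmul, Msub]
        have hM2 : M (what n) = r n • M (w n) + (1 - r n) • b - lam • what n :=
          eq_sub_of_add_eq ih2
        rw [hMwhat1, hMw1, stepA, hM2]
        match_scalars <;>
          first
            | ring1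
            | linear_combination key
            | linear_combination -key
            | linear_combination h1n
            | linear_combination -h1n
  intro k
  rw [hwtil k, smul_inv_smul₀ (hPpos k).ne', (main k).1, hPr k]
  module
end

section
/- Let Σ ∈ ℝ^{d×d} be symmetric with αI ⪯ Σ ⪯ βI, 0 < α ≤ β, a ∈ ℝ^d, λ > 0, η ∈ (0, 1/β), and γ = η/(1+λη) (so 1 − λγ = γ/η). Define Nesterov's accelerated GD iterates w_{k+1} = (1+τ)(I − ηΣ)w_k − τ(I − ηΣ)w_{k−1} + ηa with w_0 = w_1 = 0 and τ = (1−√(ηα))/(1+√(ηα)), and the regularized iterates ŵ_{k+1} = (1+τ̂)(I − γ(Σ+λI))ŵ_k − τ̂(I − γ(Σ+λI))ŵ_{k−1} + γa with ŵ_0 = ŵ_1 = 0 and τ̂ = (1−√(γ(α+λ)))/(1+√(γ(α+λ))). Define the weighting scheme P_k = 1 − (γ/η)((1−√(γ(α+λ)))/(1−√(ηα)))^{k−1} for k ≥ 1, with p_1 = P_1 and p_k = P_k − P_{k−1} for k ≥ 2, and the averaged iterate w̃_k = P_k^{−1}∑_{i=1}^{k} p_i w_i. Then for every k ≥ 1,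 P_k · w̃_k = ŵ_k − (1 − P_k) · w_k. -/
set_option maxHeartbeats 1000000


/-- Theorem 4, part 1, expectation (deterministic) form: the averaged Nesterov
accelerated GD path on the quadratic loss equals the ℓ2-regularized Nesterov path. -/
theorem averaged_nesterov_gd
    (d : ℕ) (S : Matrix (Fin d) (Fin d) ℝ)
    (α β : ℝ) (hα : 0 < α) (hαβ : α ≤ β)
    (hlower : (S - α • (1 : Matrix (Fin d) (Fin d) ℝ)).PosSemidef)
    (hupper : ((β • (1 : Matrix (Fin d) (Fin d) ℝ)) - S).PosSemidef)
    (a : Fin d → ℝ) (lam : ℝ) (hlam : 0 < lam)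
    (η γ : ℝ) (hηpos : 0 < η) (hηub : η < 1 / β)
    (hγ : γ = η / (1 + lam * η))
    (τ τhat : ℝ)
    (hτ : τ = (1 - Real.sqrt (η * α)) / (1 + Real.sqrt (η * α)))
    (hτhat : τhat = (1 - Real.sqrt (γ * (α + lam))) / (1 + Real.sqrt (γ * (α + lam))))
    (w what : ℕ → Fin d → ℝ)
    (hw0 : w 0 = 0) (hw1 : w 1 = 0) (hwhat0 : what 0 = 0) (hwhat1 : what 1 = 0)
    (hw : ∀ k, w (k + 2)
      = (1 + τ) • ((1 - η • S).mulVec (w (k + 1)))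
        - τ • ((1 - η • S).mulVec (w k)) + η • a)
    (hwhat : ∀ k, what (k + 2)
      = (1 + τhat) • ((1 - γ • (S + lam • (1 : Matrix (Fin d) (Fin d) ℝ))).mulVec
            (what (k + 1)))
        - τhat • ((1 - γ • (S + lam • (1 : Matrix (Fin d) (Fin d) ℝ))).mulVec (what k))
        + γ • a)
    (P p : ℕ → ℝ)
    (hP : ∀ k, 1 ≤ k → P k
      = 1 - (γ / η) * ((1 - Real.sqrt (γ * (α + lam))) / (1 - Real.sqrt (η * α))) ^ (k - 1))
    (hp1 : p 1 = P 1) (hps : ∀ k, 1 ≤ k → p (k + 1) = P (k + 1) - P k)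
    (wtil : ℕ → Fin d → ℝ)
    (hwtil : ∀ k, wtil k = (P k)⁻¹ • ∑ i ∈ Finset.Icc 1 k, p i • w i) :
    ∀ k, 1 ≤ k → P k • wtil k = what k - (1 - P k) • w k := by
  have hβ : 0 < β := lt_of_lt_of_le hα hαβ
  have hηβ : η * β < 1 := by
    have h := (lt_div_iff₀ hβ).mp hηub
    nlinarith
  have hηα1 : η * α < 1 := lt_of_le_of_lt (by nlinarith) hηβ
  have hden : 0 < 1 + lam * η := by nlinarith
  have hγpos : 0 < γ := by rw [hγ]; positivity
  have hkey : γ * (1 + lam * η) = η := by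
    rw [hγ]; field_simp
  set s : ℝ := Real.sqrt (η * α) with hs
  set t : ℝ := Real.sqrt (γ * (α + lam)) with ht
  have hs0 : 0 ≤ s := Real.sqrt_nonneg _
  have ht0 : 0 ≤ t := Real.sqrt_nonneg _
  have hs2 : s ^ 2 = η * α := Real.sq_sqrt (by positivity)
  have hγαlam : γ * (α + lam) < 1 := by nlinarith
  have ht2 : t ^ 2 = γ * (α + lam) := Real.sq_sqrt (by positivity)
  have hs1 : s < 1 := by
    nlinarith [hs2, hs0]
  have ht1 : t < 1 := by
    nlinarith [ht2, ht0]
  have hst : s < t := by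
    have hdiff : t ^ 2 - s ^ 2 = γ * lam * (1 - η * α) := by
      rw [hs2, ht2]; linear_combination α * hkey
    have hpos : (0:ℝ) < γ * lam * (1 - η * α) := by
      have : (0:ℝ) < 1 - η * α := by linarith
      positivity
    have h2 : s ^ 2 < t ^ 2 := by nlinarith [hpos]
    nlinarith
  set c : ℝ := γ / η with hc
  set r : ℝ := (1 - t) / (1 - s) with hr
  have hηne : η ≠ 0 := ne_of_gt hηpos
  have h1s : (0:ℝ) < 1 - s := by linarith
  have h1t : (0:ℝ) < 1 - t := by linarith
  have h1s' : (0:ℝ) < 1 + s := by linarith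
  have h1t' : (0:ℝ) < 1 + t := by linarith
  -- key scalar identity
  have K : η * (1 - t ^ 2) = γ * (1 - s ^ 2) := by
    rw [hs2, ht2]; linear_combination (-1 : ℝ) * hkey
  have hτ1 : 1 + τ = 2 / (1 + s) := by
    rw [hτ]; field_simp; ring
  have hτhat1 : 1 + τhat = 2 / (1 + t) := by
    rw [hτhat]; field_simp; ring
  have C1 : r * (1 + τ) = c * (1 + τhat) := by
    rw [hτ1, hτhat1, hr, hc, div_mul_div_comm, div_mul_div_comm,
      div_eq_div_iff (by positivity) (by positivity)]
    linear_combination 2 * K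
  have C2 : r ^ 2 * τ = c * τhat := by
    rw [hr, hc, hτ, hτhat, div_pow, div_mul_div_comm, div_mul_div_comm,
      div_eq_div_iff (by positivity) (by positivity)]
    linear_combination ((1 - t) * (1 - s)) * K
  -- matrix identity
  have hcη : c * η = γ := by rw [hc]; field_simp
  have hγlam : γ * lam = 1 - c := by
    rw [eq_sub_iff_add_eq, hc]
    field_simp
    linarith [hkey]
  set A : Matrix (Fin d) (Fin d) ℝ := 1 - η • S with hA
  have hB : (1 : Matrix (Fin d) (Fin d) ℝ) - γ • (S + lam • 1) = c • A := by
    rw [hA]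
    have h1 : c • ((1 : Matrix (Fin d) (Fin d) ℝ) - η • S) = c • 1 - γ • S := by
      rw [smul_sub, smul_smul, hcη]
    have h2 : (1 : Matrix (Fin d) (Fin d) ℝ) - γ • (S + lam • 1) = c • 1 - γ • S := by
      rw [smul_add, smul_smul, hγlam, sub_smul, one_smul]
      abel
    rw [h1, h2]
  have hBmul : ∀ v : Fin d → ℝ,
      ((1 : Matrix (Fin d) (Fin d) ℝ) - γ • (S + lam • 1)).mulVec v
        = c • (A.mulVec v) := by
    intro v; rw [hB, Matrix.smul_mulVec]
  -- difference recursions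
  have hwd : ∀ k, w (k + 3) - w (k + 2)
      = (1 + τ) • A.mulVec (w (k + 2) - w (k + 1))
        - τ • A.mulVec (w (k + 1) - w k) := by
    intro k
    rw [show k + 3 = (k + 1) + 2 from rfl, hw (k + 1), hw k]
    simp only [Matrix.mulVec_sub, smul_sub]
    abel
  have hwhatd : ∀ k, what (k + 3) - what (k + 2)
      = (1 + τhat) • (c • A.mulVec (what (k + 2) - what (k + 1)))
        - τhat • (c • A.mulVec (what (k + 1) - what k)) := by
    intro k
    rw [show k + 3 = (k + 1) + 2 from rfl, hwhat (k + 1), hwhat k]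
    simp only [hBmul, Matrix.mulVec_sub, smul_sub]
    abel
  -- initial iterates
  have hw2 : w 2 = η • a := by
    rw [show (2:ℕ) = 0 + 2 from rfl, hw 0, hw0, hw1]
    simp
  have hwhat2 : what 2 = γ • a := by
    rw [show (2:ℕ) = 0 + 2 from rfl, hwhat 0, hwhat0, hwhat1]
    simp
  -- the central claim
  have Qmain : ∀ k, what (k + 2) - what (k + 1) = (c * r ^ k) • (w (k + 2) - w (k + 1)) := by
    have base0 : what 2 - what 1 = (c * r ^ 0) • (w 2 - w 1) := by
      rw [hw1, hwhat1, hw2, hwhat2]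
      simp only [sub_zero, pow_zero, mul_one, smul_smul, hcη]
    have base1 : what 3 - what 2 = (c * r ^ 1) • (w 3 - w 2) := by
      have e1 : what 3 - what 2 = ((1 + τhat) * (c * γ)) • A.mulVec a := by
        rw [show (3:ℕ) = 0 + 3 from rfl, hwhatd 0, hwhat1, hwhat0, hwhat2]
        simp [Matrix.mulVec_smul, smul_smul]
      have e2 : w 3 - w 2 = ((1 + τ) * η) • A.mulVec a := by
        rw [show (3:ℕ) = 0 + 3 from rfl, hwd 0, hw1, hw0, hw2]
        simp [Matrix.mulVec_smul, smul_smul]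
      rw [e1, e2, smul_smul]
      congr 1
      linear_combination (-(c * η)) * C1 - (c * (1 + τhat)) * hcη
    have step : ∀ n,
        what (n + 2) - what (n + 1) = (c * r ^ n) • (w (n + 2) - w (n + 1)) →
        what (n + 3) - what (n + 2) = (c * r ^ (n + 1)) • (w (n + 3) - w (n + 2)) →
        what (n + 4) - what (n + 3) = (c * r ^ (n + 2)) • (w (n + 4) - w (n + 3)) := by
      intro n ih0 ih1
      have := hwhatd (n + 1)
      rw [show n + 1 + 3 = n + 4 from rfl, show n + 1 + 2 = n + 3 from rfl,
        show n + 1 + 1 = n + 2 from rfl] at this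
      have hwd' := hwd (n + 1)
      rw [show n + 1 + 3 = n + 4 from rfl, show n + 1 + 2 = n + 3 from rfl,
        show n + 1 + 1 = n + 2 from rfl] at hwd'
      rw [this, ih0, ih1, hwd']
      simp only [Matrix.mulVec_smul]
      match_scalars
      · linear_combination (-(c * r ^ (n + 1))) * C1
      · linear_combination (c * r ^ n) * C2
    have both : ∀ n, (what (n + 2) - what (n + 1) = (c * r ^ n) • (w (n + 2) - w (n + 1)))
        ∧ (what (n + 3) - what (n + 2) = (c * r ^ (n + 1)) • (w (n + 3) - w (n + 2))) := by
      intro n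
      induction n with
      | zero => exact ⟨base0, base1⟩
      | succ m ih => exact ⟨ih.2, step m ih.1 ih.2⟩
    intro k
    exact (both k).1
  -- P facts
  have hP' : ∀ m : ℕ, P (m + 1) = 1 - c * r ^ m := by
    intro m
    have := hP (m + 1) (by omega)
    simpa [hc, hr, hs, ht] using this
  have hkey' : γ + γ * lam * η = η := by linear_combination hkey
  have hc1 : c < 1 := by
    rw [hc, div_lt_one hηpos]
    have : 0 < γ * lam * η := by positivity
    linarith
  have hc0 : 0 < c := by rw [hc]; positivity
  have hr0 : 0 ≤ r := by positivity
  have hr1 : r < 1 := by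
    rw [hr, div_lt_one h1s]; linarith
  have hPpos : ∀ m : ℕ, 0 < P (m + 1) := by
    intro m
    rw [hP' m]
    have h1 : r ^ m ≤ 1 := pow_le_one₀ hr0 (le_of_lt hr1)
    have h2 : c * r ^ m ≤ c := by nlinarith [pow_nonneg hr0 m]
    linarith
  -- summation identity
  have hsum : ∀ m : ℕ, ∑ i ∈ Finset.Icc 1 (m + 1), p i • w i
      = what (m + 1) - (1 - P (m + 1)) • w (m + 1) := by
    intro m
    induction m with
    | zero =>
      simp [hw1, hwhat1]
    | succ n ih =>
      rw [Finset.sum_Icc_succ_top (by omega : 1 ≤ n + 1 + 1), ih,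
        hps (n + 1) (by omega)]
      have key : what (n + 2) - what (n + 1) = (1 - P (n + 1)) • (w (n + 2) - w (n + 1)) := by
        rw [hP' n, show (1:ℝ) - (1 - c * r ^ n) = c * r ^ n by ring]
        exact Qmain n
      have h1 : (P (n + 2) - P (n + 1)) • w (n + 2)
          = (1 - P (n + 1)) • w (n + 2) - (1 - P (n + 2)) • w (n + 2) := by
        rw [← sub_smul]; congr 1; ring
      rw [smul_sub] at key
      rw [h1]
      have key' : what (n + 2) = what (n + 1) + (1 - P (n + 1)) • w (n + 2)
          - (1 - P (n + 1)) • w (n + 1) := by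
        have := key
        linear_combination (norm := module) this
      rw [key']
      abel
  -- conclusion
  intro k hk
  obtain ⟨m, rfl⟩ : ∃ m, k = m + 1 := ⟨k - 1, by omega⟩
  rw [hwtil, smul_smul, mul_inv_cancel₀ (ne_of_gt (hPpos m)), one_smul]
  exact hsum m
end

section
/- Let f: ℝ → ℝ be differentiable, α-strongly convex and β-smooth with 0 < α ≤ β, with unique minimizer x_* > 0, and set b = −f'(0). Suppose 1/(2β−α) < η < 1/β and 0 < γ < η/(η(β−α)+1), and define λ₁ = 1/γ − 1/η + β − α and λ₂ = 1/γ − 1/η + α − β (both positive). Define: the GD path x_{k+1} = x_k − η f'(x_k), x_0 = 0; for each λ ∈ {λ₁, λ₂} the regularized GD path x̂_{k+1,λ} = x̂_{k,λ} − γ(f'(x̂_{k,λ}) + λ x̂_{k,λ}), x̂_{0,λ} = 0; the linear comparison paths u_{k+1} = u_k − η(α u_k − b) and v_{k+1} = v_k − η(β v_k − b) with u_0 = v_0 = 0; the weighting scheme P_k = 1 − (γ/η)^{k+1} with p_0 = P_0, p_k = P_k − P_{k−1}; and the averages x̃_k = P_k^{−1}∑_{i=0}^{k} p_i x_i, ũ_k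 = P_k^{−1}∑_{i=0}^{k} p_i u_i, ṽ_k = P_k^{−1}∑_{i=0}^{k} p_i v_i. Then for every k ≥ 0: x̂_{k,λ₁} + (1−P_k)(ṽ_k − v_k) ≤ x̃_k ≤ x̂_{k,λ₂} + (1−P_k)(ũ_k − u_k). -/
set_option maxHeartbeats 1000000 in
/-- Theorem 5, part 1 (one-dimensional form): the averaged GD path on a strongly convex
and smooth loss is sandwiched between two ℓ2-regularized GD paths. -/
theorem averaged_gd_sandwich
    (f : ℝ → ℝ) (hdiff : Differentiable ℝ f)
    (α β : ℝ) (hα : 0 < α) (hαβ : α ≤ β)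
    (hconv : ∀ x y : ℝ, α * (x - y) ^ 2 ≤ (deriv f x - deriv f y) * (x - y))
    (hsmooth : ∀ x y : ℝ, (deriv f x - deriv f y) * (x - y) ≤ β * (x - y) ^ 2)
    (xstar : ℝ) (hmin : ∀ x, f xstar ≤ f x) (hxstar : 0 < xstar)
    (b : ℝ) (hb : b = -deriv f 0)
    (η γ : ℝ)
    (hηlb : 1 / (2 * β - α) < η) (hηub : η < 1 / β)
    (hγpos : 0 < γ) (hγub : γ < η / (η * (β - α) + 1))
    (lam₁ lam₂ : ℝ)
    (hlam₁ : lam₁ = 1 / γ - 1 / η + β - α)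
    (hlam₂ : lam₂ = 1 / γ - 1 / η + α - β)
    (x xh₁ xh₂ u v : ℕ → ℝ)
    (hx0 : x 0 = 0) (hx : ∀ k, x (k + 1) = x k - η * deriv f (x k))
    (hxh₁0 : xh₁ 0 = 0)
    (hxh₁ : ∀ k, xh₁ (k + 1) = xh₁ k - γ * (deriv f (xh₁ k) + lam₁ * xh₁ k))
    (hxh₂0 : xh₂ 0 = 0)
    (hxh₂ : ∀ k, xh₂ (k + 1) = xh₂ k - γ * (deriv f (xh₂ k) + lam₂ * xh₂ k))
    (hu0 : u 0 = 0) (hu : ∀ k, u (k + 1) = u k - η * (α * u k - b))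
    (hv0 : v 0 = 0) (hv : ∀ k, v (k + 1) = v k - η * (β * v k - b))
    (P p : ℕ → ℝ)
    (hP : ∀ k, P k = 1 - (γ / η) ^ (k + 1))
    (hp0 : p 0 = P 0) (hps : ∀ k, p (k + 1) = P (k + 1) - P k)
    (xtil util vtil : ℕ → ℝ)
    (hxtil : ∀ k, xtil k = (P k)⁻¹ * ∑ i ∈ Finset.range (k + 1), p i * x i)
    (hutil : ∀ k, util k = (P k)⁻¹ * ∑ i ∈ Finset.range (k + 1), p i * u i)
    (hvtil : ∀ k, vtil k = (P k)⁻¹ * ∑ i ∈ Finset.range (k + 1), p i * v i) :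
    ∀ k, xh₁ k + (1 - P k) * (vtil k - v k) ≤ xtil k ∧
      xtil k ≤ xh₂ k + (1 - P k) * (util k - u k) := by
  -- basic positivity facts
  have hβ : 0 < β := lt_of_lt_of_le hα hαβ
  have h2βα : 0 < 2 * β - α := by linarith
  have hη : 0 < η := lt_trans (one_div_pos.mpr h2βα) hηlb
  have hηβ : η * β < 1 := by
    have h := (lt_div_iff₀ hβ).mp hηub
    linarith
  have hηα1 : η * α < 1 := by
    have h := mul_le_mul_of_nonneg_left hαβ hη.le
    linarith
  have hdpos : (0:ℝ) < η * (β - α) + 1 := by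
    have h := mul_nonneg hη.le (sub_nonneg.mpr hαβ)
    linarith
  have hγη : γ < η := lt_of_lt_of_le hγub (by
    apply div_le_self hη.le
    have h := mul_nonneg hη.le (sub_nonneg.mpr hαβ)
    linarith)
  have h1 : γ * (η * (β - α) + 1) < η := (lt_div_iff₀ hdpos).mp hγub
  set q : ℝ := γ / η with hqdef
  have hq0 : 0 < q := div_pos hγpos hη
  have hq1 : q < 1 := (div_lt_one hη).mpr hγη
  have hqη : q * η = γ := by
    rw [hqdef]; field_simp
  have hkey : γ * (β - α) + q < 1 := by
    have h2 : q < 1 - γ * (β - α) := by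
      rw [hqdef, div_lt_iff₀ hη]
      nlinarith only [h1, hγpos, hη]
    linarith
  have hkey2 : q * η * (β - α) ≤ 1 - q := by rw [hqη]; linarith
  have hra0 : 0 < 1 - η * α := by linarith
  have hrb0 : 0 < 1 - η * β := by linarith
  have hra1 : 1 - η * α < 1 := by
    have h := mul_pos hη hα
    linarith
  have hrb1 : 1 - η * β < 1 := by
    have h := mul_pos hη hβ
    linarith
  have hqra1 : q * (1 - η * α) < 1 := by
    have h := mul_lt_mul_of_pos_left hra1 hq0
    linarith
  have hqrb1 : q * (1 - η * β) < 1 := by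
    have h := mul_lt_mul_of_pos_left hrb1 hq0
    linarith
  have hqra0 : 0 < 1 - q * (1 - η * α) := by linarith
  have hqrb0 : 0 < 1 - q * (1 - η * β) := by linarith
  -- derivative facts
  have hd0 : deriv f 0 = -b := by rw [hb]; ring
  have hds : deriv f xstar = 0 := by
    have hloc : IsLocalMin f xstar := Filter.Eventually.of_forall fun y => hmin y
    exact hloc.deriv_eq_zero
  have hb0 : 0 < b := by
    have h := hconv xstar 0
    rw [hds, hd0] at h
    nlinarith only [h, hxstar, mul_pos hα (mul_pos hxstar hxstar)]
  have hgub : ∀ z : ℝ, 0 ≤ z → deriv f z ≤ β * z - b := by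
    intro z hz
    rcases hz.eq_or_lt with h | h
    · rw [← h, hd0]; norm_num
    · have hs := hsmooth z 0
      rw [hd0] at hs
      nlinarith only [hs, h]
  have hglb : ∀ z : ℝ, 0 ≤ z → α * z - b ≤ deriv f z := by
    intro z hz
    rcases hz.eq_or_lt with h | h
    · rw [← h, hd0]; norm_num
    · have hs := hconv z 0
      rw [hd0] at hs
      nlinarith only [hs, h]
  -- auxiliary sequences
  set y : ℕ → ℝ := fun k => -(q * η) * ∑ i ∈ Finset.range k, q ^ i * deriv f (x i) with hydef
  set w : ℕ → ℝ := fun k => -(q * η) * ∑ i ∈ Finset.range k, q ^ i * (α * u i - b) with hwdef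
  set wb : ℕ → ℝ := fun k => -(q * η) * ∑ i ∈ Finset.range k, q ^ i * (β * v i - b) with hwbdef
  have hy0 : y 0 = 0 := by simp [hydef]
  have hw0 : w 0 = 0 := by simp [hwdef]
  have hwb0 : wb 0 = 0 := by simp [hwbdef]
  have hystep : ∀ k, y (k + 1) = y k - q * η * q ^ k * deriv f (x k) := by
    intro k; simp only [hydef, Finset.sum_range_succ]; ring
  have hwstep : ∀ k, w (k + 1) = w k - q * η * q ^ k * (α * u k - b) := by
    intro k; simp only [hwdef, Finset.sum_range_succ]; ring
  have hwbstep : ∀ k, wb (k + 1) = wb k - q * η * q ^ k * (β * v k - b) := by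
    intro k; simp only [hwbdef, Finset.sum_range_succ]; ring
  -- recursions for regularized paths in polynomial form
  have hγlam₂ : γ * lam₂ = 1 - q + γ * (α - β) := by
    rw [hlam₂, hqdef]; field_simp; ring
  have hγlam₁ : γ * lam₁ = 1 - q + γ * (β - α) := by
    rw [hlam₁, hqdef]; field_simp; ring
  have hxh₂' : ∀ k, xh₂ (k + 1) =
      xh₂ k - q * η * deriv f (xh₂ k) - (1 - q + q * η * (α - β)) * xh₂ k := by
    intro k; rw [hxh₂ k]
    have h := hγlam₂
    rw [← hqη] at h ⊢
    linear_combination (-(xh₂ k)) * h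
  have hxh₁' : ∀ k, xh₁ (k + 1) =
      xh₁ k - q * η * deriv f (xh₁ k) - (1 - q + q * η * (β - α)) * xh₁ k := by
    intro k; rw [hxh₁ k]
    have h := hγlam₁
    rw [← hqη] at h ⊢
    linear_combination (-(xh₁ k)) * h
  -- main induction
  have main : ∀ k,
      0 ≤ x k ∧ v k ≤ x k ∧ x k ≤ u k ∧
      α * u k = b * (1 - (1 - η * α) ^ k) ∧
      β * v k = b * (1 - (1 - η * β) ^ k) ∧
      (1 - q * (1 - η * α)) * w k = q * η * b * (1 - q ^ k * (1 - η * α) ^ k) ∧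
      (1 - q * (1 - η * β)) * wb k = q * η * b * (1 - q ^ k * (1 - η * β) ^ k) ∧
      q ^ k * (u k - x k) ≤ w k - y k ∧
      q ^ k * (x k - v k) ≤ y k - wb k ∧
      w k ≤ xh₂ k ∧
      0 ≤ xh₁ k ∧
      xh₁ k ≤ wb k ∧
      0 ≤ (1 - q ^ (k + 1)) * xh₂ k + q ^ (k + 1) * (w k + x k - u k) - y k ∧
      0 ≤ y k - (1 - q ^ (k + 1)) * xh₁ k - q ^ (k + 1) * (wb k + x k - v k) := by
    intro k
    induction k with
    | zero =>
      simp [hx0, hu0, hv0, hxh₁0, hxh₂0, hy0, hw0, hwb0]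
    | succ k ih =>
      obtain ⟨i1, i2, i3, i4, i5, i6, i7, i8, i9, i10, i11, i12, i13, i14⟩ := ih
      have hT0 : (0:ℝ) ≤ q ^ k := pow_nonneg hq0.le k
      have hT1 : q ^ k ≤ 1 := pow_le_one₀ hq0.le hq1.le
      have hm0 : (0:ℝ) ≤ (1 - η * α) ^ k := pow_nonneg hra0.le k
      have hm1 : (1 - η * α) ^ k ≤ 1 := pow_le_one₀ hra0.le hra1.le
      have hn0 : (0:ℝ) ≤ (1 - η * β) ^ k := pow_nonneg hrb0.le k
      have hn1 : (1 - η * β) ^ k ≤ 1 := pow_le_one₀ hrb0.le hrb1.le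
      have hTm1 : q ^ k * (1 - η * α) ^ k ≤ 1 := by
        nlinarith only [hT0, hT1, hm0, hm1]
      have hTn1 : q ^ k * (1 - η * β) ^ k ≤ 1 := by
        nlinarith only [hT0, hT1, hn0, hn1]
      have hqηb : 0 < q * η * b := by positivity
      have hW0 : 0 ≤ w k := by
        nlinarith only [i6, hqra0, hqηb, hTm1]
      have hWb0 : 0 ≤ wb k := by
        nlinarith only [i7, hqrb0, hqηb, hTn1]
      have hWbub : (1 - q * (1 - η * β)) * wb k ≤ q * η * b := by
        rw [i7]
        have h := mul_nonneg hqηb.le (mul_nonneg hT0 hn0)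
        nlinarith only [h, hqηb, mul_nonneg hT0 hn0]
      have hA2 : 0 ≤ xh₂ k := le_trans hW0 i10
      have hGub := hgub (x k) i1
      have hGlb := hglb (x k) i1
      have hH2ub := hgub (xh₂ k) hA2
      have hH1lb := hglb (xh₁ k) i11
      have hH1ub := hgub (xh₁ k) i11
      have eU : α * u k - b = -(b * (1 - η * α) ^ k) := by linarith [i4]
      have eV : β * v k - b = -(b * (1 - η * β) ^ k) := by linarith [i5]
      refine ⟨?_, ?_, ?_, ?_, ?_, ?_, ?_, ?_, ?_, ?_, ?_, ?_, ?_, ?_⟩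
      · -- 0 ≤ x (k+1)
        rw [hx k]
        have p1 := mul_le_mul_of_nonneg_left hGub hη.le
        have p2 := mul_nonneg hrb0.le i1
        have p3 := mul_pos hη hb0
        nlinarith only [p1, p2, p3]
      · -- v ≤ x
        rw [hx k, hv k]
        have p1 := mul_le_mul_of_nonneg_left hGub hη.le
        have p2 := mul_nonneg hrb0.le (sub_nonneg.mpr i2)
        nlinarith only [p1, p2]
      · -- x ≤ u
        rw [hx k, hu k]
        have p1 := mul_le_mul_of_nonneg_left hGlb hη.le
        have p2 := mul_nonneg hra0.le (sub_nonneg.mpr i3)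
        nlinarith only [p1, p2]
      · -- closed form for u
        rw [hu k]
        linear_combination (1 - η * α) * i4
      · -- closed form for v
        rw [hv k]
        linear_combination (1 - η * β) * i5
      · -- closed form for w
        rw [hwstep k]
        linear_combination i6 - (1 - q * (1 - η * α)) * q * η * q ^ k * i4
      · -- closed form for wb
        rw [hwbstep k]
        linear_combination i7 - (1 - q * (1 - η * β)) * q * η * q ^ k * i5
      · -- averaged gap invariant (α side)
        rw [hwstep k, hystep k, hu k, hx k]
        simp only [pow_succ]
        have p1 : 0 ≤ (q ^ k - q ^ k * q) * (u k - x k) :=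
          mul_nonneg (by nlinarith only [hT0, hq1]) (sub_nonneg.mpr i3)
        nlinarith only [i8, p1]
      · -- averaged gap invariant (β side)
        rw [hwbstep k, hystep k, hv k, hx k]
        simp only [pow_succ]
        have p1 : 0 ≤ (q ^ k - q ^ k * q) * (x k - v k) :=
          mul_nonneg (by nlinarith only [hT0, hq1]) (sub_nonneg.mpr i2)
        nlinarith only [i9, p1]
      · -- w ≤ xh₂
        rw [hwstep k, hxh₂' k, eU]
        have p1 : q * η * deriv f (xh₂ k) ≤ q * η * (β * xh₂ k - b) :=
          mul_le_mul_of_nonneg_left hH2ub (by positivity)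
        have p2 : q * (1 - η * α) * w k ≤ q * (1 - η * α) * xh₂ k :=
          mul_le_mul_of_nonneg_left i10 (by positivity)
        nlinarith only [p1, p2, i6]
      · -- 0 ≤ xh₁
        rw [hxh₁' k]
        have p3 : q * η * deriv f (xh₁ k) ≤ q * η * (β * xh₁ k - b) :=
          mul_le_mul_of_nonneg_left hH1ub (by positivity)
        have p4 : (1 - q * (1 - η * β)) * xh₁ k ≤ q * η * b :=
          le_trans (mul_le_mul_of_nonneg_left i12 hqrb0.le) hWbub
        have p5 : q * η * (β - α) * xh₁ k ≤ (1 - q * (1 - η * β)) * xh₁ k := by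
          apply mul_le_mul_of_nonneg_right _ i11
          have h := mul_pos hη hβ
          nlinarith only [hkey2, hq0, h, hqrb0]
        have p6 : 0 ≤ q * (1 - η * β) * xh₁ k :=
          mul_nonneg (by positivity) i11
        nlinarith only [p3, p4, p5, p6]
      · -- xh₁ ≤ wb
        rw [hxh₁' k, hwbstep k, eV]
        have p7 : q * η * (α * xh₁ k - b) ≤ q * η * deriv f (xh₁ k) :=
          mul_le_mul_of_nonneg_left hH1lb (by positivity)
        have p8 : q * (1 - η * β) * xh₁ k ≤ q * (1 - η * β) * wb k :=
          mul_le_mul_of_nonneg_left i12 (by positivity)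
        nlinarith only [p7, p8, i7]
      · -- sandwich invariant, upper (Z2)
        rw [hystep k, hwstep k, hxh₂' k, hx k, hu k]
        have m1 : 0 ≤ q * (1 - η * α) *
            ((1 - q ^ (k + 1)) * xh₂ k + q ^ (k + 1) * (w k + x k - u k) - y k) :=
          mul_nonneg (by positivity) i13
        have m2 : 0 ≤ q * (1 - η * α) * q ^ (k + 1) * (1 - q) * (xh₂ k - w k) :=
          mul_nonneg (mul_nonneg (by positivity) (by linarith)) (by linarith)
        have m3 : 0 ≤ (1 - q * (1 - η * α)) * ((w k - y k) - q ^ k * (u k - x k)) :=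
          mul_nonneg hqra0.le (by linarith)
        have m4 : 0 ≤ q ^ k * (1 - q) * (u k - x k) :=
          mul_nonneg (mul_nonneg hT0 (by linarith)) (by linarith)
        have m5 : 0 ≤ q * η * q ^ k * (1 - q) * (deriv f (x k) - (α * x k - b)) :=
          mul_nonneg (mul_nonneg (by positivity) (by linarith)) (by linarith)
        have hqk2 : q * q ^ (k + 1) ≤ 1 := by
          calc q * q ^ (k + 1) = q ^ (k + 2) := by ring
          _ ≤ 1 := pow_le_one₀ hq0.le hq1.le
        have m6 : 0 ≤ (1 - q * q ^ (k + 1)) * (q * η) *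
            ((β * xh₂ k - b) - deriv f (xh₂ k)) :=
          mul_nonneg (mul_nonneg (by linarith) (by positivity)) (by linarith)
        have z1 : q * η * (q ^ k - (q ^ (k + 1)) ^ 2) *
            (α * u k - b * (1 - (1 - η * α) ^ k)) = 0 := by
          rw [show α * u k - b * (1 - (1 - η * α) ^ k) = 0 by linarith [i4]]; ring
        have z2 : (1 - q * q ^ (k + 1)) *
            ((1 - q * (1 - η * α)) * w k - q * η * b * (1 - q ^ k * (1 - η * α) ^ k)) = 0 := by
          rw [show (1 - q * (1 - η * α)) * w k - q * η * b * (1 - q ^ k * (1 - η * α) ^ k) = 0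
            by linarith [i6]]; ring
        simp only [pow_succ] at m1 m2 m6 z1 z2 hqk2 ⊢
        nlinarith only [m1, m2, m3, m4, m5, m6, z1, z2]
      · -- sandwich invariant, lower (Z1)
        rw [hystep k, hwbstep k, hxh₁' k, hx k, hv k]
        have m1 : 0 ≤ q * (1 - η * β) *
            (y k - (1 - q ^ (k + 1)) * xh₁ k - q ^ (k + 1) * (wb k + x k - v k)) :=
          mul_nonneg (by positivity) i14
        have m2 : 0 ≤ q * (1 - η * β) * q ^ (k + 1) * (1 - q) * (wb k - xh₁ k) :=
          mul_nonneg (mul_nonneg (by positivity) (by linarith)) (by linarith)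
        have m3 : 0 ≤ (1 - q * (1 - η * β)) * ((y k - wb k) - q ^ k * (x k - v k)) :=
          mul_nonneg hqrb0.le (by linarith)
        have m4 : 0 ≤ q ^ k * (1 - q) * (x k - v k) :=
          mul_nonneg (mul_nonneg hT0 (by linarith)) (by linarith)
        have m5 : 0 ≤ q * η * q ^ k * (1 - q) * ((β * x k - b) - deriv f (x k)) :=
          mul_nonneg (mul_nonneg (by positivity) (by linarith)) (by linarith)
        have hqk2 : q * q ^ (k + 1) ≤ 1 := by
          calc q * q ^ (k + 1) = q ^ (k + 2) := by ring
          _ ≤ 1 := pow_le_one₀ hq0.le hq1.le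
        have m6 : 0 ≤ (1 - q * q ^ (k + 1)) * (q * η) *
            (deriv f (xh₁ k) - (α * xh₁ k - b)) :=
          mul_nonneg (mul_nonneg (by linarith) (by positivity)) (by linarith)
        have z1 : q * η * (q ^ k - (q ^ (k + 1)) ^ 2) *
            (β * v k - b * (1 - (1 - η * β) ^ k)) = 0 := by
          rw [show β * v k - b * (1 - (1 - η * β) ^ k) = 0 by linarith [i5]]; ring
        have z2 : (1 - q * q ^ (k + 1)) *
            ((1 - q * (1 - η * β)) * wb k - q * η * b * (1 - q ^ k * (1 - η * β) ^ k)) = 0 := by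
          rw [show (1 - q * (1 - η * β)) * wb k - q * η * b * (1 - q ^ k * (1 - η * β) ^ k) = 0
            by linarith [i7]]; ring
        simp only [pow_succ] at m1 m2 m6 z1 z2 hqk2 ⊢
        nlinarith only [m1, m2, m3, m4, m5, m6, z1, z2]
  -- partial-sum identities
  have hSx : ∀ k, ∑ i ∈ Finset.range (k + 1), p i * x i = y k - q ^ (k + 1) * x k := by
    intro k
    induction k with
    | zero => simp [Finset.sum_range_one, hx0, hy0]
    | succ k ih =>
      rw [Finset.sum_range_succ, ih, hps k, hP (k + 1), hP k, hystep k, hx k]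
      ring
  have hSu : ∀ k, ∑ i ∈ Finset.range (k + 1), p i * u i = w k - q ^ (k + 1) * u k := by
    intro k
    induction k with
    | zero => simp [Finset.sum_range_one, hu0, hw0]
    | succ k ih =>
      rw [Finset.sum_range_succ, ih, hps k, hP (k + 1), hP k, hwstep k, hu k]
      ring
  have hSv : ∀ k, ∑ i ∈ Finset.range (k + 1), p i * v i = wb k - q ^ (k + 1) * v k := by
    intro k
    induction k with
    | zero => simp [Finset.sum_range_one, hv0, hwb0]
    | succ k ih =>
      rw [Finset.sum_range_succ, ih, hps k, hP (k + 1), hP k, hwbstep k, hv k]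
      ring
  -- conclusion
  intro k
  obtain ⟨-, -, -, -, -, -, -, -, -, -, -, -, h13, h14⟩ := main k
  have hD : (0:ℝ) < 1 - q ^ (k + 1) := by
    have h : q ^ (k + 1) < 1 := pow_lt_one₀ hq0.le hq1 (Nat.succ_ne_zero k)
    linarith only [h]
  constructor
  · rw [hxtil k, hvtil k, hSx k, hSv k, hP k, ← sub_nonneg]
    have e : (1 - q ^ (k + 1))⁻¹ * (y k - q ^ (k + 1) * x k) -
        (xh₁ k + (1 - (1 - q ^ (k + 1))) *
          ((1 - q ^ (k + 1))⁻¹ * (wb k - q ^ (k + 1) * v k) - v k)) =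
        (1 - q ^ (k + 1))⁻¹ *
          (y k - (1 - q ^ (k + 1)) * xh₁ k - q ^ (k + 1) * (wb k + x k - v k)) := by
      field_simp
      ring
    rw [e]
    exact mul_nonneg (inv_nonneg.mpr hD.le) h14
  · rw [hxtil k, hutil k, hSx k, hSu k, hP k, ← sub_nonneg]
    have e : xh₂ k + (1 - (1 - q ^ (k + 1))) *
          ((1 - q ^ (k + 1))⁻¹ * (w k - q ^ (k + 1) * u k) - u k) -
        (1 - q ^ (k + 1))⁻¹ * (y k - q ^ (k + 1) * x k) =
        (1 - q ^ (k + 1))⁻¹ *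
          ((1 - q ^ (k + 1)) * xh₂ k + q ^ (k + 1) * (w k + x k - u k) - y k) := by
      field_simp
      ring
    rw [e]
    exact mul_nonneg (inv_nonneg.mpr hD.le) h13
end
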